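/- arXiv:2209.03595 — 3 statements merged into one kernel-verified Lean document; each statement's English description precedes it below -/
import Mathlib

section
/- Let n ≥ 1, let θ be a bounded measurable function supported in Q = (-1/2,1/2)^n with ∫θ = 1, and let (λ_j)_{j ∈ ℤ^n} be real numbers with ∑_{j ∈ ℤ^n} |λ_j| (1 + ln₊|j|) < ∞. Then g = ∑_{j ∈ ℤ^n} λ_j (χ_{Q_j} − θ) belongs to H^1(ℝ^n); that is, 𝓜_φ g is integrable for every smooth φ supported in the closed unit ball with ∫φ = 1. -/
open MeasureTheory Real Set Metric ENNReal

noncomputable section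

/-- `ℝ^n` with the Euclidean norm. -/
abbrev En (n : ℕ) := EuclideanSpace ℝ (Fin n)

/-- `ln₊ t = max (ln t) 0`. -/
def lnp (t : ℝ) : ℝ := max (Real.log t) 0

/-- The unit cube `Q = (-1/2, 1/2)^n`. -/
def unitQ (n : ℕ) : Set (En n) := {x | ∀ i, -(1/2 : ℝ) < x i ∧ x i < 1/2}

/-- The dilate `φ_t(y) = t^{-n} φ(y/t)` convolved with `f` at `x`:
`(φ_t ∗ f)(x) = ∫ t^{-n} φ((x-y)/t) f(y) dy`. -/
def phiConv (n : ℕ) (φ f : En n → ℝ) (t : ℝ) (x : En n) : ℝ :=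
  ∫ y, (t ^ n)⁻¹ * φ (t⁻¹ • (x - y)) * f y

/-- The maximal function `𝓜_φ f(x) = sup_{t>0} |(φ_t ∗ f)(x)|`. -/
def Mphi (n : ℕ) (φ f : En n → ℝ) (x : En n) : ℝ :=
  ⨆ t : {t : ℝ // 0 < t}, |phiConv n φ f t.1 x|

/-- A smooth function supported in the closed unit ball with integral `1`. -/
def IsTestFun (n : ℕ) (φ : En n → ℝ) : Prop :=
  ContDiff ℝ (⊤ : ℕ∞) φ ∧ (∀ x, x ∉ Metric.closedBall (0 : En n) 1 → φ x = 0) ∧ (∫ x, φ x) = 1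

/-- Membership in the Hardy space `H^1(ℝ^n)`: the maximal function `𝓜_φ f` is
integrable for every admissible `φ`. -/
def MemH1 (n : ℕ) (f : En n → ℝ) : Prop :=
  ∀ φ : En n → ℝ, IsTestFun n φ → Integrable (Mphi n φ f)

/-- The cube `Q_k = k + Q` for `k ∈ ℤ^n`. -/
def Qk (n : ℕ) (k : Fin n → ℤ) : Set (En n) :=
  {x | ∀ i, (k i : ℝ) - 1/2 < x i ∧ x i < (k i : ℝ) + 1/2}

/-- The lattice point `k ∈ ℤ^n` viewed as a point of `ℝ^n`. -/
def zv (n : ℕ) (k : Fin n → ℤ) : En n :=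
  (EuclideanSpace.equiv (Fin n) ℝ).symm (fun i => (k i : ℝ))

/-- `μ_k = ‖f_k‖_{L^1} = ∫_{Q_k} |f|`. -/
def muk (n : ℕ) (f : En n → ℝ) (k : Fin n → ℤ) : ℝ := ∫ x in Qk n k, |f x|

/-- The local Hardy–Littlewood maximal function
`M^loc f(x) = sup_{0<r<1} r^{-n} ∫_{|y-x|<r} |f(y)| dy`. -/
def Mloc (n : ℕ) (f : En n → ℝ) (x : En n) : ℝ :=
  ⨆ r : Set.Ioo (0 : ℝ) 1, ((r : ℝ) ^ n)⁻¹ * ∫ y in Metric.ball x (r : ℝ), |f y|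

namespace H1aux

variable {n : ℕ}

lemma zv_apply (k : Fin n → ℤ) (i : Fin n) : zv n k i = (k i : ℝ) := rfl

lemma norm_le_of_coords {x : En n} {c : ℝ} (hc : 0 ≤ c) (h : ∀ i, |x i| ≤ c) :
    ‖x‖ ≤ Real.sqrt n * c := by
  rw [EuclideanSpace.norm_eq]
  have hsum : ∑ i, ‖x i‖ ^ 2 ≤ ∑ _i : Fin n, c ^ 2 := by
    apply Finset.sum_le_sum; intro i _
    have h2 : ‖x i‖ ≤ c := by rw [Real.norm_eq_abs]; exact h i
    nlinarith [norm_nonneg (x i)]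
  calc √(∑ i, ‖x i‖ ^ 2) ≤ √((n : ℝ) * c ^ 2) := by
        apply Real.sqrt_le_sqrt; simpa using hsum
    _ = √(n : ℝ) * c := by
        rw [Real.sqrt_mul (by positivity), Real.sqrt_sq hc]

lemma mem_Qk_norm_le {k : Fin n → ℤ} {x : En n} (hx : x ∈ Qk n k) :
    ‖x - zv n k‖ ≤ Real.sqrt n := by
  have := norm_le_of_coords (x := x - zv n k) (c := 1) zero_le_one ?_
  · simpa using this
  · intro i
    have h1 := (hx i).1
    have h2 := (hx i).2
    have : (x - zv n k) i = x i - (k i : ℝ) := rfl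
    rw [this, abs_le]
    constructor <;> linarith

lemma unitQ_eq : unitQ n = Qk n (fun _ => 0) := by
  ext x; constructor <;> intro h i <;> have := h i <;> constructor <;>
    simp at this ⊢ <;> linarith [this.1, this.2]

lemma zv_zero : zv n (fun _ => 0) = 0 := by
  ext i; simp [zv_apply]

lemma mem_unitQ_norm_le {x : En n} (hx : x ∈ unitQ n) : ‖x‖ ≤ Real.sqrt n := by
  rw [unitQ_eq] at hx
  have := mem_Qk_norm_le hx
  rwa [zv_zero, sub_zero] at this

lemma measurableSet_Qk (k : Fin n → ℤ) : MeasurableSet (Qk n k) := by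
  have : Qk n k = ⋂ i, (fun x : En n => x i) ⁻¹'
      (Ioo ((k i : ℝ) - 1/2) ((k i : ℝ) + 1/2)) := by
    ext x; simp [Qk, Set.mem_iInter, Set.mem_preimage, Set.mem_Ioo]
  rw [this]
  exact MeasurableSet.iInter fun i =>
    ((EuclideanSpace.proj i : En n →L[ℝ] ℝ).continuous.measurable) measurableSet_Ioo

lemma measurableSet_unitQ : MeasurableSet (unitQ n) := by
  rw [unitQ_eq]; exact measurableSet_Qk _

lemma volume_Qk (k : Fin n → ℤ) : volume (Qk n k) = 1 := by
  have hpre : Qk n k = (MeasurableEquiv.toLp 2 (Fin n → ℝ)).symm ⁻¹'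
      (Set.univ.pi fun i => Ioo ((k i : ℝ) - 1/2) ((k i : ℝ) + 1/2)) := by
    ext x
    simp only [Set.mem_preimage, Set.mem_pi, Set.mem_univ, forall_true_left, Set.mem_Ioo]
    rfl
  rw [hpre, (EuclideanSpace.volume_preserving_symm_measurableEquiv_toLp (Fin n)).measure_preimage
    ((MeasurableSet.univ_pi fun i => measurableSet_Ioo).nullMeasurableSet)]
  rw [volume_pi_pi]
  simp [Real.volume_Ioo]
  norm_num


section Kern
variable {φ : En n → ℝ}


lemma norm_smul_inv (t : ℝ) (ht : 0 < t) (u : En n) : ‖t⁻¹ • u‖ = t⁻¹ * ‖u‖ := by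
  rw [norm_smul, Real.norm_eq_abs, abs_of_pos (inv_pos.2 ht)]

lemma kern_cont (hφc : Continuous φ) (t : ℝ) (x : En n) :
    Continuous (fun y : En n => (t ^ n)⁻¹ * φ (t⁻¹ • (x - y))) :=
  continuous_const.mul (hφc.comp (by fun_prop : Continuous fun y : En n => t⁻¹ • (x - y)))

lemma kern_zero (hφs : ∀ u, u ∉ closedBall (0 : En n) 1 → φ u = 0)
    {t : ℝ} (ht : 0 < t) {x y : En n} (hy : t < dist x y) :
    φ (t⁻¹ • (x - y)) = 0 := by
  apply hφs
  intro hmem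
  rw [mem_closedBall_zero_iff, norm_smul_inv t ht] at hmem
  rw [dist_eq_norm] at hy
  have : ‖x - y‖ ≤ t := by
    have h1 : t⁻¹ * ‖x - y‖ ≤ 1 := hmem
    calc ‖x - y‖ = t * (t⁻¹ * ‖x - y‖) := by field_simp
    _ ≤ t * 1 := by nlinarith
    _ = t := mul_one t
  linarith

lemma kern_hcs (hφs : ∀ u, u ∉ closedBall (0 : En n) 1 → φ u = 0)
    {t : ℝ} (ht : 0 < t) (x : En n) :
    HasCompactSupport (fun y : En n => (t ^ n)⁻¹ * φ (t⁻¹ • (x - y))) := by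
  apply HasCompactSupport.intro (isCompact_closedBall x t)
  intro y hy
  rw [mem_closedBall, dist_comm] at hy
  push_neg at hy
  rw [kern_zero hφs ht hy, mul_zero]

lemma kern_integrable (hφc : Continuous φ) (hφs : ∀ u, u ∉ closedBall (0 : En n) 1 → φ u = 0)
    {t : ℝ} (ht : 0 < t) (x : En n) :
    Integrable (fun y : En n => (t ^ n)⁻¹ * φ (t⁻¹ • (x - y))) :=
  (kern_cont hφc t x).integrable_of_hasCompactSupport (kern_hcs hφs ht x)

lemma kern_abs_integral (hφc : Continuous φ) {t : ℝ} (ht : 0 < t) (x : En n) :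
    ∫ y, (t ^ n)⁻¹ * |φ (t⁻¹ • (x - y))| = ∫ u, |φ u| := by
  have h1 : (fun y : En n => (t ^ n)⁻¹ * |φ (t⁻¹ • (x - y))|)
      = fun y => (fun u => (t ^ n)⁻¹ * |φ (t⁻¹ • u)|) (x - y) := rfl
  rw [h1, integral_sub_left_eq_self (fun u : En n => (t ^ n)⁻¹ * |φ (t⁻¹ • u)|) volume x,
    integral_const_mul,
    MeasureTheory.Measure.integral_comp_inv_smul volume (fun u : En n => |φ u|) t,
    finrank_euclideanSpace_fin, smul_eq_mul,
    abs_of_nonneg (by positivity : (0:ℝ) ≤ t ^ n)]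
  have htn : (t : ℝ) ^ n ≠ 0 := by positivity
  field_simp

lemma kern_abs_integrable (hφc : Continuous φ) (hφs : ∀ u, u ∉ closedBall (0 : En n) 1 → φ u = 0)
    {t : ℝ} (ht : 0 < t) (x : En n) :
    Integrable (fun y : En n => (t ^ n)⁻¹ * |φ (t⁻¹ • (x - y))|) := by
  have := (kern_integrable hφc hφs ht x).abs
  apply this.congr
  filter_upwards with y
  rw [abs_mul, abs_of_nonneg (by positivity : (0:ℝ) ≤ (t ^ n)⁻¹)]

/-- Uniform bound: `|φ_t ∗ f (x)| ≤ ‖f‖_∞ ∫|φ|`. -/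
lemma phiConv_le_unif (hφc : Continuous φ) (hφs : ∀ u, u ∉ closedBall (0 : En n) 1 → φ u = 0)
    {f : En n → ℝ} {B t : ℝ} (ht : 0 < t) (hB : ∀ y, |f y| ≤ B) (x : En n) :
    |phiConv n φ f t x| ≤ B * ∫ u, |φ u| := by
  have hB0 : 0 ≤ B := le_trans (abs_nonneg _) (hB 0)
  have hint : Integrable (fun y : En n => B * ((t ^ n)⁻¹ * |φ (t⁻¹ • (x - y))|)) :=
    (kern_abs_integrable hφc hφs ht x).const_mul B
  have := norm_integral_le_of_norm_le hint (f := fun y : En n => (t ^ n)⁻¹ * φ (t⁻¹ • (x - y)) * f y) ?_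
  · rw [Real.norm_eq_abs] at this
    calc |phiConv n φ f t x| ≤ ∫ y, B * ((t ^ n)⁻¹ * |φ (t⁻¹ • (x - y))|) := this
    _ = B * ∫ u, |φ u| := by rw [integral_const_mul, kern_abs_integral hφc ht x]
  · filter_upwards with y
    rw [Real.norm_eq_abs, abs_mul, abs_mul, abs_of_nonneg (by positivity : (0:ℝ) ≤ (t ^ n)⁻¹)]
    have := hB y
    have h0 : (0:ℝ) ≤ (t ^ n)⁻¹ * |φ (t⁻¹ • (x - y))| := by positivity
    calc (t ^ n)⁻¹ * |φ (t⁻¹ • (x - y))| * |f y| ≤ (t ^ n)⁻¹ * |φ (t⁻¹ • (x - y))| * B := by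
          exact mul_le_mul_of_nonneg_left this h0
    _ = B * ((t ^ n)⁻¹ * |φ (t⁻¹ • (x - y))|) := by ring

/-- L¹ bound: `|φ_t ∗ f (x)| ≤ t^{-n} A ∫|f|`. -/
lemma phiConv_le_L1 {f : En n → ℝ} (hf : Integrable f) {A t : ℝ}
    (hA : ∀ u, |φ u| ≤ A) (ht : 0 < t) (x : En n) :
    |phiConv n φ f t x| ≤ (t ^ n)⁻¹ * A * ∫ y, |f y| := by
  have hint : Integrable (fun y : En n => (t ^ n)⁻¹ * A * |f y|) := hf.abs.const_mul _
  have := norm_integral_le_of_norm_le hint (f := fun y : En n => (t ^ n)⁻¹ * φ (t⁻¹ • (x - y)) * f y) ?_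
  · rw [Real.norm_eq_abs] at this
    calc |phiConv n φ f t x| ≤ ∫ y, (t ^ n)⁻¹ * A * |f y| := this
    _ = (t ^ n)⁻¹ * A * ∫ y, |f y| := integral_const_mul _ _
  · filter_upwards with y
    rw [Real.norm_eq_abs, abs_mul, abs_mul, abs_of_nonneg (by positivity : (0:ℝ) ≤ (t ^ n)⁻¹)]
    have h1 := hA (t⁻¹ • (x - y))
    have h2 : (0:ℝ) ≤ |f y| := abs_nonneg _
    have h3 : (0:ℝ) ≤ (t ^ n)⁻¹ := by positivity
    exact mul_le_mul_of_nonneg_right (mul_le_mul_of_nonneg_left h1 h3) h2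

/-- Vanishing: if `f` is supported in `closedBall c ρ` and `t + ρ < dist x c`
then `φ_t ∗ f (x) = 0`. -/
lemma phiConv_eq_zero (hφs : ∀ u, u ∉ closedBall (0 : En n) 1 → φ u = 0)
    {f : En n → ℝ} {c : En n} {ρ : ℝ} (hsupp : ∀ y, y ∉ closedBall c ρ → f y = 0)
    {t : ℝ} (ht : 0 < t) {x : En n} (hx : t + ρ < dist x c) :
    phiConv n φ f t x = 0 := by
  have : (fun y : En n => (t ^ n)⁻¹ * φ (t⁻¹ • (x - y)) * f y) = fun _ => (0:ℝ) := by
    funext y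
    by_cases hy : y ∈ closedBall c ρ
    · have hd : t < dist x y := by
        rw [mem_closedBall] at hy
        have := dist_triangle x y c
        linarith
      rw [kern_zero hφs ht hd, mul_zero, zero_mul]
    · rw [hsupp y hy, mul_zero]
  rw [phiConv, this, integral_zero]

/-- Cancellation: mean-zero `f` supported in `closedBall 0 ρ` gives an extra `t⁻¹ ρ`. -/
lemma phiConv_cancel (hφc : Continuous φ) (hφs : ∀ u, u ∉ closedBall (0 : En n) 1 → φ u = 0)
    {L : NNReal} (hL : LipschitzWith L φ)
    {f : En n → ℝ} (hf : Integrable f) (hf0 : (∫ y, f y) = 0)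
    {ρ : ℝ} (hsupp : ∀ y, y ∉ closedBall (0 : En n) ρ → f y = 0)
    {t : ℝ} (ht : 0 < t) (x : En n) :
    |phiConv n φ f t x| ≤ (t ^ n)⁻¹ * t⁻¹ * ((L : ℝ) * ρ) * ∫ y, |f y| := by
  obtain ⟨A, hA⟩ : ∃ A, ∀ u, |φ u| ≤ A := by
    obtain ⟨A, hA⟩ := (HasCompactSupport.intro (isCompact_closedBall (0:En n) 1) hφs).exists_bound_of_continuous hφc
    exact ⟨A, fun u => by simpa [Real.norm_eq_abs] using hA u⟩
  have hint1 : Integrable (fun y : En n => (t ^ n)⁻¹ * φ (t⁻¹ • (x - y)) * f y) := by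
    apply Integrable.bdd_mul (c := (t ^ n)⁻¹ * A) hf
      ((kern_cont hφc t x).aestronglyMeasurable)
    filter_upwards with y
    rw [Real.norm_eq_abs, abs_mul, abs_of_nonneg (by positivity : (0:ℝ) ≤ (t ^ n)⁻¹)]
    have := hA (t⁻¹ • (x - y))
    have h3 : (0:ℝ) ≤ (t ^ n)⁻¹ := by positivity
    exact mul_le_mul_of_nonneg_left this h3
  have hint2 : Integrable (fun y : En n => (t ^ n)⁻¹ * φ (t⁻¹ • x) * f y) :=
    hf.const_mul _
  have key : phiConv n φ f t x
      = ∫ y, ((t ^ n)⁻¹ * φ (t⁻¹ • (x - y)) - (t ^ n)⁻¹ * φ (t⁻¹ • x)) * f y := by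
    rw [phiConv]
    have : (fun y : En n => ((t ^ n)⁻¹ * φ (t⁻¹ • (x - y)) - (t ^ n)⁻¹ * φ (t⁻¹ • x)) * f y)
        = fun y => (t ^ n)⁻¹ * φ (t⁻¹ • (x - y)) * f y - (t ^ n)⁻¹ * φ (t⁻¹ • x) * f y := by
      funext y; ring
    rw [this, integral_sub hint1 hint2]
    have : ∫ y, (t ^ n)⁻¹ * φ (t⁻¹ • x) * f y = ((t ^ n)⁻¹ * φ (t⁻¹ • x)) * ∫ y, f y :=
      integral_const_mul _ _
    rw [this, hf0, mul_zero, sub_zero]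
  rw [key]
  have hint3 : Integrable (fun y : En n => (t ^ n)⁻¹ * t⁻¹ * ((L : ℝ) * ρ) * |f y|) :=
    hf.abs.const_mul _
  have := norm_integral_le_of_norm_le hint3
    (f := fun y : En n => ((t ^ n)⁻¹ * φ (t⁻¹ • (x - y)) - (t ^ n)⁻¹ * φ (t⁻¹ • x)) * f y) ?_
  · rw [Real.norm_eq_abs] at this
    calc _ ≤ ∫ y, (t ^ n)⁻¹ * t⁻¹ * ((L : ℝ) * ρ) * |f y| := this
    _ = _ := integral_const_mul _ _
  · filter_upwards with y
    rw [Real.norm_eq_abs, abs_mul]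
    by_cases hy : y ∈ closedBall (0 : En n) ρ
    · have h1 : |(t ^ n)⁻¹ * φ (t⁻¹ • (x - y)) - (t ^ n)⁻¹ * φ (t⁻¹ • x)|
          ≤ (t ^ n)⁻¹ * ((L : ℝ) * (t⁻¹ * ‖y‖)) := by
        rw [← mul_sub, abs_mul, abs_of_nonneg (by positivity : (0:ℝ) ≤ (t ^ n)⁻¹)]
        apply mul_le_mul_of_nonneg_left _ (by positivity : (0:ℝ) ≤ (t ^ n)⁻¹)
        have := hL.dist_le_mul (t⁻¹ • (x - y)) (t⁻¹ • x)
        rw [Real.dist_eq] at this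
        calc |φ (t⁻¹ • (x - y)) - φ (t⁻¹ • x)| ≤ (L : ℝ) * dist (t⁻¹ • (x - y)) (t⁻¹ • x) := this
        _ = (L : ℝ) * (t⁻¹ * ‖y‖) := by
            rw [dist_eq_norm, ← smul_sub]
            rw [norm_smul_inv t ht]
            congr 2
            simp [sub_sub_cancel_left]
      have h2 : ‖y‖ ≤ ρ := by rwa [mem_closedBall, dist_zero_right] at hy
      calc |(t ^ n)⁻¹ * φ (t⁻¹ • (x - y)) - (t ^ n)⁻¹ * φ (t⁻¹ • x)| * |f y|
          ≤ ((t ^ n)⁻¹ * ((L : ℝ) * (t⁻¹ * ‖y‖))) * |f y| :=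
            mul_le_mul_of_nonneg_right h1 (abs_nonneg _)
      _ ≤ (t ^ n)⁻¹ * t⁻¹ * ((L : ℝ) * ρ) * |f y| := by
          have h3 : (0:ℝ) ≤ (t ^ n)⁻¹ := by positivity
          have h4 : (0:ℝ) ≤ t⁻¹ := by positivity
          have h5 : (0:ℝ) ≤ (L : ℝ) := L.2
          have e1 : (L : ℝ) * ‖y‖ ≤ (L : ℝ) * ρ := mul_le_mul_of_nonneg_left h2 h5
          calc (t ^ n)⁻¹ * ((L : ℝ) * (t⁻¹ * ‖y‖)) * |f y|
              = ((t ^ n)⁻¹ * t⁻¹ * ((L : ℝ) * ‖y‖)) * |f y| := by ring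
          _ ≤ ((t ^ n)⁻¹ * t⁻¹ * ((L : ℝ) * ρ)) * |f y| := by
              apply mul_le_mul_of_nonneg_right _ (abs_nonneg _)
              exact mul_le_mul_of_nonneg_left e1 (by positivity)
    · rw [hsupp y hy, abs_zero, mul_zero, mul_zero]

end Kern

section Atoms

def rad (n : ℕ) (j : Fin n → ℤ) : ℝ := ‖zv n j‖ + Real.sqrt n

def bAtom (n : ℕ) (θ : En n → ℝ) (j : Fin n → ℤ) : En n → ℝ :=
  fun y => (Qk n j).indicator (1 : En n → ℝ) y - θ y

def farP (n : ℕ) (j : Fin n → ℤ) : En n → ℝ :=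
  Set.indicator {x : En n | 2 * rad n j ≤ ‖x‖} (fun x => rad n j * (‖x‖ ^ (n+1))⁻¹)

def ballP (n : ℕ) (c : En n) : En n → ℝ :=
  Set.indicator (Metric.closedBall c (2 * Real.sqrt n)) (fun _ => (1:ℝ))

def midP (n : ℕ) (j : Fin n → ℤ) (c : En n) : En n → ℝ :=
  Set.indicator {x : En n | 2 * Real.sqrt n < ‖x - c‖ ∧ ‖x - c‖ ≤ 3 * rad n j}
    (fun x => (‖x - c‖ ^ n)⁻¹)

def MMaj (n : ℕ) (C0 : ℝ) (j : Fin n → ℤ) : En n → ℝ := fun x =>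
  C0 * (farP n j x + ballP n (zv n j) x + ballP n (0 : En n) x
    + midP n j (zv n j) x + midP n j (0 : En n) x)

variable {n : ℕ}

lemma sqrt_n_ge_one (hn : 1 ≤ n) : (1:ℝ) ≤ Real.sqrt n := by
  rw [show (1:ℝ) = Real.sqrt 1 by simp]
  exact Real.sqrt_le_sqrt (by exact_mod_cast hn)

lemma rad_ge_sqrt (j : Fin n → ℤ) : Real.sqrt n ≤ rad n j := by
  unfold rad; linarith [norm_nonneg (zv n j)]

lemma rad_ge_one (hn : 1 ≤ n) (j : Fin n → ℤ) : (1:ℝ) ≤ rad n j :=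
  le_trans (sqrt_n_ge_one hn) (rad_ge_sqrt j)

lemma rad_pos (hn : 1 ≤ n) (j : Fin n → ℤ) : (0:ℝ) < rad n j :=
  lt_of_lt_of_le one_pos (rad_ge_one hn j)

lemma farP_nonneg (hn : 1 ≤ n) (j : Fin n → ℤ) (x : En n) : 0 ≤ farP n j x := by
  apply Set.indicator_nonneg; intro y _
  have := (rad_pos hn j).le
  positivity

lemma ballP_nonneg (c : En n) (x : En n) : 0 ≤ ballP n c x := by
  apply Set.indicator_nonneg; intro y _; norm_num

lemma midP_nonneg (j : Fin n → ℤ) (c x : En n) : 0 ≤ midP n j c x := by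
  apply Set.indicator_nonneg; intro y _; positivity

lemma farP_le_one (hn : 1 ≤ n) (j : Fin n → ℤ) (x : En n) : farP n j x ≤ 1 := by
  unfold farP
  apply Set.indicator_apply_le'
  · intro h
    have hrad := rad_ge_one hn j
    have hx1 : (1:ℝ) ≤ ‖x‖ := by
      simp only [Set.mem_setOf_eq] at h; linarith
    have hpow : ‖x‖ ≤ ‖x‖ ^ (n+1) := by
      calc ‖x‖ = ‖x‖ ^ 1 := (pow_one _).symm
      _ ≤ ‖x‖ ^ (n+1) := pow_le_pow_right₀ hx1 (by omega)
    have h2 : 2 * rad n j ≤ ‖x‖ ^ (n+1) := le_trans h hpow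
    have hinv : (‖x‖ ^ (n+1))⁻¹ ≤ (2 * rad n j)⁻¹ := by
      apply inv_anti₀ (by linarith [rad_pos hn j]) h2
    have hrpos := rad_pos hn j
    calc rad n j * (‖x‖ ^ (n+1))⁻¹ ≤ rad n j * (2 * rad n j)⁻¹ :=
          mul_le_mul_of_nonneg_left hinv hrpos.le
    _ = 1/2 := by field_simp
    _ ≤ 1 := by norm_num
  · intro _; norm_num

lemma ballP_le_one (c : En n) (x : En n) : ballP n c x ≤ 1 := by
  unfold ballP
  apply Set.indicator_apply_le' <;> intro _ <;> norm_num

lemma midP_le_one (hn : 1 ≤ n) (j : Fin n → ℤ) (c x : En n) : midP n j c x ≤ 1 := by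
  unfold midP
  apply Set.indicator_apply_le'
  · intro h
    simp only [Set.mem_setOf_eq] at h
    have h1 : (1:ℝ) ≤ ‖x - c‖ := by
      have := sqrt_n_ge_one hn; linarith [h.1]
    have h2 : (1:ℝ) ≤ ‖x - c‖ ^ n := one_le_pow₀ h1
    calc (‖x - c‖ ^ n)⁻¹ ≤ (1:ℝ)⁻¹ := inv_anti₀ one_pos h2
    _ = 1 := inv_one
  · intro _; norm_num

lemma MMaj_nonneg (hn : 1 ≤ n) {C0 : ℝ} (hC0 : 0 ≤ C0) (j : Fin n → ℤ) (x : En n) :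
    0 ≤ MMaj n C0 j x := by
  unfold MMaj
  have := farP_nonneg hn j x
  have := ballP_nonneg (n := n) (zv n j) x
  have := ballP_nonneg (n := n) (0 : En n) x
  have := midP_nonneg j (zv n j) x
  have := midP_nonneg j (0 : En n) x
  positivity

lemma MMaj_le (hn : 1 ≤ n) {C0 : ℝ} (hC0 : 0 ≤ C0) (j : Fin n → ℤ) (x : En n) :
    MMaj n C0 j x ≤ C0 * 5 := by
  unfold MMaj
  have h1 := farP_le_one hn j x
  have h2 := ballP_le_one (n := n) (zv n j) x
  have h3 := ballP_le_one (n := n) (0 : En n) x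
  have h4 := midP_le_one hn j (zv n j) x
  have h5 := midP_le_one hn j (0 : En n) x
  nlinarith

lemma measurable_farP (j : Fin n → ℤ) : Measurable (farP n j) := by
  unfold farP
  apply Measurable.indicator
  · exact (measurable_norm.pow_const _).inv.const_mul _
  · exact measurableSet_le measurable_const measurable_norm

lemma measurable_ballP (c : En n) : Measurable (ballP n c) := by
  unfold ballP
  exact measurable_const.indicator measurableSet_closedBall

lemma measurable_midP (j : Fin n → ℤ) (c : En n) : Measurable (midP n j c) := by
  unfold midP
  apply Measurable.indicator
  · exact ((measurable_id.sub_const c).norm.pow_const _).inv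
  · apply MeasurableSet.inter
    · exact measurableSet_lt measurable_const (measurable_id.sub_const c).norm
    · exact measurableSet_le (measurable_id.sub_const c).norm measurable_const

lemma measurable_MMaj (C0 : ℝ) (j : Fin n → ℤ) : Measurable (MMaj n C0 j) := by
  unfold MMaj
  exact (((((measurable_farP j).add (measurable_ballP _)).add (measurable_ballP _)).add
    (measurable_midP j _)).add (measurable_midP j _)).const_mul C0

end Atoms

section Theta
variable {n : ℕ} {θ : En n → ℝ} {Cθ : ℝ}

lemma Cθ_nonneg (hθCb : ∀ x, |θ x| ≤ Cθ) : 0 ≤ Cθ :=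
  le_trans (abs_nonneg _) (hθCb 0)

lemma theta_integrable (hθmeas : Measurable θ) (hθCb : ∀ x, |θ x| ≤ Cθ)
    (hθsupp : ∀ x, x ∉ unitQ n → θ x = 0) : Integrable θ := by
  have heq : (unitQ n).indicator θ = θ := by
    funext x
    by_cases hx : x ∈ unitQ n
    · rw [Set.indicator_of_mem hx]
    · rw [Set.indicator_of_notMem hx, hθsupp x hx]
  rw [← heq]
  rw [integrable_indicator_iff measurableSet_unitQ]
  have hvol : volume (unitQ n) = 1 := by
    rw [unitQ_eq]; exact volume_Qk _
  apply Integrable.mono' (g := fun _ => Cθ)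
  · exact integrableOn_const (by rw [hvol]; exact one_ne_top)
  · exact hθmeas.aestronglyMeasurable.restrict
  · filter_upwards with y; rw [Real.norm_eq_abs]; exact hθCb y

lemma theta_abs_integral_le (hθmeas : Measurable θ) (hθCb : ∀ x, |θ x| ≤ Cθ)
    (hθsupp : ∀ x, x ∉ unitQ n → θ x = 0) : (∫ y, |θ y|) ≤ Cθ := by
  have hvol : volume (unitQ n) = 1 := by rw [unitQ_eq]; exact volume_Qk _
  have hle : ∀ y, |θ y| ≤ (unitQ n).indicator (fun _ => Cθ) y := by
    intro y
    by_cases hy : y ∈ unitQ n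
    · rw [Set.indicator_of_mem hy]; exact hθCb y
    · rw [Set.indicator_of_notMem hy, hθsupp y hy]; simp
  have hint2 : Integrable ((unitQ n).indicator (fun _ => Cθ) : En n → ℝ) := by
    rw [integrable_indicator_iff measurableSet_unitQ]
    exact integrableOn_const (by rw [hvol]; exact one_ne_top)
  calc (∫ y, |θ y|) ≤ ∫ y, (unitQ n).indicator (fun _ => Cθ) y :=
        integral_mono (theta_integrable hθmeas hθCb hθsupp).abs hint2 hle
  _ = Cθ := by
      rw [integral_indicator measurableSet_unitQ, setIntegral_const, measureReal_def, hvol]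
      simp

lemma indicator_Qk_integrable (j : Fin n → ℤ) :
    Integrable ((Qk n j).indicator (1 : En n → ℝ)) := by
  rw [integrable_indicator_iff (measurableSet_Qk j)]
  exact integrableOn_const (by rw [volume_Qk]; exact one_ne_top)

lemma indicator_Qk_integral (j : Fin n → ℤ) :
    (∫ y, (Qk n j).indicator (1 : En n → ℝ) y) = 1 := by
  rw [integral_indicator_one (measurableSet_Qk j), measureReal_def, volume_Qk]; simp

lemma indicator_Qk_abs_integral (j : Fin n → ℤ) :
    (∫ y, |(Qk n j).indicator (1 : En n → ℝ) y|) = 1 := by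
  have : (fun y => |(Qk n j).indicator (1 : En n → ℝ) y|)
      = (Qk n j).indicator (1 : En n → ℝ) := by
    funext y
    rw [abs_of_nonneg]
    exact Set.indicator_nonneg (fun _ _ => zero_le_one) y
  rw [this, indicator_Qk_integral]

lemma bAtom_integrable (hθmeas : Measurable θ) (hθCb : ∀ x, |θ x| ≤ Cθ)
    (hθsupp : ∀ x, x ∉ unitQ n → θ x = 0) (j : Fin n → ℤ) :
    Integrable (bAtom n θ j) :=
  (indicator_Qk_integrable j).sub (theta_integrable hθmeas hθCb hθsupp)

lemma bAtom_integral_zero (hθmeas : Measurable θ) (hθCb : ∀ x, |θ x| ≤ Cθ)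
    (hθsupp : ∀ x, x ∉ unitQ n → θ x = 0) (hθint : (∫ x, θ x) = 1) (j : Fin n → ℤ) :
    (∫ y, bAtom n θ j y) = 0 := by
  unfold bAtom
  rw [integral_sub (indicator_Qk_integrable j) (theta_integrable hθmeas hθCb hθsupp),
    indicator_Qk_integral, hθint, sub_self]

lemma bAtom_abs_le (hθCb : ∀ x, |θ x| ≤ Cθ) (j : Fin n → ℤ) (y : En n) :
    |bAtom n θ j y| ≤ 1 + Cθ := by
  unfold bAtom
  have h1 : |(Qk n j).indicator (1 : En n → ℝ) y| ≤ 1 := by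
    have hnn : (0:ℝ) ≤ (Qk n j).indicator (1 : En n → ℝ) y :=
      Set.indicator_nonneg (f := (1 : En n → ℝ)) (fun _ _ => zero_le_one) y
    rw [abs_of_nonneg hnn]
    apply Set.indicator_apply_le' <;> intro _ <;> norm_num
  calc |(Qk n j).indicator (1 : En n → ℝ) y - θ y|
      ≤ |(Qk n j).indicator (1 : En n → ℝ) y| + |θ y| := abs_sub _ _
  _ ≤ 1 + Cθ := add_le_add h1 (hθCb y)

lemma bAtom_abs_integral_le (hθmeas : Measurable θ) (hθCb : ∀ x, |θ x| ≤ Cθ)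
    (hθsupp : ∀ x, x ∉ unitQ n → θ x = 0) (j : Fin n → ℤ) :
    (∫ y, |bAtom n θ j y|) ≤ 1 + Cθ := by
  have hint1 := indicator_Qk_integrable (n := n) j
  have hint2 := theta_integrable hθmeas hθCb hθsupp
  calc (∫ y, |bAtom n θ j y|)
      ≤ ∫ y, |(Qk n j).indicator (1 : En n → ℝ) y| + |θ y| := by
        apply integral_mono (bAtom_integrable hθmeas hθCb hθsupp j).abs
          (hint1.abs.add hint2.abs)
        intro y
        exact abs_sub _ _
  _ = (∫ y, |(Qk n j).indicator (1 : En n → ℝ) y|) + ∫ y, |θ y| :=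
        integral_add hint1.abs hint2.abs
  _ ≤ 1 + Cθ := by
      rw [indicator_Qk_abs_integral]
      exact add_le_add le_rfl (theta_abs_integral_le hθmeas hθCb hθsupp)

lemma Qk_subset_ball (j : Fin n → ℤ) : Qk n j ⊆ closedBall (0 : En n) (rad n j) := by
  intro y hy
  have h1 := mem_Qk_norm_le hy
  rw [mem_closedBall, dist_zero_right]
  calc ‖y‖ = ‖y - zv n j + zv n j‖ := by rw [sub_add_cancel]
  _ ≤ ‖y - zv n j‖ + ‖zv n j‖ := norm_add_le _ _
  _ ≤ rad n j := by unfold rad; linarith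

lemma unitQ_subset_ball (j : Fin n → ℤ) : unitQ n ⊆ closedBall (0 : En n) (rad n j) := by
  intro y hy
  rw [mem_closedBall, dist_zero_right]
  have := mem_unitQ_norm_le hy
  have := norm_nonneg (zv n j)
  unfold rad; linarith

lemma bAtom_support (hθsupp : ∀ x, x ∉ unitQ n → θ x = 0) (j : Fin n → ℤ) :
    ∀ y, y ∉ closedBall (0 : En n) (rad n j) → bAtom n θ j y = 0 := by
  intro y hy
  unfold bAtom
  have h1 : y ∉ Qk n j := fun h => hy (Qk_subset_ball j h)
  have h2 : y ∉ unitQ n := fun h => hy (unitQ_subset_ball j h)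
  rw [Set.indicator_of_notMem h1, hθsupp y h2, sub_zero]

lemma bAtom_measurable (hθmeas : Measurable θ) (j : Fin n → ℤ) :
    Measurable (bAtom n θ j) :=
  ((measurable_const.indicator (measurableSet_Qk j)).sub hθmeas)

end Theta

section KeyEstimate

variable {n : ℕ}

lemma kern_mul_integrable {φ : En n → ℝ} (hφc : Continuous φ)
    (hφs : ∀ u, u ∉ closedBall (0 : En n) 1 → φ u = 0)
    {f : En n → ℝ} (hf : Integrable f) {t : ℝ} (ht : 0 < t) (x : En n) :
    Integrable (fun y : En n => (t ^ n)⁻¹ * φ (t⁻¹ • (x - y)) * f y) := by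
  obtain ⟨A, hA⟩ : ∃ A, ∀ u, |φ u| ≤ A := by
    obtain ⟨A, hA⟩ := (HasCompactSupport.intro (isCompact_closedBall (0:En n) 1)
      hφs).exists_bound_of_continuous hφc
    exact ⟨A, fun u => by simpa [Real.norm_eq_abs] using hA u⟩
  apply Integrable.bdd_mul (c := (t ^ n)⁻¹ * A) hf
    ((kern_cont hφc t x).aestronglyMeasurable)
  filter_upwards with y
  rw [Real.norm_eq_abs, abs_mul, abs_of_nonneg (by positivity : (0:ℝ) ≤ (t ^ n)⁻¹)]
  exact mul_le_mul_of_nonneg_left (hA _) (by positivity)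

lemma inv_pow_le_of_half_le {r t : ℝ} (hr : 0 < r) (h : r / 2 ≤ t) (m : ℕ) :
    (t ^ m)⁻¹ ≤ 2 ^ m * (r ^ m)⁻¹ := by
  have h1 : ((r/2) ^ m)⁻¹ = 2 ^ m * (r ^ m)⁻¹ := by
    rw [div_pow]
    rw [inv_div]
    ring
  have h2 : (r/2) ^ m ≤ t ^ m := pow_le_pow_left₀ (by positivity) h m
  calc (t ^ m)⁻¹ ≤ ((r/2) ^ m)⁻¹ := inv_anti₀ (by positivity) h2
  _ = 2 ^ m * (r ^ m)⁻¹ := h1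

lemma piece_estimate (hn : 1 ≤ n) {φ : En n → ℝ} {A : ℝ}
    (hφc : Continuous φ) (hφs : ∀ u, u ∉ closedBall (0 : En n) 1 → φ u = 0)
    (hA : ∀ u, |φ u| ≤ A)
    {f : En n → ℝ} (hf : Integrable f)
    {c : En n} (hsupp : ∀ y, y ∉ closedBall c (Real.sqrt n) → f y = 0)
    {Cf If : ℝ} (hCf : ∀ y, |f y| ≤ Cf) (hIf : (∫ y, |f y|) ≤ If)
    {C0 : ℝ} (hC0a : Cf * (∫ u, |φ u|) ≤ C0) (hC0b : A * 2 ^ n * If ≤ C0)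
    {j : Fin n → ℤ} {x : En n} (hxc : ‖x - c‖ ≤ 3 * rad n j)
    {t : ℝ} (ht : 0 < t) :
    |phiConv n φ f t x| ≤ C0 * (ballP n c x + midP n j c x) := by
  have hCf0 : 0 ≤ Cf := le_trans (abs_nonneg _) (hCf 0)
  have hIφ0 : 0 ≤ ∫ u, |φ u| := integral_nonneg fun u => abs_nonneg _
  have hC00 : 0 ≤ C0 := le_trans (by positivity) hC0a
  have hsq1 : (1:ℝ) ≤ Real.sqrt n := sqrt_n_ge_one hn
  by_cases hb : ‖x - c‖ ≤ 2 * Real.sqrt n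
  · have hball : ballP n c x = 1 := by
      unfold ballP
      rw [Set.indicator_of_mem]
      rw [mem_closedBall, dist_eq_norm]
      exact hb
    have hu := phiConv_le_unif hφc hφs ht hCf x
    have hmid := midP_nonneg j c x
    have : |phiConv n φ f t x| ≤ C0 := le_trans hu hC0a
    rw [hball]
    nlinarith [mul_nonneg hC00 hmid]
  · push_neg at hb
    have hmid : midP n j c x = (‖x - c‖ ^ n)⁻¹ := by
      unfold midP
      rw [Set.indicator_of_mem]
      exact ⟨hb, hxc⟩
    have hbp := ballP_nonneg c x
    have hxpos : 0 < ‖x - c‖ := lt_of_le_of_lt (by positivity : (0:ℝ) ≤ 2 * Real.sqrt n) hb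
    suffices h : |phiConv n φ f t x| ≤ C0 * (‖x - c‖ ^ n)⁻¹ by
      rw [hmid]
      nlinarith [mul_nonneg hC00 hbp]
    by_cases hz : t + Real.sqrt n < dist x c
    · rw [phiConv_eq_zero hφs hsupp ht hz, abs_zero]
      positivity
    · push_neg at hz
      rw [dist_eq_norm] at hz
      have ht2 : ‖x - c‖ / 2 ≤ t := by linarith
      have h1 := phiConv_le_L1 hf hA ht x
      have hA0 : 0 ≤ A := le_trans (abs_nonneg _) (hA 0)
      have hIf0 : 0 ≤ If := le_trans (integral_nonneg fun y => abs_nonneg _) hIf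
      have hinv := inv_pow_le_of_half_le hxpos ht2 n
      have hfabs : 0 ≤ ∫ y, |f y| := integral_nonneg fun y => abs_nonneg _
      calc |phiConv n φ f t x| ≤ (t ^ n)⁻¹ * A * ∫ y, |f y| := h1
      _ ≤ (2 ^ n * (‖x - c‖ ^ n)⁻¹) * A * If := by gcongr
      _ = (A * 2 ^ n * If) * (‖x - c‖ ^ n)⁻¹ := by ring
      _ ≤ C0 * (‖x - c‖ ^ n)⁻¹ := mul_le_mul_of_nonneg_right hC0b (by positivity)

lemma indicator_Qk_support (j : Fin n → ℤ) :
    ∀ y, y ∉ closedBall (zv n j) (Real.sqrt n) →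
      (Qk n j).indicator (1 : En n → ℝ) y = 0 := by
  intro y hy
  apply Set.indicator_of_notMem
  intro hmem
  apply hy
  rw [mem_closedBall, dist_eq_norm]
  exact mem_Qk_norm_le hmem

lemma theta_support_ball {θ : En n → ℝ} (hθsupp : ∀ x, x ∉ unitQ n → θ x = 0) :
    ∀ y, y ∉ closedBall (0 : En n) (Real.sqrt n) → θ y = 0 := by
  intro y hy
  apply hθsupp
  intro hmem
  apply hy
  rw [mem_closedBall, dist_zero_right]
  exact mem_unitQ_norm_le hmem

lemma key_estimate (hn : 1 ≤ n) {θ φ : En n → ℝ} {Cθ A : ℝ} {L : NNReal}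
    (hθmeas : Measurable θ) (hθCb : ∀ x, |θ x| ≤ Cθ)
    (hθsupp : ∀ x, x ∉ unitQ n → θ x = 0) (hθint : (∫ x, θ x) = 1)
    (hφc : Continuous φ) (hφs : ∀ u, u ∉ closedBall (0 : En n) 1 → φ u = 0)
    (hA : ∀ u, |φ u| ≤ A) (hL : LipschitzWith L φ)
    {C0 : ℝ}
    (hC1 : (1 + Cθ) * (∫ u, |φ u|) ≤ C0)
    (hC2 : A * 2 ^ n * (1 + Cθ) ≤ C0)
    (hC3 : (L : ℝ) * (1 + Cθ) * 2 ^ (n+1) ≤ C0)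
    (j : Fin n → ℤ) {t : ℝ} (ht : 0 < t) (x : En n) :
    |phiConv n φ (bAtom n θ j) t x| ≤ MMaj n C0 j x := by
  have hCθ0 : 0 ≤ Cθ := Cθ_nonneg hθCb
  have hIφ0 : 0 ≤ ∫ u, |φ u| := integral_nonneg fun u => abs_nonneg _
  have hA0 : 0 ≤ A := le_trans (abs_nonneg _) (hA 0)
  have hC00 : 0 ≤ C0 := le_trans (by positivity) hC1
  have hrpos := rad_pos hn j
  have hrone := rad_ge_one hn j
  have expand : MMaj n C0 j x = C0 * farP n j x + C0 * ballP n (zv n j) x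
      + C0 * ballP n (0:En n) x + C0 * midP n j (zv n j) x + C0 * midP n j (0:En n) x := by
    unfold MMaj; ring
  by_cases hfar : x ∈ {x : En n | 2 * rad n j ≤ ‖x‖}
  · have hfarP : farP n j x = rad n j * (‖x‖ ^ (n+1))⁻¹ := Set.indicator_of_mem hfar _
    simp only [Set.mem_setOf_eq] at hfar
    have hxpos : 0 < ‖x‖ := by linarith
    suffices h : |phiConv n φ (bAtom n θ j) t x| ≤ C0 * farP n j x by
      rw [expand]
      have n1 := mul_nonneg hC00 (ballP_nonneg (n := n) (zv n j) x)
      have n2 := mul_nonneg hC00 (ballP_nonneg (n := n) (0:En n) x)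
      have n3 := mul_nonneg hC00 (midP_nonneg j (zv n j) x)
      have n4 := mul_nonneg hC00 (midP_nonneg j (0:En n) x)
      linarith
    rw [hfarP]
    by_cases hz : t + rad n j < dist x 0
    · rw [phiConv_eq_zero hφs (bAtom_support hθsupp j) ht hz, abs_zero]
      positivity
    · push_neg at hz
      rw [dist_zero_right] at hz
      have ht2 : ‖x‖ / 2 ≤ t := by linarith
      have hcan := phiConv_cancel hφc hφs hL (bAtom_integrable hθmeas hθCb hθsupp j)
        (bAtom_integral_zero hθmeas hθCb hθsupp hθint j) (bAtom_support hθsupp j) ht x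
      have hbint := bAtom_abs_integral_le hθmeas hθCb hθsupp j
      have hb0 : 0 ≤ ∫ y, |bAtom n θ j y| := integral_nonneg fun y => abs_nonneg _
      have hL0 : (0:ℝ) ≤ (L : ℝ) := L.2
      have hpow : (t ^ n)⁻¹ * t⁻¹ = (t ^ (n+1))⁻¹ := by
        rw [pow_succ, mul_inv]
      have hinv := inv_pow_le_of_half_le hxpos ht2 (n+1)
      calc |phiConv n φ (bAtom n θ j) t x|
          ≤ (t ^ n)⁻¹ * t⁻¹ * ((L : ℝ) * rad n j) * ∫ y, |bAtom n θ j y| := hcan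
      _ = (t ^ (n+1))⁻¹ * ((L : ℝ) * rad n j) * ∫ y, |bAtom n θ j y| := by rw [hpow]
      _ ≤ (2 ^ (n+1) * (‖x‖ ^ (n+1))⁻¹) * ((L : ℝ) * rad n j) * (1 + Cθ) := by gcongr
      _ = ((L : ℝ) * (1 + Cθ) * 2 ^ (n+1)) * (rad n j * (‖x‖ ^ (n+1))⁻¹) := by ring
      _ ≤ C0 * (rad n j * (‖x‖ ^ (n+1))⁻¹) := by
          apply mul_le_mul_of_nonneg_right hC3
          positivity
  · simp only [Set.mem_setOf_eq, not_le] at hfar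
    have hsplit : phiConv n φ (bAtom n θ j) t x
        = phiConv n φ ((Qk n j).indicator (1 : En n → ℝ)) t x - phiConv n φ θ t x := by
      unfold phiConv bAtom
      rw [← integral_sub (kern_mul_integrable hφc hφs (indicator_Qk_integrable j) ht x)
        (kern_mul_integrable hφc hφs (theta_integrable hθmeas hθCb hθsupp) ht x)]
      congr 1; funext y; ring
    have hzv : ‖zv n j‖ ≤ rad n j := by
      unfold rad; linarith [Real.sqrt_nonneg (n:ℝ)]
    have h1 : |phiConv n φ ((Qk n j).indicator (1 : En n → ℝ)) t x|
        ≤ C0 * (ballP n (zv n j) x + midP n j (zv n j) x) := by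
      refine piece_estimate hn hφc hφs hA (indicator_Qk_integrable j)
        (indicator_Qk_support j) (Cf := 1) (If := 1) (fun y => ?_)
        (le_of_eq (indicator_Qk_abs_integral j)) ?_ ?_ ?_ ht
      · have hnn : (0:ℝ) ≤ (Qk n j).indicator (1 : En n → ℝ) y :=
          Set.indicator_nonneg (f := (1 : En n → ℝ)) (fun _ _ => zero_le_one) y
        rw [abs_of_nonneg hnn]
        exact Set.indicator_apply_le' (fun _ => le_refl 1) (fun _ => zero_le_one)
      · calc 1 * (∫ u, |φ u|) = ∫ u, |φ u| := one_mul _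
        _ ≤ (1 + Cθ) * (∫ u, |φ u|) := by nlinarith
        _ ≤ C0 := hC1
      · calc A * 2 ^ n * 1 ≤ A * 2 ^ n * (1 + Cθ) := by
              apply mul_le_mul_of_nonneg_left (by linarith) (by positivity)
        _ ≤ C0 := hC2
      · calc ‖x - zv n j‖ ≤ ‖x‖ + ‖zv n j‖ := norm_sub_le _ _
        _ ≤ 3 * rad n j := by linarith
    have h2 : |phiConv n φ θ t x| ≤ C0 * (ballP n (0:En n) x + midP n j (0:En n) x) := by
      refine piece_estimate hn hφc hφs hA (theta_integrable hθmeas hθCb hθsupp)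
        (theta_support_ball hθsupp) hθCb (theta_abs_integral_le hθmeas hθCb hθsupp)
        ?_ ?_ ?_ ht
      · calc Cθ * (∫ u, |φ u|) ≤ (1 + Cθ) * (∫ u, |φ u|) := by nlinarith
        _ ≤ C0 := hC1
      · calc A * 2 ^ n * Cθ ≤ A * 2 ^ n * (1 + Cθ) := by
              apply mul_le_mul_of_nonneg_left (by linarith) (by positivity)
        _ ≤ C0 := hC2
      · rw [sub_zero]; linarith
    rw [expand, hsplit]
    have hfp := mul_nonneg hC00 (farP_nonneg hn j x)
    calc |phiConv n φ ((Qk n j).indicator (1 : En n → ℝ)) t x - phiConv n φ θ t x|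
        ≤ |phiConv n φ ((Qk n j).indicator (1 : En n → ℝ)) t x| + |phiConv n φ θ t x| :=
          abs_sub _ _
    _ ≤ C0 * (ballP n (zv n j) x + midP n j (zv n j) x)
        + C0 * (ballP n (0:En n) x + midP n j (0:En n) x) := add_le_add h1 h2
    _ ≤ _ := by ring_nf; linarith [hfp]

end KeyEstimate

section IntegralBounds

variable {n : ℕ}

lemma nontrivial_En (hn : 1 ≤ n) : Nontrivial (En n) := by
  haveI : Nonempty (Fin n) := ⟨⟨0, hn⟩⟩
  infer_instance

lemma radial_integral (hn : 1 ≤ n) (f : ℝ → ℝ) :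
    (∫ x : En n, f ‖x‖) = (n : ℝ) * ((volume (ball (0:En n) 1)).toReal
      * ∫ y in Ioi (0:ℝ), y ^ (n-1) * f y) := by
  haveI := nontrivial_En hn
  have h := MeasureTheory.integral_fun_norm_addHaar (volume : Measure (En n)) f
  simp only [finrank_euclideanSpace_fin, nsmul_eq_mul, smul_eq_mul] at h
  exact h

lemma oneD_mid (hn : 1 ≤ n) {a b : ℝ} (ha : 0 < a) (hab : a ≤ b) :
    (∫ y in Ioi (0:ℝ), y ^ (n-1) *
      (Set.Ioc a b).indicator (fun s => (s^n)⁻¹) y) = Real.log b - Real.log a := by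
  have hb : 0 < b := lt_of_lt_of_le ha hab
  have key : (fun y : ℝ => y ^ (n-1) * (Set.Ioc a b).indicator (fun s => (s^n)⁻¹) y)
      = fun y => (Set.Ioc a b).indicator (fun y => y ^ (n-1) * (y^n)⁻¹) y := by
    funext y
    by_cases h : y ∈ Set.Ioc a b
    · rw [Set.indicator_of_mem h, Set.indicator_of_mem h]
    · rw [Set.indicator_of_notMem h, Set.indicator_of_notMem h, mul_zero]
  have hinter : Set.Ioi (0:ℝ) ∩ Set.Ioc a b = Set.Ioc a b :=
    Set.inter_eq_self_of_subset_right (fun y hy => lt_trans ha hy.1)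
  rw [key, setIntegral_indicator measurableSet_Ioc, hinter]
  have congr1 : ∫ y in Set.Ioc a b, y ^ (n-1) * (y^n)⁻¹ = ∫ y in Set.Ioc a b, y⁻¹ := by
    apply setIntegral_congr_fun measurableSet_Ioc
    intro y hy
    show y ^ (n-1) * (y^n)⁻¹ = y⁻¹
    have hy0 : 0 < y := lt_trans ha hy.1
    have hyn : y ^ n = y ^ (n-1) * y := by rw [← pow_succ, Nat.sub_add_cancel hn]
    rw [hyn, mul_inv, ← mul_assoc, mul_inv_cancel₀ (pow_ne_zero _ hy0.ne'), one_mul]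
  rw [congr1, ← intervalIntegral.integral_of_le hab,
    integral_inv (Set.notMem_uIcc_of_lt ha hb), Real.log_div hb.ne' ha.ne']

lemma oneD_far (hn : 1 ≤ n) {c : ℝ} (hc : 0 < c) :
    (∫ y in Ioi (0:ℝ), y ^ (n-1) *
      (Set.Ici c).indicator (fun s => (s^(n+1))⁻¹) y) = c⁻¹ := by
  have key : (fun y : ℝ => y ^ (n-1) * (Set.Ici c).indicator (fun s => (s^(n+1))⁻¹) y)
      = fun y => (Set.Ici c).indicator (fun y => y ^ (n-1) * (y^(n+1))⁻¹) y := by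
    funext y
    by_cases h : y ∈ Set.Ici c
    · rw [Set.indicator_of_mem h, Set.indicator_of_mem h]
    · rw [Set.indicator_of_notMem h, Set.indicator_of_notMem h, mul_zero]
  have hinter : Set.Ioi (0:ℝ) ∩ Set.Ici c = Set.Ici c :=
    Set.inter_eq_self_of_subset_right (fun y hy => lt_of_lt_of_le hc hy)
  rw [key, setIntegral_indicator measurableSet_Ici, hinter]
  have congr1 : ∫ y in Set.Ici c, y ^ (n-1) * (y^(n+1))⁻¹
      = ∫ y in Set.Ici c, y ^ (-2 : ℝ) := by
    apply setIntegral_congr_fun measurableSet_Ici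
    intro y hy
    show y ^ (n-1) * (y^(n+1))⁻¹ = y ^ (-2 : ℝ)
    have hy0 : 0 < y := lt_of_lt_of_le hc hy
    have hyn : y ^ (n+1) = y ^ (n-1) * y ^ 2 := by
      rw [← pow_add]; congr 1; omega
    rw [hyn, mul_inv, ← mul_assoc, mul_inv_cancel₀ (pow_ne_zero _ hy0.ne'), one_mul,
      show ((-2 : ℝ) = -(2:ℕ)) by norm_num, Real.rpow_neg hy0.le, Real.rpow_natCast]
  rw [congr1, integral_Ici_eq_integral_Ioi,
    integral_Ioi_rpow_of_lt (by norm_num) hc]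
  norm_num
  rw [Real.rpow_neg_one]

lemma ballP_integrable (c : En n) : Integrable (ballP n c) := by
  unfold ballP
  rw [integrable_indicator_iff measurableSet_closedBall]
  exact integrableOn_const (isCompact_closedBall _ _).measure_lt_top.ne

lemma ballP_integral (c : En n) :
    (∫ x, ballP n c x) = (volume (closedBall (0:En n) (2 * Real.sqrt n))).toReal := by
  unfold ballP
  have : (closedBall c (2 * Real.sqrt n)).indicator (fun _ : En n => (1:ℝ))
      = (closedBall c (2 * Real.sqrt n)).indicator (1 : En n → ℝ) := rfl
  rw [this, integral_indicator_one measurableSet_closedBall, measureReal_def,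
    Measure.addHaar_closedBall_center]

lemma midP_eq_comp (j : Fin n → ℤ) (c : En n) : midP n j c =
    fun x => (Set.Ioc (2 * Real.sqrt n) (3 * rad n j)).indicator
      (fun s => (s^n)⁻¹) ‖x - c‖ := by
  funext x
  unfold midP
  by_cases h : 2 * Real.sqrt n < ‖x - c‖ ∧ ‖x - c‖ ≤ 3 * rad n j
  · rw [Set.indicator_of_mem
      (show x ∈ {x : En n | 2 * Real.sqrt n < ‖x - c‖ ∧ ‖x - c‖ ≤ 3 * rad n j} from h),
      Set.indicator_of_mem (show ‖x - c‖ ∈ Set.Ioc (2 * Real.sqrt n) (3 * rad n j) from h)]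
  · rw [Set.indicator_of_notMem
      (show x ∉ {x : En n | 2 * Real.sqrt n < ‖x - c‖ ∧ ‖x - c‖ ≤ 3 * rad n j} from h),
      Set.indicator_of_notMem (show ‖x - c‖ ∉ Set.Ioc (2 * Real.sqrt n) (3 * rad n j) from h)]

lemma midP_integrable (hn : 1 ≤ n) (j : Fin n → ℤ) (c : En n) :
    Integrable (midP n j c) := by
  have hmeas := measurable_midP (n := n) j c
  set S := {x : En n | 2 * Real.sqrt n < ‖x - c‖ ∧ ‖x - c‖ ≤ 3 * rad n j} with hS
  have hSmeas : MeasurableSet S := by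
    apply MeasurableSet.inter
    · exact measurableSet_lt measurable_const (measurable_id.sub_const c).norm
    · exact measurableSet_le (measurable_id.sub_const c).norm measurable_const
  have hSsub : S ⊆ closedBall c (3 * rad n j) := by
    intro x hx
    rw [mem_closedBall, dist_eq_norm]
    exact hx.2
  have hSfin : volume S < ⊤ :=
    lt_of_le_of_lt (measure_mono hSsub) (isCompact_closedBall _ _).measure_lt_top
  unfold midP
  rw [integrable_indicator_iff hSmeas]
  apply Integrable.mono' (g := fun _ => (1:ℝ))
  · exact integrableOn_const hSfin.ne
  · exact (((measurable_id.sub_const c).norm.pow_const _).inv).aestronglyMeasurable.restrict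
  · rw [ae_restrict_iff' hSmeas]
    filter_upwards with x hx
    have h1 : (1:ℝ) ≤ ‖x - c‖ := by
      have := sqrt_n_ge_one hn; linarith [hx.1]
    have h2 : (1:ℝ) ≤ ‖x - c‖ ^ n := one_le_pow₀ h1
    rw [Real.norm_eq_abs, abs_of_nonneg (by positivity)]
    calc (‖x - c‖ ^ n)⁻¹ ≤ (1:ℝ)⁻¹ := inv_anti₀ one_pos h2
    _ = 1 := inv_one

lemma midP_integral (hn : 1 ≤ n) (j : Fin n → ℤ) (c : En n) :
    (∫ x, midP n j c x) = (n : ℝ) * ((volume (ball (0:En n) 1)).toReal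
      * (Real.log (3 * rad n j) - Real.log (2 * Real.sqrt n))) := by
  have hsq1 : (1:ℝ) ≤ Real.sqrt n := sqrt_n_ge_one hn
  have ha : (0:ℝ) < 2 * Real.sqrt n := by linarith
  have hab : 2 * Real.sqrt n ≤ 3 * rad n j := by
    have := rad_ge_sqrt (n := n) j
    have := rad_ge_one hn j
    have := rad_pos hn j
    unfold rad at *
    nlinarith [Real.sqrt_nonneg (n:ℝ), norm_nonneg (zv n j)]
  rw [midP_eq_comp j c]
  have hshift : (∫ x : En n, (Set.Ioc (2 * Real.sqrt n) (3 * rad n j)).indicator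
      (fun s => (s^n)⁻¹) ‖x - c‖)
      = ∫ x : En n, (Set.Ioc (2 * Real.sqrt n) (3 * rad n j)).indicator
      (fun s => (s^n)⁻¹) ‖x‖ := by
    exact integral_sub_right_eq_self
      (fun x : En n => (Set.Ioc (2 * Real.sqrt n) (3 * rad n j)).indicator
        (fun s => (s^n)⁻¹) ‖x‖) c
  rw [hshift, radial_integral hn, oneD_mid hn ha hab]

lemma farP_integrable (hn : 1 ≤ n) (j : Fin n → ℤ) : Integrable (farP n j) := by
  have hrone := rad_ge_one hn j
  have hrpos := rad_pos hn j
  apply Integrable.mono' (g := fun x : En n =>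
    (rad n j * 2^(n+1)) * (1 + ‖x‖) ^ (-((n:ℝ)+1)))
  · apply Integrable.const_mul
    have : ((n:ℝ) : ℝ) < (n:ℝ) + 1 := by linarith
    have h := integrable_one_add_norm (E := En n) (μ := volume) (r := (n:ℝ)+1) ?_
    · exact h
    · rw [finrank_euclideanSpace_fin]; linarith
  · exact (measurable_farP j).aestronglyMeasurable
  · filter_upwards with x
    rw [Real.norm_eq_abs, abs_of_nonneg (farP_nonneg hn j x)]
    unfold farP
    have hx0 : (0:ℝ) ≤ ‖x‖ := norm_nonneg x
    have h1x : (0:ℝ) < 1 + ‖x‖ := by linarith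
    have hrpowpos : (0:ℝ) < (1 + ‖x‖) ^ (-((n:ℝ)+1)) := Real.rpow_pos_of_pos h1x _
    apply Set.indicator_apply_le'
    · intro hmem
      simp only [Set.mem_setOf_eq] at hmem
      have hx1 : (1:ℝ) ≤ ‖x‖ := by linarith
      have hxpos : (0:ℝ) < ‖x‖ := by linarith
      have hle : (1 + ‖x‖) ^ (n+1) ≤ 2^(n+1) * ‖x‖^(n+1) := by
        calc (1 + ‖x‖) ^ (n+1) ≤ (2 * ‖x‖) ^ (n+1) :=
              pow_le_pow_left₀ (by linarith) (by linarith) _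
        _ = 2^(n+1) * ‖x‖^(n+1) := mul_pow _ _ _
      have hrpow : (1 + ‖x‖) ^ (-((n:ℝ)+1)) = ((1 + ‖x‖) ^ (n+1) : ℝ)⁻¹ := by
        rw [show (-((n:ℝ)+1)) = -(((n+1:ℕ)):ℝ) by push_cast; ring,
          Real.rpow_neg h1x.le, Real.rpow_natCast]
      rw [hrpow]
      have hinv : (‖x‖^(n+1))⁻¹ ≤ 2^(n+1) * ((1 + ‖x‖) ^ (n+1) : ℝ)⁻¹ := by
        have e1 : (0:ℝ) < ‖x‖^(n+1) := by positivity
        have e2 : (0:ℝ) < (1 + ‖x‖)^(n+1) := by positivity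
        rw [← one_div, ← one_div, mul_one_div, div_le_div_iff₀ e1 e2, one_mul]
        exact hle
      calc rad n j * (‖x‖ ^ (n+1))⁻¹
          ≤ rad n j * (2^(n+1) * ((1 + ‖x‖) ^ (n+1) : ℝ)⁻¹) :=
            mul_le_mul_of_nonneg_left hinv hrpos.le
      _ = rad n j * 2^(n+1) * ((1 + ‖x‖) ^ (n+1) : ℝ)⁻¹ := by ring
    · intro _
      positivity

lemma farP_eq_comp (j : Fin n → ℤ) : farP n j =
    fun x : En n => (Set.Ici (2 * rad n j)).indicator
      (fun s => rad n j * (s^(n+1))⁻¹) ‖x‖ := by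
  funext x
  unfold farP
  by_cases h : 2 * rad n j ≤ ‖x‖
  · rw [Set.indicator_of_mem (show x ∈ {x : En n | 2 * rad n j ≤ ‖x‖} from h),
      Set.indicator_of_mem (show ‖x‖ ∈ Set.Ici (2 * rad n j) from h)]
  · rw [Set.indicator_of_notMem (show x ∉ {x : En n | 2 * rad n j ≤ ‖x‖} from h),
      Set.indicator_of_notMem (show ‖x‖ ∉ Set.Ici (2 * rad n j) from h)]

lemma farP_integral (hn : 1 ≤ n) (j : Fin n → ℤ) :
    (∫ x, farP n j x) = (n : ℝ) * ((volume (ball (0:En n) 1)).toReal * (1/2)) := by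
  have hrpos := rad_pos hn j
  rw [farP_eq_comp j, radial_integral hn]
  have key : (∫ y in Ioi (0:ℝ), y ^ (n-1) *
      (Set.Ici (2 * rad n j)).indicator (fun s => rad n j * (s^(n+1))⁻¹) y)
      = rad n j * ∫ y in Ioi (0:ℝ), y ^ (n-1) *
      (Set.Ici (2 * rad n j)).indicator (fun s => (s^(n+1))⁻¹) y := by
    rw [← integral_const_mul]
    apply setIntegral_congr_fun measurableSet_Ioi
    intro y _
    show y ^ (n-1) * (Set.Ici (2 * rad n j)).indicator (fun s => rad n j * (s^(n+1))⁻¹) y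
      = rad n j * (y ^ (n-1) * (Set.Ici (2 * rad n j)).indicator (fun s => (s^(n+1))⁻¹) y)
    by_cases h : y ∈ Set.Ici (2 * rad n j)
    · rw [Set.indicator_of_mem h, Set.indicator_of_mem h]; ring
    · rw [Set.indicator_of_notMem h, Set.indicator_of_notMem h]; ring
  rw [key, oneD_far hn (by linarith)]
  have : rad n j * (2 * rad n j)⁻¹ = 1/2 := by field_simp
  rw [this]

end IntegralBounds

section MMajBound

variable {n : ℕ}

lemma lnp_nonneg (t : ℝ) : 0 ≤ lnp t := le_max_right _ _

lemma lnp_eq_log_max {s : ℝ} (hs : 0 ≤ s) : lnp s = Real.log (max s 1) := by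
  unfold lnp
  rcases le_total s 1 with h | h
  · rw [max_eq_right h, Real.log_one, max_eq_right (Real.log_nonpos hs h)]
  · rw [max_eq_left h, max_eq_left (Real.log_nonneg h)]

lemma log_rad_le (hn : 1 ≤ n) (j : Fin n → ℤ) :
    Real.log (3 * rad n j) ≤ Real.log (3 * (1 + Real.sqrt n)) + lnp ‖zv n j‖ := by
  have hsq := sqrt_n_ge_one hn
  have hmax1 : (1:ℝ) ≤ max ‖zv n j‖ 1 := le_max_right _ _
  have h2 : ‖zv n j‖ ≤ max ‖zv n j‖ 1 := le_max_left _ _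
  have h1 : 3 * rad n j ≤ (3 * (1 + Real.sqrt n)) * max ‖zv n j‖ 1 := by
    unfold rad
    nlinarith [Real.sqrt_nonneg (n:ℝ), norm_nonneg (zv n j)]
  calc Real.log (3 * rad n j) ≤ Real.log ((3 * (1 + Real.sqrt n)) * max ‖zv n j‖ 1) :=
        Real.log_le_log (by linarith [rad_pos hn j]) h1
  _ = Real.log (3 * (1 + Real.sqrt n)) + Real.log (max ‖zv n j‖ 1) :=
        Real.log_mul (by positivity) (by positivity)
  _ = Real.log (3 * (1 + Real.sqrt n)) + lnp ‖zv n j‖ := by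
        rw [lnp_eq_log_max (norm_nonneg _)]

lemma MMaj_integrable (hn : 1 ≤ n) (C0 : ℝ) (j : Fin n → ℤ) :
    Integrable (MMaj n C0 j) := by
  unfold MMaj
  exact (((((farP_integrable hn j).add (ballP_integrable _)).add
    (ballP_integrable _)).add (midP_integrable hn j _)).add
    (midP_integrable hn j _)).const_mul C0

lemma exists_MMaj_bound (hn : 1 ≤ n) {C0 : ℝ} (hC0 : 0 ≤ C0) :
    ∃ C2 : ℝ, 0 ≤ C2 ∧ ∀ j : Fin n → ℤ,
      (∫ x, MMaj n C0 j x) ≤ C2 * (1 + lnp ‖zv n j‖) := by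
  have hsq := sqrt_n_ge_one hn
  set volB := (volume (ball (0:En n) 1)).toReal with hvolBdef
  have hvolB : 0 ≤ volB := ENNReal.toReal_nonneg
  set Vb := (volume (closedBall (0:En n) (2 * Real.sqrt n))).toReal with hVbdef
  have hVb : 0 ≤ Vb := ENNReal.toReal_nonneg
  set K : ℝ := n * volB with hKdef
  have hK : 0 ≤ K := by positivity
  set Cst := Real.log (3 * (1 + Real.sqrt n)) with hCstdef
  have hCst : 0 ≤ Cst := Real.log_nonneg (by nlinarith)
  refine ⟨C0 * (K * (1/2) + 2*Vb + 2*K*Cst + 2*K), by positivity, fun j => ?_⟩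
  have hint : ∀ x, MMaj n C0 j x = C0 * (farP n j x + ballP n (zv n j) x
      + ballP n (0:En n) x + midP n j (zv n j) x + midP n j (0:En n) x) := fun x => rfl
  have heq : (∫ x, MMaj n C0 j x) = C0 * ((∫ x, farP n j x) + (∫ x, ballP n (zv n j) x)
      + (∫ x, ballP n (0:En n) x) + (∫ x, midP n j (zv n j) x)
      + (∫ x, midP n j (0:En n) x)) := by
    unfold MMaj
    rw [integral_const_mul]
    congr 1
    have i1 : Integrable (fun a : En n => farP n j a) := farP_integrable hn j
    have i2 : Integrable (fun a : En n => ballP n (zv n j) a) := ballP_integrable _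
    have i3 : Integrable (fun a : En n => ballP n (0:En n) a) := ballP_integrable _
    have i4 : Integrable (fun a : En n => midP n j (zv n j) a) := midP_integrable hn j _
    have i5 : Integrable (fun a : En n => midP n j (0:En n) a) := midP_integrable hn j _
    have i12 : Integrable (fun a : En n => farP n j a + ballP n (zv n j) a) := i1.add i2
    have i123 : Integrable (fun a : En n => farP n j a + ballP n (zv n j) a
        + ballP n (0:En n) a) := i12.add i3
    have i1234 : Integrable (fun a : En n => farP n j a + ballP n (zv n j) a
        + ballP n (0:En n) a + midP n j (zv n j) a) := i123.add i4
    rw [integral_add i1234 i5, integral_add i123 i4, integral_add i12 i3,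
      integral_add i1 i2]
  rw [heq]
  have hfar := farP_integral hn j
  have hb1 := ballP_integral (n := n) (zv n j)
  have hb2 := ballP_integral (n := n) (0 : En n)
  have hm1 := midP_integral hn j (zv n j)
  have hm2 := midP_integral hn j (0 : En n)
  have hlogn : 0 ≤ Real.log (2 * Real.sqrt n) := Real.log_nonneg (by linarith)
  have hlograd := log_rad_le hn j
  have hlnp := lnp_nonneg ‖zv n j‖
  have hmid_le : (∫ x, midP n j (zv n j) x) ≤ K * (Cst + lnp ‖zv n j‖) := by
    rw [hm1]
    have : Real.log (3 * rad n j) - Real.log (2 * Real.sqrt n)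
        ≤ Cst + lnp ‖zv n j‖ := by linarith
    calc (n:ℝ) * (volB * (Real.log (3 * rad n j) - Real.log (2 * Real.sqrt n)))
        ≤ (n:ℝ) * (volB * (Cst + lnp ‖zv n j‖)) := by
          apply mul_le_mul_of_nonneg_left _ (Nat.cast_nonneg n)
          exact mul_le_mul_of_nonneg_left this hvolB
    _ = K * (Cst + lnp ‖zv n j‖) := by rw [hKdef]; ring
  have hmid_le2 : (∫ x, midP n j (0:En n) x) ≤ K * (Cst + lnp ‖zv n j‖) := by
    rw [hm2]
    have : Real.log (3 * rad n j) - Real.log (2 * Real.sqrt n)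
        ≤ Cst + lnp ‖zv n j‖ := by linarith
    calc (n:ℝ) * (volB * (Real.log (3 * rad n j) - Real.log (2 * Real.sqrt n)))
        ≤ (n:ℝ) * (volB * (Cst + lnp ‖zv n j‖)) := by
          apply mul_le_mul_of_nonneg_left _ (Nat.cast_nonneg n)
          exact mul_le_mul_of_nonneg_left this hvolB
    _ = K * (Cst + lnp ‖zv n j‖) := by rw [hKdef]; ring
  have hfar_eq : (∫ x, farP n j x) = K * (1/2) := by
    rw [hfar, hKdef]; ring
  have hsum_le : (∫ x, farP n j x) + (∫ x, ballP n (zv n j) x)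
      + (∫ x, ballP n (0:En n) x) + (∫ x, midP n j (zv n j) x)
      + (∫ x, midP n j (0:En n) x)
      ≤ K * (1/2) + 2*Vb + 2*K*Cst + 2*K*lnp ‖zv n j‖ := by
    rw [hfar_eq, hb1, hb2]
    have := hmid_le
    have := hmid_le2
    linarith [hmid_le, hmid_le2]
  calc C0 * ((∫ x, farP n j x) + (∫ x, ballP n (zv n j) x)
      + (∫ x, ballP n (0:En n) x) + (∫ x, midP n j (zv n j) x)
      + (∫ x, midP n j (0:En n) x))
      ≤ C0 * (K * (1/2) + 2*Vb + 2*K*Cst + 2*K*lnp ‖zv n j‖) :=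
        mul_le_mul_of_nonneg_left hsum_le hC0
  _ ≤ C0 * (K * (1/2) + 2*Vb + 2*K*Cst + 2*K) * (1 + lnp ‖zv n j‖) := by
      nlinarith [mul_nonneg hK hlnp, mul_nonneg hVb hlnp, mul_nonneg (mul_nonneg hK hCst) hlnp]
  _ = _ := rfl

end MMajBound

section GFacts

variable {n : ℕ}

/-- coordinatewise rounding -/
def rdv (n : ℕ) (x : En n) : Fin n → ℤ := fun i => round (x i)

lemma measurable_rdv : Measurable (rdv n) := by
  apply measurable_pi_lambda
  intro i
  have h1 : Measurable (fun y : ℝ => round y) := by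
    have : (fun y : ℝ => round y) = fun y : ℝ => ⌊y + 1/2⌋ := by
      funext y; exact round_eq y
    rw [this]
    exact Int.measurable_floor.comp (measurable_id.add_const _)
  exact h1.comp ((EuclideanSpace.proj i : En n →L[ℝ] ℝ).continuous.measurable)

lemma rdv_eq_of_mem {x : En n} {j : Fin n → ℤ} (hx : x ∈ Qk n j) : rdv n x = j := by
  funext i
  have h1 := (hx i).1
  have h2 := (hx i).2
  rw [rdv, round_eq, Int.floor_eq_iff]
  constructor <;> push_cast <;> linarith

lemma measurableSet_iUnionQk : MeasurableSet (⋃ k : Fin n → ℤ, Qk n k) :=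
  MeasurableSet.iUnion fun k => measurableSet_Qk k

lemma g_closed_form {lam : (Fin n → ℤ) → ℝ} (hlam : Summable lam)
    {θ : En n → ℝ} (x : En n) :
    (∑' j : Fin n → ℤ, lam j * ((Qk n j).indicator (1 : En n → ℝ) x - θ x))
      = lam (rdv n x) * (⋃ k : Fin n → ℤ, Qk n k).indicator (1 : En n → ℝ) x
        - (∑' j : Fin n → ℤ, lam j) * θ x := by
  have hvan : ∀ j, j ≠ rdv n x → lam j * (Qk n j).indicator (1 : En n → ℝ) x = 0 := by
    intro j hj
    by_cases hmem : x ∈ Qk n j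
    · exact absurd (rdv_eq_of_mem hmem).symm hj
    · rw [Set.indicator_of_notMem hmem, mul_zero]
  have h1 : Summable (fun j => lam j * (Qk n j).indicator (1 : En n → ℝ) x) :=
    summable_of_ne_finset_zero (s := {rdv n x}) (by
      intro j hj
      exact hvan j (by simpa using hj))
  have h2 : Summable (fun j : Fin n → ℤ => lam j * θ x) := hlam.mul_right _
  have hsplit : (fun j : Fin n → ℤ => lam j * ((Qk n j).indicator (1 : En n → ℝ) x - θ x))
      = fun j => lam j * (Qk n j).indicator (1 : En n → ℝ) x - lam j * θ x := by
    funext j; ring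
  rw [hsplit, Summable.tsum_sub h1 h2, tsum_eq_single (rdv n x) hvan, tsum_mul_right]
  congr 2
  by_cases hmem : x ∈ Qk n (rdv n x)
  · rw [Set.indicator_of_mem hmem, Set.indicator_of_mem (Set.mem_iUnion.2 ⟨rdv n x, hmem⟩)]
  · rw [Set.indicator_of_notMem hmem, Set.indicator_of_notMem]
    intro hun
    obtain ⟨k, hk⟩ := Set.mem_iUnion.1 hun
    rw [rdv_eq_of_mem hk] at hmem
    exact hmem hk

lemma g_measurable {lam : (Fin n → ℤ) → ℝ} (hlam : Summable lam) (θ : En n → ℝ)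
    (hθmeas : Measurable θ) :
    Measurable (fun x => ∑' j : Fin n → ℤ,
      lam j * ((Qk n j).indicator (1 : En n → ℝ) x - θ x)) := by
  have heq : (fun x => ∑' j : Fin n → ℤ,
      lam j * ((Qk n j).indicator (1 : En n → ℝ) x - θ x))
      = fun x => lam (rdv n x) * (⋃ k : Fin n → ℤ, Qk n k).indicator (1 : En n → ℝ) x
        - (∑' j : Fin n → ℤ, lam j) * θ x := by
    funext x; exact g_closed_form hlam x
  rw [heq]
  apply Measurable.sub
  · exact ((measurable_of_countable lam).comp measurable_rdv).mul
      (measurable_const.indicator measurableSet_iUnionQk)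
  · exact hθmeas.const_mul _

lemma g_bounded {lam : (Fin n → ℤ) → ℝ} (habs : Summable (fun j => |lam j|))
    {θ : En n → ℝ} {Cθ : ℝ} (hθCb : ∀ x, |θ x| ≤ Cθ) (x : En n) :
    |∑' j : Fin n → ℤ, lam j * ((Qk n j).indicator (1 : En n → ℝ) x - θ x)|
      ≤ (∑' j : Fin n → ℤ, |lam j|) * (1 + Cθ) := by
  have hCθ0 : 0 ≤ Cθ := Cθ_nonneg hθCb
  have hT0 : 0 ≤ ∑' j : Fin n → ℤ, |lam j| := tsum_nonneg fun j => abs_nonneg _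
  rw [g_closed_form habs.of_abs x]
  have h1 : |lam (rdv n x) * (⋃ k : Fin n → ℤ, Qk n k).indicator (1 : En n → ℝ) x|
      ≤ ∑' j : Fin n → ℤ, |lam j| := by
    rw [abs_mul]
    have hle : |lam (rdv n x)| ≤ ∑' j : Fin n → ℤ, |lam j| :=
      Summable.le_tsum habs (rdv n x) (fun j _ => abs_nonneg _)
    have hind : |(⋃ k : Fin n → ℤ, Qk n k).indicator (1 : En n → ℝ) x| ≤ 1 := by
      have hnn : (0:ℝ) ≤ (⋃ k : Fin n → ℤ, Qk n k).indicator (1 : En n → ℝ) x :=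
        Set.indicator_nonneg (f := (1 : En n → ℝ)) (fun _ _ => zero_le_one) x
      rw [abs_of_nonneg hnn]
      exact Set.indicator_apply_le' (fun _ => le_refl 1) (fun _ => zero_le_one)
    calc |lam (rdv n x)| * |(⋃ k : Fin n → ℤ, Qk n k).indicator (1 : En n → ℝ) x|
        ≤ (∑' j : Fin n → ℤ, |lam j|) * 1 :=
          mul_le_mul hle hind (abs_nonneg _) hT0
    _ = ∑' j : Fin n → ℤ, |lam j| := mul_one _
  have h2 : |(∑' j : Fin n → ℤ, lam j) * θ x| ≤ (∑' j : Fin n → ℤ, |lam j|) * Cθ := by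
    rw [abs_mul]
    have hle : |∑' j : Fin n → ℤ, lam j| ≤ ∑' j : Fin n → ℤ, |lam j| := by
      have := norm_tsum_le_tsum_norm (f := lam) (by simpa [Real.norm_eq_abs] using habs)
      simpa [Real.norm_eq_abs] using this
    exact mul_le_mul hle (hθCb x) (abs_nonneg _) hT0
  calc |lam (rdv n x) * (⋃ k : Fin n → ℤ, Qk n k).indicator (1 : En n → ℝ) x
      - (∑' j : Fin n → ℤ, lam j) * θ x|
      ≤ |lam (rdv n x) * (⋃ k : Fin n → ℤ, Qk n k).indicator (1 : En n → ℝ) x|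
        + |(∑' j : Fin n → ℤ, lam j) * θ x| := abs_sub _ _
  _ ≤ (∑' j : Fin n → ℤ, |lam j|) + (∑' j : Fin n → ℤ, |lam j|) * Cθ := add_le_add h1 h2
  _ = (∑' j : Fin n → ℤ, |lam j|) * (1 + Cθ) := by ring

end GFacts

section MphiFacts

variable {n : ℕ} {φ : En n → ℝ}

lemma phiConv_continuous {g : En n → ℝ} (hgmeas : Measurable g) {Bg : ℝ}
    (hgB : ∀ x, |g x| ≤ Bg) (hφc : Continuous φ)
    (hφs : ∀ u, u ∉ closedBall (0 : En n) 1 → φ u = 0) {t : ℝ} (ht : 0 < t) :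
    Continuous (fun x => phiConv n φ g t x) := by
  have hloc : LocallyIntegrable g volume := by
    intro x
    refine ⟨closedBall x 1, closedBall_mem_nhds x one_pos, ?_⟩
    apply Integrable.mono' (g := fun _ => Bg)
      (integrableOn_const (isCompact_closedBall x 1).measure_lt_top.ne)
      hgmeas.aestronglyMeasurable.restrict
    filter_upwards with y
    rw [Real.norm_eq_abs]; exact hgB y
  set k : En n → ℝ := fun u => (t ^ n)⁻¹ * φ (t⁻¹ • u) with hk
  have hkcont : Continuous k := continuous_const.mul (hφc.comp (by fun_prop : Continuous fun u : En n => t⁻¹ • u))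
  have hkhcs : HasCompactSupport k := by
    apply HasCompactSupport.intro (isCompact_closedBall (0 : En n) t)
    intro u hu
    rw [mem_closedBall, dist_zero_right] at hu
    push_neg at hu
    have hφ0 : φ (t⁻¹ • u) = 0 := by
      apply hφs
      intro hmem
      rw [mem_closedBall_zero_iff, norm_smul_inv t ht] at hmem
      have : ‖u‖ ≤ t := by
        calc ‖u‖ = t * (t⁻¹ * ‖u‖) := by field_simp
        _ ≤ t * 1 := by nlinarith
        _ = t := mul_one t
      linarith
    rw [hk]; simp [hφ0]
  have hconv := HasCompactSupport.continuous_convolution_right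
    (ContinuousLinearMap.mul ℝ ℝ) hkhcs hloc hkcont
  have heq : (fun x => phiConv n φ g t x)
      = convolution g k (ContinuousLinearMap.mul ℝ ℝ) volume := by
    funext x
    rw [phiConv, convolution_def]
    congr 1
    funext y
    rw [ContinuousLinearMap.mul_apply']
    show (t ^ n)⁻¹ * φ (t⁻¹ • (x - y)) * g y = g y * ((t ^ n)⁻¹ * φ (t⁻¹ • (x - y)))
    ring
  rw [heq]
  exact hconv

lemma Mphi_nonneg (f : En n → ℝ) (x : En n) : 0 ≤ Mphi n φ f x :=
  Real.iSup_nonneg fun t => abs_nonneg _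

lemma Mphi_bddAbove {g : En n → ℝ} {Bg : ℝ} (hgB : ∀ x, |g x| ≤ Bg)
    (hφc : Continuous φ) (hφs : ∀ u, u ∉ closedBall (0 : En n) 1 → φ u = 0) (z : En n) :
    BddAbove (Set.range fun tp : {t : ℝ // 0 < t} => |phiConv n φ g tp.1 z|) := by
  refine ⟨Bg * ∫ u, |φ u|, ?_⟩
  rintro v ⟨tp, rfl⟩
  exact phiConv_le_unif hφc hφs tp.2 hgB z

lemma Mphi_measurable {g : En n → ℝ} (hgmeas : Measurable g) {Bg : ℝ}
    (hgB : ∀ x, |g x| ≤ Bg) (hφc : Continuous φ)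
    (hφs : ∀ u, u ∉ closedBall (0 : En n) 1 → φ u = 0) :
    Measurable (Mphi n φ g) := by
  apply LowerSemicontinuous.measurable
  intro x y hy
  rw [Mphi] at hy
  obtain ⟨t0, ht0⟩ := exists_lt_of_lt_ciSup hy
  have hcont : Continuous (fun z => |phiConv n φ g t0.1 z|) :=
    (phiConv_continuous hgmeas hgB hφc hφs t0.2).abs
  have hev : ∀ᶠ z in nhds x, y < |phiConv n φ g t0.1 z| :=
    (hcont.continuousAt (x := x)).eventually (eventually_gt_nhds ht0)
  filter_upwards [hev] with z hz
  exact lt_of_lt_of_le hz (le_ciSup (Mphi_bddAbove hgB hφc hφs z) t0)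

end MphiFacts

section Dominated

variable {n : ℕ}

lemma summable_lamMMaj (hn : 1 ≤ n) {lam : (Fin n → ℤ) → ℝ}
    (habs : Summable (fun j => |lam j|)) {C0 : ℝ} (hC00 : 0 ≤ C0) (x : En n) :
    Summable (fun j : Fin n → ℤ => |lam j| * MMaj n C0 j x) := by
  apply Summable.of_nonneg_of_le
    (fun j => mul_nonneg (abs_nonneg _) (MMaj_nonneg hn hC00 j x))
    (fun j => mul_le_mul_of_nonneg_left (MMaj_le hn hC00 j x) (abs_nonneg _))
    (habs.mul_right (C0 * 5))

lemma phiConv_g_dominated (hn : 1 ≤ n) {θ φ : En n → ℝ} {Cθ A : ℝ} {L : NNReal}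
    (hθmeas : Measurable θ) (hθCb : ∀ x, |θ x| ≤ Cθ)
    (hθsupp : ∀ x, x ∉ unitQ n → θ x = 0) (hθint : (∫ x, θ x) = 1)
    (hφc : Continuous φ) (hφs : ∀ u, u ∉ closedBall (0 : En n) 1 → φ u = 0)
    (hA : ∀ u, |φ u| ≤ A) (hL : LipschitzWith L φ)
    {C0 : ℝ}
    (hC1 : (1 + Cθ) * (∫ u, |φ u|) ≤ C0)
    (hC2 : A * 2 ^ n * (1 + Cθ) ≤ C0)
    (hC3 : (L : ℝ) * (1 + Cθ) * 2 ^ (n+1) ≤ C0)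
    {lam : (Fin n → ℤ) → ℝ} (habs : Summable (fun j => |lam j|))
    {t : ℝ} (ht : 0 < t) (x : En n) :
    |phiConv n φ (fun y => ∑' j : Fin n → ℤ,
        lam j * ((Qk n j).indicator (1 : En n → ℝ) y - θ y)) t x|
      ≤ ∑' j : Fin n → ℤ, |lam j| * MMaj n C0 j x := by
  have hCθ0 : 0 ≤ Cθ := Cθ_nonneg hθCb
  have hIφ0 : 0 ≤ ∫ u, |φ u| := integral_nonneg fun u => abs_nonneg _
  have hC00 : 0 ≤ C0 := le_trans (by positivity) hC1
  -- split the convolution over the atoms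
  have hmeas : ∀ j : Fin n → ℤ, AEStronglyMeasurable
      (fun y => lam j * ((t ^ n)⁻¹ * φ (t⁻¹ • (x - y)) * bAtom n θ j y)) volume :=
    fun j => ((((kern_cont hφc t x).measurable).mul
      (bAtom_measurable hθmeas j)).const_mul (lam j)).aestronglyMeasurable
  have hIK := (kern_integrable hφc hφs ht x).hasFiniteIntegral
  rw [hasFiniteIntegral_iff_norm] at hIK
  have hlint : (∑' j : Fin n → ℤ, ∫⁻ y,
      ‖lam j * ((t ^ n)⁻¹ * φ (t⁻¹ • (x - y)) * bAtom n θ j y)‖₊ ∂volume) ≠ ⊤ := by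
    have hbound : ∀ j : Fin n → ℤ, (∫⁻ y,
        ‖lam j * ((t ^ n)⁻¹ * φ (t⁻¹ • (x - y)) * bAtom n θ j y)‖₊ ∂volume)
        ≤ ENNReal.ofReal (|lam j| * (1 + Cθ))
          * ∫⁻ y, ENNReal.ofReal ‖(t ^ n)⁻¹ * φ (t⁻¹ • (x - y))‖ ∂volume := by
      intro j
      rw [← lintegral_const_mul _ ((kern_cont hφc t x).measurable.norm.ennreal_ofReal)]
      apply lintegral_mono
      intro y
      show (‖lam j * ((t ^ n)⁻¹ * φ (t⁻¹ • (x - y)) * bAtom n θ j y)‖₊ : ℝ≥0∞)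
        ≤ ENNReal.ofReal (|lam j| * (1 + Cθ))
          * ENNReal.ofReal ‖(t ^ n)⁻¹ * φ (t⁻¹ • (x - y))‖
      rw [← ENNReal.ofReal_coe_nnreal, coe_nnnorm, ← ENNReal.ofReal_mul (by positivity)]
      apply ENNReal.ofReal_le_ofReal
      rw [Real.norm_eq_abs, Real.norm_eq_abs, abs_mul, abs_mul]
      have hb := bAtom_abs_le hθCb j y
      have h1 : |(t ^ n)⁻¹ * φ (t⁻¹ • (x - y))| * |bAtom n θ j y|
          ≤ |(t ^ n)⁻¹ * φ (t⁻¹ • (x - y))| * (1 + Cθ) :=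
        mul_le_mul_of_nonneg_left hb (abs_nonneg _)
      calc |lam j| * (|(t ^ n)⁻¹ * φ (t⁻¹ • (x - y))| * |bAtom n θ j y|)
          ≤ |lam j| * (|(t ^ n)⁻¹ * φ (t⁻¹ • (x - y))| * (1 + Cθ)) :=
            mul_le_mul_of_nonneg_left h1 (abs_nonneg _)
      _ = |lam j| * (1 + Cθ) * |(t ^ n)⁻¹ * φ (t⁻¹ • (x - y))| := by ring
    apply ne_of_lt
    calc (∑' j : Fin n → ℤ, ∫⁻ y,
        ‖lam j * ((t ^ n)⁻¹ * φ (t⁻¹ • (x - y)) * bAtom n θ j y)‖₊ ∂volume)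
        ≤ ∑' j : Fin n → ℤ, ENNReal.ofReal (|lam j| * (1 + Cθ))
          * ∫⁻ y, ENNReal.ofReal ‖(t ^ n)⁻¹ * φ (t⁻¹ • (x - y))‖ ∂volume :=
          ENNReal.tsum_le_tsum hbound
    _ = (∑' j : Fin n → ℤ, ENNReal.ofReal (|lam j| * (1 + Cθ)))
          * ∫⁻ y, ENNReal.ofReal ‖(t ^ n)⁻¹ * φ (t⁻¹ • (x - y))‖ ∂volume :=
          ENNReal.tsum_mul_right
    _ = ENNReal.ofReal (∑' j : Fin n → ℤ, |lam j| * (1 + Cθ))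
          * ∫⁻ y, ENNReal.ofReal ‖(t ^ n)⁻¹ * φ (t⁻¹ • (x - y))‖ ∂volume := by
          rw [ENNReal.ofReal_tsum_of_nonneg (fun j => by positivity) (habs.mul_right _)]
    _ < ⊤ := ENNReal.mul_lt_top ENNReal.ofReal_lt_top hIK
  have hsplit : phiConv n φ (fun y => ∑' j : Fin n → ℤ,
      lam j * ((Qk n j).indicator (1 : En n → ℝ) y - θ y)) t x
      = ∑' j : Fin n → ℤ, lam j * phiConv n φ (bAtom n θ j) t x := by
    rw [phiConv]
    have hre : (fun y => (t ^ n)⁻¹ * φ (t⁻¹ • (x - y)) * ∑' j : Fin n → ℤ,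
        lam j * ((Qk n j).indicator (1 : En n → ℝ) y - θ y))
        = fun y => ∑' j : Fin n → ℤ,
          lam j * ((t ^ n)⁻¹ * φ (t⁻¹ • (x - y)) * bAtom n θ j y) := by
      funext y
      rw [← tsum_mul_left]
      exact tsum_congr fun j => by unfold bAtom; ring
    rw [hre, integral_tsum hmeas hlint]
    exact tsum_congr fun j => integral_const_mul _ _
  rw [hsplit]
  have hpcb : ∀ j : Fin n → ℤ, |phiConv n φ (bAtom n θ j) t x| ≤ MMaj n C0 j x :=
    fun j => key_estimate hn hθmeas hθCb hθsupp hθint hφc hφs hA hL hC1 hC2 hC3 j ht x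
  have hub : ∀ j : Fin n → ℤ, |lam j| * |phiConv n φ (bAtom n θ j) t x|
      ≤ |lam j| * MMaj n C0 j x := fun j =>
    mul_le_mul_of_nonneg_left (hpcb j) (abs_nonneg _)
  have hsum2 := summable_lamMMaj hn habs hC00 x
  have hsum1 : Summable (fun j : Fin n → ℤ =>
      |lam j| * |phiConv n φ (bAtom n θ j) t x|) :=
    Summable.of_nonneg_of_le (fun j => mul_nonneg (abs_nonneg _) (abs_nonneg _)) hub hsum2
  calc |∑' j : Fin n → ℤ, lam j * phiConv n φ (bAtom n θ j) t x|
      ≤ ∑' j : Fin n → ℤ, |lam j| * |phiConv n φ (bAtom n θ j) t x| := by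
        have := norm_tsum_le_tsum_norm (f := fun j : Fin n → ℤ =>
          lam j * phiConv n φ (bAtom n θ j) t x)
          (by simpa [Real.norm_eq_abs, abs_mul] using hsum1)
        simpa [Real.norm_eq_abs, abs_mul] using this
  _ ≤ ∑' j : Fin n → ℤ, |lam j| * MMaj n C0 j x := Summable.tsum_le_tsum hub hsum1 hsum2

end Dominated

end H1aux

open H1aux

/-- **Proposition (sufficiency for the lattice part).**
If `∑_j |λ_j| (1 + ln₊|j|) < ∞`, then `g = ∑_j λ_j (χ_{Q_j} - θ)` belongs to
`H^1(ℝ^n)`. -/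
theorem lattice_part_sufficient (n : ℕ) (hn : 1 ≤ n) (θ : En n → ℝ)
    (hθmeas : Measurable θ) (hθbdd : ∃ C, ∀ x, |θ x| ≤ C)
    (hθsupp : ∀ x, x ∉ unitQ n → θ x = 0) (hθint : (∫ x, θ x) = 1)
    (lam : (Fin n → ℤ) → ℝ)
    (hsum : Summable (fun j => |lam j| * (1 + lnp ‖zv n j‖))) :
    MemH1 n (fun x => ∑' j : Fin n → ℤ,
      lam j * ((Qk n j).indicator (1 : En n → ℝ) x - θ x)) := by
  intro φ hφ
  obtain ⟨hφsmooth, hφs, hφint⟩ := hφ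
  have hφc : Continuous φ := hφsmooth.continuous
  have hφhcs : HasCompactSupport φ :=
    HasCompactSupport.intro (isCompact_closedBall (0 : En n) 1) hφs
  obtain ⟨A, hA⟩ : ∃ A, ∀ u, |φ u| ≤ A := by
    obtain ⟨A, hA⟩ := hφhcs.exists_bound_of_continuous hφc
    exact ⟨A, fun u => by simpa [Real.norm_eq_abs] using hA u⟩
  obtain ⟨L, hL⟩ : ∃ L : NNReal, LipschitzWith L φ :=
    hφsmooth.lipschitzWith_of_hasCompactSupport hφhcs (by simp)
  obtain ⟨Cθ, hθCb⟩ := hθbdd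
  have hCθ0 : 0 ≤ Cθ := Cθ_nonneg hθCb
  have hIφ0 : 0 ≤ ∫ u, |φ u| := integral_nonneg fun u => abs_nonneg _
  have hA0 : 0 ≤ A := le_trans (abs_nonneg _) (hA 0)
  have hL0 : (0:ℝ) ≤ (L : ℝ) := L.2
  set C0 : ℝ := (1 + Cθ) * (∫ u, |φ u|) + A * 2 ^ n * (1 + Cθ)
      + (L : ℝ) * (1 + Cθ) * 2 ^ (n+1) with hC0def
  have hterm2 : 0 ≤ A * 2 ^ n * (1 + Cθ) := by positivity
  have hterm3 : 0 ≤ (L : ℝ) * (1 + Cθ) * 2 ^ (n+1) := by positivity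
  have hterm1 : 0 ≤ (1 + Cθ) * (∫ u, |φ u|) := by positivity
  have hC1 : (1 + Cθ) * (∫ u, |φ u|) ≤ C0 := by rw [hC0def]; linarith
  have hC2 : A * 2 ^ n * (1 + Cθ) ≤ C0 := by rw [hC0def]; linarith
  have hC3 : (L : ℝ) * (1 + Cθ) * 2 ^ (n+1) ≤ C0 := by rw [hC0def]; linarith
  have hC00 : 0 ≤ C0 := le_trans hterm1 hC1
  have habs : Summable (fun j => |lam j|) := by
    apply Summable.of_nonneg_of_le (fun j => abs_nonneg _) _ hsum
    intro j
    exact le_mul_of_one_le_right (abs_nonneg _) (by linarith [lnp_nonneg ‖zv n j‖])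
  obtain ⟨C2, hC20, hC2b⟩ := exists_MMaj_bound hn hC00
  set g : En n → ℝ := fun x => ∑' j : Fin n → ℤ,
    lam j * ((Qk n j).indicator (1 : En n → ℝ) x - θ x) with hgdef
  have hgmeas : Measurable g := g_measurable habs.of_abs θ hθmeas
  have hgB : ∀ x, |g x| ≤ (∑' j : Fin n → ℤ, |lam j|) * (1 + Cθ) :=
    fun x => g_bounded habs hθCb x
  haveI : Nonempty {t : ℝ // 0 < t} := ⟨⟨1, one_pos⟩⟩
  refine ⟨(Mphi_measurable hgmeas hgB hφc hφs).aestronglyMeasurable, ?_⟩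
  rw [hasFiniteIntegral_iff_norm]
  have hsumC2 : Summable (fun j : Fin n → ℤ => |lam j| * (C2 * (1 + lnp ‖zv n j‖))) := by
    have heq : (fun j : Fin n → ℤ => |lam j| * (C2 * (1 + lnp ‖zv n j‖)))
        = fun j => C2 * (|lam j| * (1 + lnp ‖zv n j‖)) := funext fun j => by ring
    rw [heq]
    exact hsum.mul_left C2
  have hpt : ∀ a : En n, ENNReal.ofReal ‖Mphi n φ g a‖
      ≤ ∑' j : Fin n → ℤ, ENNReal.ofReal |lam j| * ENNReal.ofReal (MMaj n C0 j a) := by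
    intro a
    rw [Real.norm_eq_abs, abs_of_nonneg (Mphi_nonneg g a)]
    have hM : Mphi n φ g a ≤ ∑' j : Fin n → ℤ, |lam j| * MMaj n C0 j a := by
      apply ciSup_le
      intro tp
      exact phiConv_g_dominated hn hθmeas hθCb hθsupp hθint hφc hφs hA hL
        hC1 hC2 hC3 habs tp.2 a
    calc ENNReal.ofReal (Mphi n φ g a)
        ≤ ENNReal.ofReal (∑' j : Fin n → ℤ, |lam j| * MMaj n C0 j a) :=
          ENNReal.ofReal_le_ofReal hM
    _ = ∑' j : Fin n → ℤ, ENNReal.ofReal (|lam j| * MMaj n C0 j a) :=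
          ENNReal.ofReal_tsum_of_nonneg
            (fun j => mul_nonneg (abs_nonneg _) (MMaj_nonneg hn hC00 j a))
            (summable_lamMMaj hn habs hC00 a)
    _ = ∑' j : Fin n → ℤ, ENNReal.ofReal |lam j| * ENNReal.ofReal (MMaj n C0 j a) :=
          tsum_congr fun j => ENNReal.ofReal_mul (abs_nonneg _)
  calc (∫⁻ a, ENNReal.ofReal ‖Mphi n φ g a‖ ∂volume)
      ≤ ∫⁻ a, ∑' j : Fin n → ℤ,
          ENNReal.ofReal |lam j| * ENNReal.ofReal (MMaj n C0 j a) ∂volume :=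
        lintegral_mono hpt
  _ = ∑' j : Fin n → ℤ, ∫⁻ a,
        ENNReal.ofReal |lam j| * ENNReal.ofReal (MMaj n C0 j a) ∂volume :=
        lintegral_tsum fun j =>
          (((measurable_MMaj C0 j).ennreal_ofReal).const_mul _).aemeasurable
  _ = ∑' j : Fin n → ℤ, ENNReal.ofReal |lam j|
        * ∫⁻ a, ENNReal.ofReal (MMaj n C0 j a) ∂volume :=
        tsum_congr fun j => lintegral_const_mul _ (measurable_MMaj C0 j).ennreal_ofReal
  _ ≤ ∑' j : Fin n → ℤ, ENNReal.ofReal |lam j|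
        * ENNReal.ofReal (C2 * (1 + lnp ‖zv n j‖)) := by
        apply ENNReal.tsum_le_tsum
        intro j
        apply mul_le_mul_right
        rw [← ofReal_integral_eq_lintegral_ofReal (MMaj_integrable hn C0 j)
          (ae_of_all _ fun x => MMaj_nonneg hn hC00 j x)]
        exact ENNReal.ofReal_le_ofReal (hC2b j)
  _ = ∑' j : Fin n → ℤ, ENNReal.ofReal (|lam j| * (C2 * (1 + lnp ‖zv n j‖))) :=
        tsum_congr fun j => (ENNReal.ofReal_mul (abs_nonneg _)).symm
  _ = ENNReal.ofReal (∑' j : Fin n → ℤ, |lam j| * (C2 * (1 + lnp ‖zv n j‖))) :=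
        (ENNReal.ofReal_tsum_of_nonneg
          (fun j => mul_nonneg (abs_nonneg _) (mul_nonneg (le_trans hC20 (le_refl C2)) (by linarith [lnp_nonneg ‖zv n j‖])))
          hsumC2).symm
  _ < ⊤ := ENNReal.ofReal_lt_top
end
end

section
/- Let n ≥ 1. There is a constant C = C(n) such that for every k ∈ ℤ^n and every integrable function f_k supported in the cube k + Q with μ_k := ‖f_k‖_{L^1} ≤ 1, one has ∫_{k+2Q} Ψ(x, M f_k(x)) dx ≤ C [ μ_k/ln(e+|k|) + (μ_k/ln(e+|k|))·ln₊(1/μ_k) + ∫_{k+Q} |f_k(x)| ( 1 + ln₊( ln(e+|f_k(x)|) / ln(e+|k|) ) ) dx ], where M denotes the Hardy–Littlewood maximal function M f(x) = sup_{r>0} r^{-n} ∫_{|y-x|<r} |f(y)| dy. -/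
open MeasureTheory Real Set Metric ENNReal

noncomputable section

/-- The Musielak function `Ψ(x,t) = t / (ln(e+t) + ln(e+|x|))` defining `L_log`. -/
def Psi (n : ℕ) (x : En n) (t : ℝ) : ℝ :=
  t / (Real.log (Real.exp 1 + t) + Real.log (Real.exp 1 + ‖x‖))

/-- The (global) Hardy–Littlewood maximal function
`M f(x) = sup_{r>0} r^{-n} ∫_{|y-x|<r} |f(y)| dy`. -/
def Mglob (n : ℕ) (f : En n → ℝ) (x : En n) : ℝ :=
  ⨆ r : {r : ℝ // 0 < r}, ((r : ℝ) ^ n)⁻¹ * ∫ y in Metric.ball x (r : ℝ), |f y|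

/-- The cube `k + 2Q` of side `2` centered at `k`. -/
def Q2k (n : ℕ) (k : Fin n → ℤ) : Set (En n) :=
  {x | ∀ i, (k i : ℝ) - 1 < x i ∧ x i < (k i : ℝ) + 1}

/-! ### Auxiliary definitions and lemmas for the proof -/

/-- ENNReal-valued average at radius `r`. -/
def avE (n : ℕ) (g : En n → ℝ) (x : En n) (r : ℝ) : ℝ≥0∞ :=
  (ENNReal.ofReal (r ^ n))⁻¹ * ∫⁻ y in Metric.ball x r, ENNReal.ofReal |g y|

/-- ENNReal maximal function over positive rational radii. -/
def MQ (n : ℕ) (g : En n → ℝ) (x : En n) : ℝ≥0∞ :=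
  ⨆ q : {q : ℚ // 0 < q}, avE n g x (q : ℝ)

lemma measurable_avE (n : ℕ) (g : En n → ℝ) (hg : Measurable g) (r : ℝ) :
    Measurable (fun x => avE n g x r) := by
  apply Measurable.const_mul
  have : (fun x => ∫⁻ y in Metric.ball x r, ENNReal.ofReal |g y|) =
      fun x => ∫⁻ y, (Metric.ball x r).indicator (fun y => ENNReal.ofReal |g y|) y := by
    ext x; rw [lintegral_indicator measurableSet_ball]
  rw [this]
  have := Measurable.lintegral_prod_right (ν := (volume : Measure (En n)))
    (f := fun (x : En n) (y : En n) =>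
      (Metric.ball x r).indicator (fun y => ENNReal.ofReal |g y|) y)
  apply this
  rw [Function.uncurry_def]
  have : (fun p : En n × En n => (Metric.ball p.1 r).indicator
      (fun y => ENNReal.ofReal |g y|) p.2) =
      {p : En n × En n | dist p.2 p.1 < r}.indicator
        (fun p => ENNReal.ofReal |g p.2|) := by
    ext p
    by_cases h : dist p.2 p.1 < r
    · simp [Set.indicator_of_mem, h, Metric.mem_ball, Set.mem_setOf_eq]
    · simp [Set.indicator_of_notMem, h, Metric.mem_ball, Set.mem_setOf_eq]
  rw [this]
  apply Measurable.indicator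
  · exact (ENNReal.measurable_ofReal.comp ((measurable_abs.comp hg).comp measurable_snd))
  · exact measurableSet_lt (measurable_dist.comp (measurable_snd.prodMk measurable_fst))
      measurable_const

lemma measurable_MQ (n : ℕ) (g : En n → ℝ) (hg : Measurable g) : Measurable (MQ n g) :=
  Measurable.iSup fun q => measurable_avE n g hg _

lemma avE_eq_ofReal (n : ℕ) (f : En n → ℝ) (hf : Integrable f) (x : En n) {r : ℝ} (hr : 0 < r) :
    avE n f x r = ENNReal.ofReal ((r ^ n)⁻¹ * ∫ y in Metric.ball x r, |f y|) := by
  rw [ENNReal.ofReal_mul (by positivity)]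
  rw [ofReal_integral_eq_lintegral_ofReal (hf.abs.integrableOn)
    (Filter.Eventually.of_forall fun y => abs_nonneg _)]
  rw [ENNReal.ofReal_inv_of_pos (by positivity)]
  rfl

lemma Mglob_nonneg (n : ℕ) (f : En n → ℝ) (x : En n) : 0 ≤ Mglob n f x := by
  rw [Mglob]
  rcases isEmpty_or_nonempty {r : ℝ // 0 < r} with h | h
  · rw [iSup_of_empty']; simp [Real.sSup_empty]
  by_cases hb : BddAbove (Set.range fun r : {r : ℝ // 0 < r} =>
      ((r : ℝ) ^ n)⁻¹ * ∫ y in Metric.ball x (r : ℝ), |f y|)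
  · refine le_ciSup_of_le hb ⟨1, one_pos⟩ ?_
    positivity
  · rw [Real.iSup_of_not_bddAbove hb]

lemma term_nonneg (n : ℕ) (f : En n → ℝ) (x : En n) {r : ℝ} (hr : 0 ≤ r) :
    0 ≤ ((r : ℝ) ^ n)⁻¹ * ∫ y in Metric.ball x (r : ℝ), |f y| := by
  have : 0 ≤ ∫ y in Metric.ball x (r : ℝ), |f y| :=
    integral_nonneg fun y => abs_nonneg _
  positivity

lemma term_le_toReal (n : ℕ) (f : En n → ℝ) (hf : Integrable f) (x : En n)
    {q : ℚ} (hq : 0 < q) (hfin : MQ n f x ≠ ⊤) :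
    ((q : ℝ) ^ n)⁻¹ * ∫ y in Metric.ball x (q : ℝ), |f y| ≤ (MQ n f x).toReal := by
  have h1 : avE n f x (q : ℝ) ≤ MQ n f x :=
    le_iSup (fun p : {q : ℚ // 0 < q} => avE n f x (p : ℝ)) ⟨q, hq⟩
  rw [avE_eq_ofReal n f hf x (by exact_mod_cast hq)] at h1
  have := ENNReal.toReal_mono hfin h1
  rwa [ENNReal.toReal_ofReal (term_nonneg n f x (by positivity))] at this

lemma Mglob_le_toReal_MQ (n : ℕ) (f : En n → ℝ) (hf : Integrable f) (x : En n) :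
    Mglob n f x ≤ (MQ n f x).toReal := by
  by_cases hfin : MQ n f x = ⊤
  · rw [hfin, ENNReal.toReal_top]
    by_cases hb : BddAbove (Set.range fun r : {r : ℝ // 0 < r} =>
        ((r : ℝ) ^ n)⁻¹ * ∫ y in Metric.ball x (r : ℝ), |f y|)
    · exfalso
      obtain ⟨c, hc⟩ := hb
      have hc' : ∀ q : {q : ℚ // 0 < q}, avE n f x (q : ℝ) ≤ ENNReal.ofReal c := by
        intro q
        rw [avE_eq_ofReal n f hf x (by exact_mod_cast q.2)]
        apply ENNReal.ofReal_le_ofReal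
        exact hc ⟨⟨(q : ℝ), by exact_mod_cast q.2⟩, rfl⟩
      have : MQ n f x ≤ ENNReal.ofReal c := iSup_le hc'
      rw [hfin] at this
      exact ENNReal.ofReal_ne_top (le_antisymm le_top this)
    · rw [Mglob, Real.iSup_of_not_bddAbove hb]
  rw [Mglob]
  rcases isEmpty_or_nonempty {r : ℝ // 0 < r} with h | h
  · rw [iSup_of_empty']; simp [Real.sSup_empty, ENNReal.toReal_nonneg]
  apply ciSup_le
  rintro ⟨r, hr⟩
  set A := (MQ n f x).toReal with hA
  have key : ∀ q : ℚ, r < (q : ℝ) →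
      ((r : ℝ) ^ n)⁻¹ * ∫ y in Metric.ball x r, |f y| ≤ ((q : ℝ) / r) ^ n * A := by
    intro q hq
    have hq0 : (0 : ℝ) < (q : ℝ) := lt_trans hr hq
    have hq0' : (0 : ℚ) < q := by exact_mod_cast hq0
    have hmono : ∫ y in Metric.ball x r, |f y| ≤ ∫ y in Metric.ball x (q : ℝ), |f y| := by
      apply setIntegral_mono_set hf.abs.integrableOn
        (Filter.Eventually.of_forall fun y => abs_nonneg _)
      exact HasSubset.Subset.eventuallyLE (Metric.ball_subset_ball hq.le)
    have h2 : ((q : ℝ) ^ n)⁻¹ * ∫ y in Metric.ball x (q : ℝ), |f y| ≤ A :=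
      term_le_toReal n f hf x hq0' hfin
    calc ((r : ℝ) ^ n)⁻¹ * ∫ y in Metric.ball x r, |f y|
        ≤ ((r : ℝ) ^ n)⁻¹ * ∫ y in Metric.ball x (q : ℝ), |f y| := by
          apply mul_le_mul_of_nonneg_left hmono (by positivity)
      _ = ((q : ℝ) / r) ^ n * (((q : ℝ) ^ n)⁻¹ * ∫ y in Metric.ball x (q : ℝ), |f y|) := by
          rw [div_pow]; field_simp
      _ ≤ ((q : ℝ) / r) ^ n * A := by
          apply mul_le_mul_of_nonneg_left h2 (by positivity)
  have hcont : Filter.Tendsto (fun q : ℝ => (q / r) ^ n * A) (nhdsWithin r (Set.Ioi r))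
      (nhds A) := by
    have : Filter.Tendsto (fun q : ℝ => (q / r) ^ n * A) (nhds r) (nhds ((r / r) ^ n * A)) := by
      apply Filter.Tendsto.mul_const
      apply Filter.Tendsto.pow
      exact (continuous_id.div_const r).tendsto r
    rw [div_self hr.ne', one_pow, one_mul] at this
    exact this.mono_left nhdsWithin_le_nhds
  have hfreq : ∃ᶠ q in nhdsWithin r (Set.Ioi r),
      (fun v : ℝ => (v / r) ^ n * A) q ∈
        Set.Ici (((r : ℝ) ^ n)⁻¹ * ∫ y in Metric.ball x r, |f y|) := by
    rw [(nhdsGT_basis r).frequently_iff]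
    intro u hu
    obtain ⟨q, hq1, hq2⟩ := exists_rat_btwn hu
    exact ⟨(q : ℝ), ⟨hq1, hq2⟩, key q hq1⟩
  exact isClosed_Ici.mem_of_frequently_of_tendsto hfreq hcont

lemma MQ_weak (n : ℕ) (hn : 1 ≤ n) (g : En n → ℝ) {s : ℝ} (hs : 0 < s) :
    volume {x | ENNReal.ofReal s ≤ MQ n g x} ≤
      ENNReal.ofReal (4 ^ n) * volume (ball (0 : En n) 1) * (ENNReal.ofReal (s / 2))⁻¹ *
        ∫⁻ y, ENNReal.ofReal |g y| := by
  set Vb := volume (ball (0 : En n) 1) with hVb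
  have hVb0 : Vb ≠ 0 := (measure_ball_pos _ _ one_pos).ne'
  have hVbt : Vb ≠ ⊤ := measure_ball_lt_top.ne
  set ν := ∫⁻ y, ENNReal.ofReal |g y| with hν
  set K := ENNReal.ofReal (4 ^ n) * Vb * (ENNReal.ofReal (s / 2))⁻¹ with hK
  have hK0 : K ≠ 0 := by
    rw [hK]
    apply mul_ne_zero (mul_ne_zero _ hVb0)
    · simp [ENNReal.inv_ne_zero]
    · simp only [ne_eq, ENNReal.ofReal_eq_zero, not_le]; positivity
  by_cases hνt : ν = ⊤
  · rw [hνt, ENNReal.mul_top hK0]; exact le_top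
  set E := {x | ENNReal.ofReal s ≤ MQ n g x} with hE
  have hs2 : (0:ℝ) < s / 2 := by positivity
  have hchoice : ∀ a ∈ E, ∃ q : ℚ, 0 < (q : ℝ) ∧
      ENNReal.ofReal (s / 2) * ENNReal.ofReal ((q : ℝ) ^ n) <
        ∫⁻ y in Metric.ball a (q : ℝ), ENNReal.ofReal |g y| := by
    intro a ha
    have h1 : ENNReal.ofReal (s / 2) < MQ n g a :=
      lt_of_lt_of_le (ENNReal.ofReal_lt_ofReal_iff hs |>.2 (by linarith)) ha
    rw [MQ, lt_iSup_iff] at h1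
    obtain ⟨⟨q, hq⟩, hlt⟩ := h1
    refine ⟨q, by exact_mod_cast hq, ?_⟩
    rw [avE] at hlt
    have hqn : (0:ℝ) < (q:ℝ)^n := by positivity
    rw [← ENNReal.div_eq_inv_mul] at hlt
    have := (ENNReal.lt_div_iff_mul_lt (Or.inl (by simp [hqn] : ENNReal.ofReal ((q:ℝ)^n) ≠ 0))
      (Or.inl ENNReal.ofReal_ne_top)).1 hlt
    simpa using this
  choose! ρq hρ0 hρbig using hchoice
  set ρ : En n → ℝ := fun a => (ρq a : ℝ) with hρdef
  set c0 : ℝ := max 1 (2 / s * ν.toReal) with hc0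
  have hρle : ∀ a ∈ E, ρ a ≤ c0 := by
    intro a ha
    have h1 : ENNReal.ofReal (s / 2) * ENNReal.ofReal (ρ a ^ n) ≤ ν :=
      le_trans (hρbig a ha).le (setLIntegral_le_lintegral _ _)
    rw [← ENNReal.ofReal_mul hs2.le] at h1
    have h2 : s / 2 * ρ a ^ n ≤ ν.toReal := by
      rw [← ENNReal.ofReal_le_iff_le_toReal hνt] at *; exact h1
    have h3 : ρ a ^ n ≤ 2 / s * ν.toReal := by
      rw [div_mul_eq_mul_div, le_div_iff₀ hs]
      calc ρ a ^ n * s = s / 2 * ρ a ^ n * 2 := by ring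
        _ ≤ ν.toReal * 2 := by linarith
        _ = 2 * ν.toReal := by ring
    by_cases hρ1 : ρ a ≤ 1
    · exact le_trans hρ1 (le_max_left _ _)
    · push_neg at hρ1
      refine le_trans ?_ (le_max_right _ _)
      calc ρ a ≤ ρ a ^ n := le_self_pow₀ hρ1.le (by omega)
        _ ≤ 2 / s * ν.toReal := h3
  obtain ⟨u, huE, hdisj, hcover⟩ :=
    Vitali.exists_disjoint_subfamily_covering_enlargement_closedBall E id ρ c0 hρle 4
      (by norm_num)
  have hucnt : u.Countable := by
    apply Set.PairwiseDisjoint.countable_of_nonempty_interior hdisj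
    intro b hb
    have hb0 : 0 < ρ b := hρ0 b (huE hb)
    have h1 : Metric.ball b (ρ b) ⊆ interior (Metric.closedBall (id b) (ρ b)) := by
      rw [← Metric.isOpen_ball.interior_eq]
      exact interior_mono Metric.ball_subset_closedBall
    exact (Metric.nonempty_ball.2 hb0).mono h1
  have hEcover : E ⊆ ⋃ b ∈ u, Metric.closedBall b (4 * ρ b) := by
    intro a ha
    obtain ⟨b, hbu, hsub⟩ := hcover a ha
    have : a ∈ Metric.closedBall (id a) (ρ a) :=
      Metric.mem_closedBall_self (hρ0 a ha).le
    exact Set.mem_biUnion hbu (hsub this)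
  calc volume E ≤ volume (⋃ b ∈ u, Metric.closedBall b (4 * ρ b)) :=
        measure_mono hEcover
    _ ≤ ∑' b : u, volume (Metric.closedBall (b : En n) (4 * ρ b)) :=
        measure_biUnion_le volume hucnt _
    _ ≤ ∑' b : u, K * ∫⁻ y in Metric.ball (b : En n) (ρ b), ENNReal.ofReal |g y| := by
        apply ENNReal.tsum_le_tsum
        rintro ⟨b, hbu⟩
        have hb0 : 0 < ρ b := hρ0 b (huE hbu)
        have hvol : volume (Metric.closedBall b (4 * ρ b)) =
            ENNReal.ofReal ((4 * ρ b) ^ n) * Vb := by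
          rw [MeasureTheory.Measure.addHaar_closedBall _ _ (by positivity),
            finrank_euclideanSpace_fin]
        rw [hvol]
        have h1 : ENNReal.ofReal (ρ b ^ n) ≤
            (∫⁻ y in Metric.ball b (ρ b), ENNReal.ofReal |g y|) / ENNReal.ofReal (s / 2) := by
          rw [ENNReal.le_div_iff_mul_le (Or.inl (by simp [hs2])) (Or.inl ENNReal.ofReal_ne_top)]
          rw [mul_comm]
          exact (hρbig b (huE hbu)).le
        calc ENNReal.ofReal ((4 * ρ b) ^ n) * Vb
            = ENNReal.ofReal (4 ^ n) * ENNReal.ofReal (ρ b ^ n) * Vb := by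
              rw [mul_pow, ENNReal.ofReal_mul (by positivity)]
          _ ≤ ENNReal.ofReal (4 ^ n) *
              ((∫⁻ y in Metric.ball b (ρ b), ENNReal.ofReal |g y|) / ENNReal.ofReal (s / 2)) *
              Vb := by
              gcongr
          _ = K * ∫⁻ y in Metric.ball (b : En n) (ρ b), ENNReal.ofReal |g y| := by
              rw [hK, ENNReal.div_eq_inv_mul]; ring
    _ = K * ∑' b : u, ∫⁻ y in Metric.ball (b : En n) (ρ b), ENNReal.ofReal |g y| :=
        ENNReal.tsum_mul_left
    _ ≤ K * ν := by
        gcongr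
        have hdisj' : u.PairwiseDisjoint fun b => Metric.ball b (ρ b) :=
          hdisj.mono_on fun b _ => Metric.ball_subset_closedBall
        rw [← lintegral_biUnion hucnt (fun b _ => measurableSet_ball) hdisj']
        exact setLIntegral_le_lintegral _ _

lemma MQ_trunc (n : ℕ) (hn : 1 ≤ n) (f : En n → ℝ) (hf : Measurable f) {t β : ℝ} (ht : 0 < t)
    (hβ : β * (volume (ball (0 : En n) 1)).toReal ≤ 1 / 2) (hβ0 : 0 < β) :
    {x | ENNReal.ofReal t ≤ MQ n f x} ⊆
      {x | ENNReal.ofReal (t / 2) ≤ MQ n (fun y => if β * t < |f y| then f y else 0) x} := by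
  haveI : Nonempty (Fin n) := ⟨⟨0, by omega⟩⟩
  set Vb := volume (ball (0 : En n) 1) with hVb
  have hVb0 : Vb ≠ 0 := (measure_ball_pos _ _ one_pos).ne'
  have hVbt : Vb ≠ ⊤ := measure_ball_lt_top.ne
  set g1 : En n → ℝ := fun y => if β * t < |f y| then f y else 0 with hg1
  set g2 : En n → ℝ := fun y => if β * t < |f y| then 0 else f y with hg2
  have hg1m : Measurable g1 := by
    apply Measurable.ite _ hf measurable_const
    exact measurableSet_lt measurable_const hf.abs
  have habs : ∀ y, |f y| ≤ |g1 y| + |g2 y| := by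
    intro y
    by_cases h : β * t < |f y| <;> simp [hg1, hg2, h]
  have hg2small : ∀ y, |g2 y| ≤ β * t := by
    intro y
    by_cases h : β * t < |f y|
    · simp [hg2, h]; positivity
    · push_neg at h
      simp only [hg2]
      rw [if_neg (not_lt.2 h)]
      exact h
  have hMQ2 : ∀ x, MQ n g2 x ≤ ENNReal.ofReal (t / 2) := by
    intro x
    apply iSup_le
    rintro ⟨q, hq⟩
    have hq0 : (0 : ℝ) < (q : ℝ) := by exact_mod_cast hq
    have h1 : (∫⁻ y in Metric.ball x (q : ℝ), ENNReal.ofReal |g2 y|) ≤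
        ENNReal.ofReal (β * t) * volume (Metric.ball x (q : ℝ)) := by
      calc (∫⁻ y in Metric.ball x (q : ℝ), ENNReal.ofReal |g2 y|)
          ≤ ∫⁻ _ in Metric.ball x (q : ℝ), ENNReal.ofReal (β * t) :=
            lintegral_mono fun y => ENNReal.ofReal_le_ofReal (hg2small y)
        _ = ENNReal.ofReal (β * t) * volume (Metric.ball x (q : ℝ)) := by
            rw [setLIntegral_const]
    have hball : volume (Metric.ball x (q : ℝ)) = ENNReal.ofReal ((q : ℝ) ^ n) * Vb := by
      rw [hVb, MeasureTheory.Measure.addHaar_ball _ _ hq0.le, finrank_euclideanSpace_fin]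
    rw [avE]
    calc (ENNReal.ofReal ((q:ℝ) ^ n))⁻¹ * ∫⁻ y in Metric.ball x (q : ℝ), ENNReal.ofReal |g2 y|
        ≤ (ENNReal.ofReal ((q:ℝ) ^ n))⁻¹ *
            (ENNReal.ofReal (β * t) * (ENNReal.ofReal ((q : ℝ) ^ n) * Vb)) := by
          rw [← hball]; exact mul_le_mul_right h1 _
      _ = ENNReal.ofReal (β * t) * Vb *
            ((ENNReal.ofReal ((q:ℝ) ^ n))⁻¹ * ENNReal.ofReal ((q : ℝ) ^ n)) := by ring
      _ = ENNReal.ofReal (β * t) * Vb := by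
          rw [ENNReal.inv_mul_cancel (by simp [hq0, pow_pos]) ENNReal.ofReal_ne_top, mul_one]
      _ ≤ ENNReal.ofReal (t / 2) := by
          rw [← ENNReal.ofReal_toReal hVbt, ← ENNReal.ofReal_mul (by positivity)]
          apply ENNReal.ofReal_le_ofReal
          calc β * t * Vb.toReal = t * (β * Vb.toReal) := by ring
            _ ≤ t * (1 / 2) := by
                apply mul_le_mul_of_nonneg_left hβ ht.le
            _ = t / 2 := by ring
  have hsub : ∀ x, MQ n f x ≤ MQ n g1 x + MQ n g2 x := by
    intro x
    apply iSup_le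
    rintro ⟨q, hq⟩
    have h1 : avE n f x (q : ℝ) ≤ avE n g1 x (q : ℝ) + avE n g2 x (q : ℝ) := by
      rw [avE, avE, avE, ← mul_add]
      apply mul_le_mul_right
      calc (∫⁻ y in Metric.ball x (q : ℝ), ENNReal.ofReal |f y|)
          ≤ ∫⁻ y in Metric.ball x (q : ℝ),
              (ENNReal.ofReal |g1 y| + ENNReal.ofReal |g2 y|) := by
            apply lintegral_mono fun y =>
              le_trans (ENNReal.ofReal_le_ofReal (habs y)) ENNReal.ofReal_add_le
        _ = (∫⁻ y in Metric.ball x (q : ℝ), ENNReal.ofReal |g1 y|) +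
            ∫⁻ y in Metric.ball x (q : ℝ), ENNReal.ofReal |g2 y| := by
            exact lintegral_add_left (ENNReal.measurable_ofReal.comp hg1m.abs) _
    refine le_trans h1 (add_le_add ?_ ?_)
    · exact le_iSup (fun p : {q : ℚ // 0 < q} => avE n g1 x (p : ℝ)) ⟨q, hq⟩
    · exact le_iSup (fun p : {q : ℚ // 0 < q} => avE n g2 x (p : ℝ)) ⟨q, hq⟩
  intro x hx
  simp only [Set.mem_setOf_eq] at hx ⊢
  have h2 : ENNReal.ofReal t ≤ MQ n g1 x + ENNReal.ofReal (t / 2) :=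
    le_trans hx (le_trans (hsub x) (add_le_add_right (hMQ2 x) _))
  have h3 : ENNReal.ofReal t - ENNReal.ofReal (t / 2) ≤ MQ n g1 x :=
    tsub_le_iff_right.2 h2
  rwa [← ENNReal.ofReal_sub _ (by positivity : (0:ℝ) ≤ t/2), show t - t / 2 = t / 2 by ring]
    at h3

lemma one_le_log_add (a : ℝ) (ha : 0 ≤ a) : 1 ≤ Real.log (Real.exp 1 + a) := by
  rw [Real.le_log_iff_exp_le (by positivity)]
  linarith

lemma zv_apply (n : ℕ) (k : Fin n → ℤ) (i : Fin n) : zv n k i = (k i : ℝ) := rfl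

lemma norm_zv_sub_le (n : ℕ) (hn : 1 ≤ n) (k : Fin n → ℤ) (x : En n) (hx : x ∈ Q2k n k) :
    ‖zv n k - x‖ ≤ n := by
  have h2 : ‖zv n k - x‖ = Real.sqrt (∑ i, ‖(zv n k - x) i‖ ^ 2) :=
    EuclideanSpace.norm_eq _
  rw [h2]
  have h3 : (∑ i, ‖(zv n k - x) i‖ ^ 2) ≤ (n : ℝ) := by
    calc (∑ i, ‖(zv n k - x) i‖ ^ 2) ≤ ∑ _i : Fin n, (1:ℝ) := by
          apply Finset.sum_le_sum
          intro i _
          have hxi := hx i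
          have hzi : (zv n k - x) i = (k i : ℝ) - x i := by
            simp [zv_apply]
          rw [hzi, Real.norm_eq_abs]
          have : |(k i : ℝ) - x i| ≤ 1 := by
            rw [abs_le]; constructor <;> [linarith [hxi.2]; linarith [hxi.1]]
          calc |(k i : ℝ) - x i| ^ 2 ≤ 1 ^ 2 := by
                apply pow_le_pow_left₀ (abs_nonneg _) this
            _ = 1 := one_pow 2
      _ = (n : ℝ) := by simp
  have h4 : (1:ℝ) ≤ (n:ℝ) := by exact_mod_cast hn
  calc Real.sqrt (∑ i, ‖(zv n k - x) i‖ ^ 2) ≤ Real.sqrt ((n:ℝ)^2) :=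
        Real.sqrt_le_sqrt (by nlinarith)
    _ = n := Real.sqrt_sq (by positivity)

lemma norm_zv_le (n : ℕ) (hn : 1 ≤ n) (k : Fin n → ℤ) (x : En n) (hx : x ∈ Q2k n k) :
    ‖zv n k‖ ≤ ‖x‖ + n := by
  have h1 : ‖zv n k - x‖ ≤ n := norm_zv_sub_le n hn k x hx
  calc ‖zv n k‖ = ‖zv n k - x + x‖ := by rw [sub_add_cancel]
    _ ≤ ‖zv n k - x‖ + ‖x‖ := norm_add_le _ _
    _ ≤ n + ‖x‖ := by linarith
    _ = ‖x‖ + n := by ring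

lemma ell_le (n : ℕ) (hn : 1 ≤ n) (k : Fin n → ℤ) (x : En n) (hx : x ∈ Q2k n k) :
    Real.log (Real.exp 1 + ‖zv n k‖) ≤
      (1 + Real.log (1 + n)) * Real.log (Real.exp 1 + ‖x‖) := by
  have hlogx : 1 ≤ Real.log (Real.exp 1 + ‖x‖) := one_le_log_add _ (norm_nonneg _)
  have hlogn : 0 ≤ Real.log (1 + n) := Real.log_nonneg (by norm_num)
  calc Real.log (Real.exp 1 + ‖zv n k‖) ≤ Real.log ((Real.exp 1 + ‖x‖) * (1 + n)) := by
        apply Real.log_le_log (by positivity)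
        have h1 : ‖zv n k‖ ≤ ‖x‖ + n := norm_zv_le n hn k x hx
        have h2 : (1:ℝ) ≤ Real.exp 1 + ‖x‖ := by
          have := Real.exp_one_gt_d9; have := norm_nonneg x; linarith
        nlinarith [(by exact_mod_cast hn : (1:ℝ) ≤ (n:ℝ))]
    _ = Real.log (Real.exp 1 + ‖x‖) + Real.log (1 + n) := by
        rw [Real.log_mul (by positivity) (by positivity)]
    _ ≤ (1 + Real.log (1 + n)) * Real.log (Real.exp 1 + ‖x‖) := by nlinarith

lemma Psi_le_integral (n : ℕ) (hn : 1 ≤ n) (k : Fin n → ℤ) (x : En n) (hx : x ∈ Q2k n k)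
    {m T : ℝ} (hm : 0 ≤ m) (hmT : m ≤ T) :
    Psi n x m ≤ (1 + Real.log (1 + n)) *
      ∫ s in (0:ℝ)..T, (Real.log (Real.exp 1 + s) + Real.log (Real.exp 1 + ‖zv n k‖))⁻¹ := by
  set ℓ := Real.log (Real.exp 1 + ‖zv n k‖) with hℓ
  set cψ := 1 + Real.log (1 + n) with hcψ
  have hℓ1 : 1 ≤ ℓ := one_le_log_add _ (norm_nonneg _)
  have hcψ1 : 1 ≤ cψ := by
    have : 0 ≤ Real.log (1 + n) := Real.log_nonneg (by norm_num)
    linarith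
  set γ : ℝ → ℝ := fun s => (Real.log (Real.exp 1 + s) + ℓ)⁻¹ with hγ
  have hγcont : ∀ {a b : ℝ}, 0 ≤ a → ContinuousOn γ (Set.Icc a b) := by
    intro a b ha
    apply ContinuousOn.inv₀
    · apply ContinuousOn.add _ continuousOn_const
      apply Real.continuousOn_log.comp (continuousOn_const.add continuousOn_id)
      intro s hs
      have : 0 ≤ s := le_trans ha hs.1
      have := Real.exp_pos 1
      simp only [Set.mem_compl_iff, Set.mem_singleton_iff]
      simp only [Pi.add_apply, id]; positivity
    · intro s hs
      have hs0 : 0 ≤ s := le_trans ha hs.1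
      have : 1 ≤ Real.log (Real.exp 1 + s) := one_le_log_add _ hs0
      positivity
  have hγint : ∀ {a b : ℝ}, 0 ≤ a → a ≤ b → IntervalIntegrable γ volume a b := by
    intro a b ha hab
    apply ContinuousOn.intervalIntegrable
    rw [Set.uIcc_of_le hab]
    exact hγcont ha
  have hγnn : ∀ s, 0 ≤ s → 0 ≤ γ s := by
    intro s hs
    have : 1 ≤ Real.log (Real.exp 1 + s) := one_le_log_add _ hs
    positivity
  have hA : 1 ≤ Real.log (Real.exp 1 + m) := one_le_log_add _ hm
  have hlogx : 1 ≤ Real.log (Real.exp 1 + ‖x‖) := one_le_log_add _ (norm_nonneg _)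
  have hkey : ℓ ≤ cψ * Real.log (Real.exp 1 + ‖x‖) := ell_le n hn k x hx
  have step1 : Psi n x m ≤ cψ * (m * γ m) := by
    rw [Psi, hγ]
    have hd1 : 0 < Real.log (Real.exp 1 + m) + Real.log (Real.exp 1 + ‖x‖) := by linarith
    have hd2 : 0 < Real.log (Real.exp 1 + m) + ℓ := by linarith
    rw [div_le_iff₀ hd1]
    have expand : cψ * (m * (Real.log (Real.exp 1 + m) + ℓ)⁻¹) *
        (Real.log (Real.exp 1 + m) + Real.log (Real.exp 1 + ‖x‖)) =
        cψ * m * (Real.log (Real.exp 1 + m) + Real.log (Real.exp 1 + ‖x‖)) /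
          (Real.log (Real.exp 1 + m) + ℓ) := by
      field_simp
    rw [expand, le_div_iff₀ hd2]
    have hcψ0 : 0 < cψ := by linarith
    nlinarith [mul_le_mul_of_nonneg_left hkey hm,
      mul_nonneg (mul_nonneg (sub_nonneg.2 hcψ1) hm) (le_trans zero_le_one hA)]
  have step2 : m * γ m ≤ ∫ s in (0:ℝ)..m, γ s := by
    have h1 : (∫ _ in (0:ℝ)..m, γ m) = m * γ m := by
      rw [intervalIntegral.integral_const, smul_eq_mul, sub_zero]
    rw [← h1]
    apply intervalIntegral.integral_mono_on hm
      (intervalIntegrable_const) (hγint le_rfl hm)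
    intro s hs
    rw [hγ]
    apply inv_anti₀
    · have h5 : 1 ≤ Real.log (Real.exp 1 + s) := one_le_log_add _ hs.1
      linarith
    · have : Real.log (Real.exp 1 + s) ≤ Real.log (Real.exp 1 + m) := by
        apply Real.log_le_log (by linarith [hs.1, Real.exp_pos 1])
        linarith [hs.2]
      linarith
  have step3 : (∫ s in (0:ℝ)..m, γ s) ≤ ∫ s in (0:ℝ)..T, γ s := by
    apply intervalIntegral.integral_mono_interval le_rfl hm hmT
    · apply Filter.eventually_of_mem (self_mem_ae_restrict measurableSet_Ioc)
      intro s hs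
      exact hγnn s hs.1.le
    · exact hγint le_rfl (le_trans hm hmT)
  calc Psi n x m ≤ cψ * (m * γ m) := step1
    _ ≤ cψ * ∫ s in (0:ℝ)..m, γ s := by
        apply mul_le_mul_of_nonneg_left step2 (by linarith)
    _ ≤ cψ * ∫ s in (0:ℝ)..T, γ s := by
        apply mul_le_mul_of_nonneg_left step3 (by linarith)

lemma lnp_nonneg (t : ℝ) : 0 ≤ lnp t := le_max_right _ _

lemma log_le_lnp (t : ℝ) : Real.log t ≤ lnp t := le_max_left _ _

lemma log_one_add_le {u : ℝ} (hu : 0 ≤ u) : Real.log (1 + u) ≤ 1 + lnp u := by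
  by_cases h : u ≤ 1
  · have h1 : Real.log (1 + u) ≤ Real.log 2 := by
      apply Real.log_le_log (by linarith)
      linarith
    have h2 : Real.log 2 ≤ 1 := by
      rw [← Real.log_exp 1]
      apply Real.log_le_log two_pos
      have := Real.exp_one_gt_d9; linarith
    linarith [lnp_nonneg u]
  · push_neg at h
    have h1 : Real.log (1 + u) ≤ Real.log (2 * u) := by
      apply Real.log_le_log (by linarith)
      linarith
    rw [Real.log_mul (by norm_num) (by linarith)] at h1
    have h2 : Real.log 2 ≤ 1 := by
      rw [← Real.log_exp 1]
      apply Real.log_le_log two_pos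
      have := Real.exp_one_gt_d9; linarith
    have h3 : Real.log u ≤ lnp u := log_le_lnp u
    linarith

lemma calc_bound {ℓ μc β v : ℝ} (hℓ : 1 ≤ ℓ) (hμ0 : 0 < μc) (hμ1 : μc ≤ 1) (hβ : 0 < β)
    (hv : 0 ≤ v) :
    ∫⁻ t in Set.Ioo μc (v / β), ENNReal.ofReal (t⁻¹ * (Real.log (Real.exp 1 + t) + ℓ)⁻¹) ≤
      ENNReal.ofReal (Real.log μc⁻¹ / ℓ +
        (1 + Real.log (1 + Real.log (max β⁻¹ 1))) *
          (1 + lnp (Real.log (Real.exp 1 + v) / ℓ))) := by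
  set h : ℝ → ℝ := fun t => t⁻¹ * (Real.log (Real.exp 1 + t) + ℓ)⁻¹ with hh
  set R := v / β with hR
  by_cases hμR : R ≤ μc
  · rw [Set.Ioo_eq_empty (not_lt.2 hμR)]
    simp
  push_neg at hμR
  have hhcont : ∀ {a b : ℝ}, 0 < a → ContinuousOn h (Set.Icc a b) := by
    intro a b ha
    apply ContinuousOn.mul
    · apply ContinuousOn.inv₀ continuousOn_id
      intro t ht
      exact ne_of_gt (lt_of_lt_of_le ha ht.1)
    · apply ContinuousOn.inv₀
      · apply ContinuousOn.add _ continuousOn_const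
        apply Real.continuousOn_log.comp (continuousOn_const.add continuousOn_id)
        intro t ht
        have h0 : 0 < t := lt_of_lt_of_le ha ht.1
        have := Real.exp_pos 1
        simp only [Set.mem_compl_iff, Set.mem_singleton_iff]
        simp only [Pi.add_apply, id]; positivity
      · intro t ht
        have h0 : 0 < t := lt_of_lt_of_le ha ht.1
        have h1 : 0 < Real.log (Real.exp 1 + t) := by
          rw [Real.lt_log_iff_exp_lt (by positivity)]
          rw [Real.exp_zero]
          have := Real.exp_one_gt_d9; linarith
        intro hc; linarith
  have hhint : ∀ {a b : ℝ}, 0 < a → a ≤ b → IntervalIntegrable h volume a b := by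
    intro a b ha hab
    apply ContinuousOn.intervalIntegrable
    rw [Set.uIcc_of_le hab]
    exact hhcont ha
  have hhnn : ∀ t : ℝ, 0 < t → 0 ≤ h t := by
    intro t ht
    have h1 : 1 ≤ Real.log (Real.exp 1 + t) := by
      rw [Real.le_log_iff_exp_le (by positivity)]
      linarith
    have h2 : 0 < Real.log (Real.exp 1 + t) + ℓ := by linarith
    positivity
  have stepA : ∫⁻ t in Set.Ioo μc R, ENNReal.ofReal (h t) =
      ENNReal.ofReal (∫ t in μc..R, h t) := by
    rw [← ofReal_integral_eq_lintegral_ofReal]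
    · rw [intervalIntegral.integral_of_le hμR.le, ← MeasureTheory.integral_Ioc_eq_integral_Ioo]
    · apply IntegrableOn.mono_set _ Set.Ioo_subset_Icc_self
      exact (hhcont hμ0).integrableOn_Icc
    · apply Filter.eventually_of_mem (self_mem_ae_restrict measurableSet_Ioo)
      intro t ht
      exact hhnn t (lt_trans hμ0 ht.1)
  rw [stepA]
  apply ENNReal.ofReal_le_ofReal
  set M := max 1 R with hM
  have h1M : (1:ℝ) ≤ M := le_max_left _ _
  have hμM : μc ≤ M := le_trans hμ1 h1M
  have C1 : (∫ t in μc..R, h t) ≤ ∫ t in μc..M, h t := by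
    apply intervalIntegral.integral_mono_interval le_rfl hμR.le (le_max_right _ _)
    · apply Filter.eventually_of_mem (self_mem_ae_restrict measurableSet_Ioc)
      intro t ht
      exact hhnn t (lt_trans hμ0 ht.1)
    · exact hhint hμ0 hμM
  have C2 : (∫ t in μc..M, h t) = (∫ t in μc..(1:ℝ), h t) + ∫ t in (1:ℝ)..M, h t :=
    (intervalIntegral.integral_add_adjacent_intervals (hhint hμ0 hμ1)
      (hhint one_pos h1M)).symm
  have C3 : (∫ t in μc..(1:ℝ), h t) ≤ Real.log μc⁻¹ / ℓ := by
    have hb : (∫ t in μc..(1:ℝ), ℓ⁻¹ * t⁻¹) = Real.log μc⁻¹ / ℓ := by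
      rw [intervalIntegral.integral_const_mul, integral_inv_of_pos hμ0 one_pos]
      rw [one_div, div_eq_inv_mul]
    rw [← hb]
    apply intervalIntegral.integral_mono_on hμ1 (hhint hμ0 hμ1)
    · apply ContinuousOn.intervalIntegrable
      rw [Set.uIcc_of_le hμ1]
      apply ContinuousOn.mul continuousOn_const
      apply ContinuousOn.inv₀ continuousOn_id
      intro t ht; exact ne_of_gt (lt_of_lt_of_le hμ0 ht.1)
    · intro t ht
      have ht0 : 0 < t := lt_of_lt_of_le hμ0 ht.1
      have h1 : 1 ≤ Real.log (Real.exp 1 + t) := by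
        rw [Real.le_log_iff_exp_le (by positivity)]
        linarith
      have h2 : (Real.log (Real.exp 1 + t) + ℓ)⁻¹ ≤ ℓ⁻¹ :=
        inv_anti₀ (by linarith) (by linarith)
      show t⁻¹ * (Real.log (Real.exp 1 + t) + ℓ)⁻¹ ≤ ℓ⁻¹ * t⁻¹
      rw [mul_comm]
      exact mul_le_mul_of_nonneg_right h2 (by positivity)
  set G : ℝ → ℝ := fun t => Real.log (Real.log t + ℓ) with hG
  have C4 : (∫ t in (1:ℝ)..M, h t) ≤ G M - G 1 := by
    have hftc : (∫ t in (1:ℝ)..M, t⁻¹ * (Real.log t + ℓ)⁻¹) = G M - G 1 := by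
      apply intervalIntegral.integral_eq_sub_of_hasDerivAt
      · intro t ht
        rw [Set.uIcc_of_le h1M] at ht
        have ht0 : (0:ℝ) < t := lt_of_lt_of_le one_pos ht.1
        have hlt : 0 ≤ Real.log t := Real.log_nonneg ht.1
        have hd : 0 < Real.log t + ℓ := by linarith
        have h1 : HasDerivAt (fun t : ℝ => Real.log t + ℓ) t⁻¹ t :=
          (Real.hasDerivAt_log (ne_of_gt ht0)).add_const ℓ
        have h2 : HasDerivAt G ((Real.log t + ℓ)⁻¹ * t⁻¹) t :=
          by have := (Real.hasDerivAt_log (ne_of_gt hd)).comp t h1; exact this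
        rw [mul_comm]; exact h2
      · apply ContinuousOn.intervalIntegrable
        rw [Set.uIcc_of_le h1M]
        apply ContinuousOn.mul
        · apply ContinuousOn.inv₀ continuousOn_id
          intro t ht; exact ne_of_gt (lt_of_lt_of_le one_pos ht.1)
        · apply ContinuousOn.inv₀
          · exact (Real.continuousOn_log.mono (by
              intro t ht
              simp only [Set.mem_compl_iff, Set.mem_singleton_iff]
              exact ne_of_gt (lt_of_lt_of_le one_pos ht.1))).add continuousOn_const
          · intro t ht
            have : 0 ≤ Real.log t := Real.log_nonneg ht.1
            intro hc; linarith
    rw [← hftc]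
    apply intervalIntegral.integral_mono_on h1M (hhint one_pos h1M)
    · apply ContinuousOn.intervalIntegrable
      rw [Set.uIcc_of_le h1M]
      apply ContinuousOn.mul
      · apply ContinuousOn.inv₀ continuousOn_id
        intro t ht; exact ne_of_gt (lt_of_lt_of_le one_pos ht.1)
      · apply ContinuousOn.inv₀
        · exact (Real.continuousOn_log.mono (by
            intro t ht
            simp only [Set.mem_compl_iff, Set.mem_singleton_iff]
            exact ne_of_gt (lt_of_lt_of_le one_pos ht.1))).add continuousOn_const
        · intro t ht
          have : 0 ≤ Real.log t := Real.log_nonneg ht.1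
          intro hc; linarith
    · intro t ht
      have ht0 : (0:ℝ) < t := lt_of_lt_of_le one_pos ht.1
      have hlt : 0 ≤ Real.log t := Real.log_nonneg ht.1
      rw [hh]
      apply mul_le_mul_of_nonneg_left _ (by positivity)
      apply inv_anti₀ (by linarith)
      have : Real.log t ≤ Real.log (Real.exp 1 + t) := by
        apply Real.log_le_log ht0
        linarith [Real.exp_pos 1]
      linarith
  set c := max β⁻¹ 1 with hc
  set u := Real.log (Real.exp 1 + v) / ℓ with hu
  have hc1 : (1:ℝ) ≤ c := le_max_right _ _
  have hlogc : 0 ≤ Real.log c := Real.log_nonneg hc1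
  have hev : 1 ≤ Real.log (Real.exp 1 + v) := by
    rw [Real.le_log_iff_exp_le (by positivity)]
    linarith
  have hu0 : 0 ≤ u := by
    rw [hu]; positivity
  have C5 : G M - G 1 ≤ (1 + Real.log (1 + Real.log c)) * (1 + lnp u) := by
    have hG1 : G 1 = Real.log ℓ := by rw [hG]; simp
    have hlogM : 0 ≤ Real.log M := Real.log_nonneg h1M
    have hMle : Real.log M ≤ Real.log c + Real.log (Real.exp 1 + v) := by
      have hMc : M ≤ c * (Real.exp 1 + v) := by
        rw [hM]
        apply max_le
        · nlinarith [Real.exp_one_gt_d9]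
        · rw [hR, div_eq_mul_inv, mul_comm]
          apply mul_le_mul (le_max_left _ _) (by linarith [Real.exp_pos 1])
            hv (by linarith)
      calc Real.log M ≤ Real.log (c * (Real.exp 1 + v)) :=
            Real.log_le_log (by linarith) hMc
        _ = Real.log c + Real.log (Real.exp 1 + v) := by
            rw [Real.log_mul (by linarith) (by positivity)]
    have key : Real.log (Real.log M + ℓ) ≤
        Real.log ℓ + Real.log (1 + Real.log c) + Real.log (1 + u) := by
      have hprod : Real.log M + ℓ ≤ ℓ * ((1 + Real.log c) * (1 + u)) := by
        have hexp : ℓ * ((1 + Real.log c) * (1 + u)) =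
            (1 + Real.log c) * (ℓ + Real.log (Real.exp 1 + v)) := by
          rw [hu]; field_simp
        rw [hexp]
        nlinarith
      calc Real.log (Real.log M + ℓ) ≤ Real.log (ℓ * ((1 + Real.log c) * (1 + u))) :=
            Real.log_le_log (by linarith) hprod
        _ = Real.log ℓ + (Real.log (1 + Real.log c) + Real.log (1 + u)) := by
            rw [Real.log_mul (by positivity) (by positivity), Real.log_mul
              (ne_of_gt (by linarith)) (ne_of_gt (by linarith))]
        _ = Real.log ℓ + Real.log (1 + Real.log c) + Real.log (1 + u) := by ring
    have h1u : Real.log (1 + u) ≤ 1 + lnp u := log_one_add_le hu0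
    have : G M ≤ Real.log ℓ + Real.log (1 + Real.log c) + 1 + lnp u := by
      rw [hG]
      calc Real.log (Real.log M + ℓ) ≤
          Real.log ℓ + Real.log (1 + Real.log c) + Real.log (1 + u) := key
        _ ≤ Real.log ℓ + Real.log (1 + Real.log c) + 1 + lnp u := by linarith
    rw [hG1]
    have hl1c : 0 ≤ Real.log (1 + Real.log c) := Real.log_nonneg (by linarith)
    nlinarith [lnp_nonneg u]
  calc (∫ t in μc..R, h t) ≤ ∫ t in μc..M, h t := C1
    _ = (∫ t in μc..(1:ℝ), h t) + ∫ t in (1:ℝ)..M, h t := C2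
    _ ≤ Real.log μc⁻¹ / ℓ + (G M - G 1) := add_le_add C3 C4
    _ ≤ Real.log μc⁻¹ / ℓ +
        (1 + Real.log (1 + Real.log c)) * (1 + lnp u) := by linarith [C5]


set_option maxHeartbeats 2000000
/-- **Lemma (local `Ψ`-estimate for the maximal function).**
There is `C = C(n)` such that for every `k ∈ ℤ^n` and every integrable `f_k`
supported in `k + Q` with `μ_k = ‖f_k‖_{L^1} ≤ 1`,
`∫_{k+2Q} Ψ(x, M f_k) ≤ C [ μ_k/ln(e+|k|) + (μ_k/ln(e+|k|)) ln₊(1/μ_k)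
  + ∫_{k+Q} |f_k| (1 + ln₊( ln(e+|f_k|)/ln(e+|k|) )) ]`. -/

theorem Psi_maximal_local_estimate (n : ℕ) (hn : 1 ≤ n) :
    ∃ C : ℝ, 0 < C ∧ ∀ (k : Fin n → ℤ) (fk : En n → ℝ), Integrable fk →
      (∀ x, x ∉ Qk n k → fk x = 0) → (∫ x, |fk x|) ≤ 1 →
      ∫⁻ x in Q2k n k, ENNReal.ofReal (Psi n x (Mglob n fk x)) ≤
        ENNReal.ofReal C *
          (ENNReal.ofReal ((∫ x, |fk x|) / Real.log (Real.exp 1 + ‖zv n k‖)) +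
           ENNReal.ofReal ((∫ x, |fk x|) / Real.log (Real.exp 1 + ‖zv n k‖) *
             lnp (∫ x, |fk x|)⁻¹) +
           ∫⁻ x in Qk n k, ENNReal.ofReal (|fk x| *
             (1 + lnp (Real.log (Real.exp 1 + |fk x|) /
               Real.log (Real.exp 1 + ‖zv n k‖))))) := by
  classical
  haveI : Nonempty (Fin n) := ⟨⟨0, by omega⟩⟩
  -- constants
  set Vb := volume (ball (0 : En n) 1) with hVbdef
  have hVb0 : Vb ≠ 0 := (measure_ball_pos _ _ one_pos).ne'
  have hVbt : Vb ≠ ⊤ := measure_ball_lt_top.ne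
  set ω : ℝ := Vb.toReal with hωdef
  have hω0 : 0 < ω := ENNReal.toReal_pos hVb0 hVbt
  have hVbω : ENNReal.ofReal ω = Vb := by rw [hωdef]; exact ENNReal.ofReal_toReal hVbt
  set β : ℝ := (2 * ω)⁻¹ with hβdef
  have hβ0 : 0 < β := by rw [hβdef]; positivity
  have hβω : β * ω ≤ 1 / 2 := by
    have h : β * ω = ω / (2 * ω) := by rw [hβdef]; ring
    rw [h, div_le_iff₀ (by positivity)]
    linarith
  set cψ : ℝ := 1 + Real.log (1 + n) with hcψdef
  have hcψ1 : 1 ≤ cψ := by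
    have : 0 ≤ Real.log (1 + n) := Real.log_nonneg (by norm_num)
    rw [hcψdef]; linarith
  set Dc : ℝ := 1 + Real.log (1 + Real.log (max β⁻¹ 1)) with hDcdef
  have hDc1 : 1 ≤ Dc := by
    have h1 : (1:ℝ) ≤ max β⁻¹ 1 := le_max_right _ _
    have : 0 ≤ Real.log (1 + Real.log (max β⁻¹ 1)) :=
      Real.log_nonneg (by linarith [Real.log_nonneg h1])
    rw [hDcdef]; linarith
  set Bn : ℝ := n ^ n * ω with hBndef
  have hBn0 : 0 < Bn := by
    have : (0:ℝ) < (n:ℝ) ^ n := by positivity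
    rw [hBndef]
    nlinarith
  set C : ℝ := cψ * (Bn + 4 ^ n * ω * 8 * (1 + Dc) + 1) with hCdef
  have hC0 : 0 < C := by
    have h1 : (0:ℝ) < 4 ^ n * ω := by positivity
    have h2 : (0:ℝ) < Bn + 4 ^ n * ω * 8 * (1 + Dc) + 1 := by nlinarith
    rw [hCdef]
    exact mul_pos (by linarith) h2
  refine ⟨C, hC0, ?_⟩
  intro k fk hfk hsupp hμ1
  set μr : ℝ := ∫ x, |fk x| with hμrdef
  have hμr0 : 0 ≤ μr := integral_nonneg fun x => abs_nonneg _
  set ℓ : ℝ := Real.log (Real.exp 1 + ‖zv n k‖) with hℓdef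
  have hℓ1 : 1 ≤ ℓ := one_le_log_add _ (norm_nonneg _)
  -- degenerate case
  by_cases hμ0 : μr = 0
  · have hfk0 : fk =ᵐ[volume] 0 := by
      have := (integral_eq_zero_iff_of_nonneg (fun x => abs_nonneg (fk x)) hfk.abs).1 hμ0
      filter_upwards [this] with x hx
      simpa [abs_eq_zero] using hx
    have hM0 : ∀ x, Mglob n fk x = 0 := by
      intro x
      have hball : ∀ r : ℝ, (∫ y in ball x r, |fk y|) = 0 := by
        intro r
        rw [show (fun y => |fk y|) = fun y => |fk y| from rfl]
        have : ∀ᵐ y ∂(volume.restrict (ball x r)), |fk y| = 0 := by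
          apply ae_restrict_of_ae
          filter_upwards [hfk0] with y hy
          simp [hy]
        calc (∫ y in ball x r, |fk y|) = ∫ _y in ball x r, (0:ℝ) := integral_congr_ae this
          _ = 0 := integral_zero _ _
      rw [Mglob]
      have : ∀ r : {r : ℝ // 0 < r},
          ((r : ℝ) ^ n)⁻¹ * ∫ y in ball x (r : ℝ), |fk y| = 0 := by
        intro r; rw [hball]; ring
      rw [iSup_congr this]
      exact ciSup_const
    have hint0 : ∀ x, ENNReal.ofReal (Psi n x (Mglob n fk x)) = 0 := by
      intro x
      rw [hM0 x, Psi, zero_div, ENNReal.ofReal_zero]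
    calc ∫⁻ x in Q2k n k, ENNReal.ofReal (Psi n x (Mglob n fk x))
        = ∫⁻ _x in Q2k n k, 0 := lintegral_congr fun x => hint0 x
      _ = 0 := lintegral_zero
      _ ≤ _ := zero_le
  have hμrpos : 0 < μr := lt_of_le_of_ne hμr0 (Ne.symm hμ0)
  -- measurable representative
  obtain ⟨f', hf'm, hff'⟩ : ∃ f' : En n → ℝ, Measurable f' ∧ fk =ᵐ[volume] f' :=
    ⟨hfk.aemeasurable.mk fk, hfk.aemeasurable.measurable_mk, hfk.aemeasurable.ae_eq_mk⟩
  have hf'int : Integrable f' := hfk.congr hff'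
  have habs_ae : (fun y => |fk y|) =ᵐ[volume] fun y => |f' y| := by
    filter_upwards [hff'] with y hy; rw [hy]
  have hball_eq : ∀ (x : En n) (r : ℝ),
      (∫ y in ball x r, |fk y|) = ∫ y in ball x r, |f' y| := fun x r =>
    integral_congr_ae (ae_restrict_of_ae habs_ae)
  have hMeq : ∀ x, Mglob n fk x = Mglob n f' x := by
    intro x
    rw [Mglob, Mglob]
    exact iSup_congr fun r => by rw [hball_eq]
  have hμr' : μr = ∫ x, |f' x| := integral_congr_ae habs_ae
  -- γ
  set γ : ℝ → ℝ := fun s => (Real.log (Real.exp 1 + s) + ℓ)⁻¹ with hγdef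
  have hγnn : ∀ s : ℝ, 0 ≤ s → 0 ≤ γ s := by
    intro s hs
    have : 1 ≤ Real.log (Real.exp 1 + s) := one_le_log_add _ hs
    rw [hγdef]
    positivity
  have hγcont : ∀ {a b : ℝ}, 0 ≤ a → ContinuousOn γ (Set.Icc a b) := by
    intro a b ha
    apply ContinuousOn.inv₀
    · apply ContinuousOn.add _ continuousOn_const
      apply Real.continuousOn_log.comp (continuousOn_const.add continuousOn_id)
      intro s hs
      have h0 : 0 ≤ s := le_trans ha hs.1
      have := Real.exp_pos 1
      simp only [Set.mem_compl_iff, Set.mem_singleton_iff]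
      simp only [Pi.add_apply, id]; positivity
    · intro s hs
      have hs0 : 0 ≤ s := le_trans ha hs.1
      have : 1 ≤ Real.log (Real.exp 1 + s) := one_le_log_add _ hs0
      intro hc; linarith
  have hγint : ∀ t : ℝ, 0 < t → IntervalIntegrable γ volume 0 t := by
    intro t ht
    apply ContinuousOn.intervalIntegrable
    rw [Set.uIcc_of_le ht.le]
    exact hγcont le_rfl
  have hγmeas : Measurable γ := by
    apply Measurable.inv
    exact (Real.measurable_log.comp (measurable_const.add measurable_id)).add measurable_const
  -- the majorant T
  set T : En n → ℝ := fun x => (MQ n f' x).toReal with hTdef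
  have hTmeas : Measurable T := (measurable_MQ n f' hf'm).ennreal_toReal
  have hTnn : ∀ x, 0 ≤ T x := fun x => ENNReal.toReal_nonneg
  have hQ2meas : MeasurableSet (Q2k n k) := by
    have : Q2k n k = ⋂ i, {x : En n | (k i : ℝ) - 1 < x i ∧ x i < (k i : ℝ) + 1} := by
      ext x; simp [Q2k, Set.mem_iInter]
    rw [this]
    apply MeasurableSet.iInter
    intro i
    apply MeasurableSet.inter
    · exact measurableSet_lt measurable_const ((measurable_pi_apply i).comp (WithLp.measurable_ofLp 2 _))
    · exact measurableSet_lt ((measurable_pi_apply i).comp (WithLp.measurable_ofLp 2 _)) measurable_const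
  have hQkmeas : MeasurableSet (Qk n k) := by
    have : Qk n k = ⋂ i, {x : En n | (k i : ℝ) - 1/2 < x i ∧ x i < (k i : ℝ) + 1/2} := by
      ext x; simp [Qk, Set.mem_iInter]
    rw [this]
    apply MeasurableSet.iInter
    intro i
    apply MeasurableSet.inter
    · exact measurableSet_lt measurable_const ((measurable_pi_apply i).comp (WithLp.measurable_ofLp 2 _))
    · exact measurableSet_lt ((measurable_pi_apply i).comp (WithLp.measurable_ofLp 2 _)) measurable_const
  -- Step 1 : pointwise bound and layercake
  have step1 : ∫⁻ x in Q2k n k, ENNReal.ofReal (Psi n x (Mglob n fk x)) ≤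
      ENNReal.ofReal cψ * ∫⁻ x in Q2k n k, ENNReal.ofReal (∫ s in (0:ℝ)..T x, γ s) := by
    rw [← lintegral_const_mul' _ _ ENNReal.ofReal_ne_top]
    apply lintegral_mono_ae
    apply (ae_restrict_iff' hQ2meas).2
    apply ae_of_all
    intro x hx
    rw [← ENNReal.ofReal_mul (by linarith)]
    apply ENNReal.ofReal_le_ofReal
    rw [hMeq x]
    exact Psi_le_integral n hn k x hx (Mglob_nonneg n f' x)
      (Mglob_le_toReal_MQ n f' hf'int x)
  have layercake : ∫⁻ x in Q2k n k, ENNReal.ofReal (∫ s in (0:ℝ)..T x, γ s) =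
      ∫⁻ t in Set.Ioi (0:ℝ), volume.restrict (Q2k n k) {x | t ≤ T x} *
        ENNReal.ofReal (γ t) := by
    apply lintegral_comp_eq_lintegral_meas_le_mul
    · exact ae_of_all _ hTnn
    · exact hTmeas.aemeasurable
    · exact fun t ht => hγint t ht
    · apply (ae_restrict_iff' measurableSet_Ioi).2
      exact ae_of_all _ fun t ht => hγnn t (le_of_lt ht)
  -- split the t-integral
  set ν := volume.restrict (Q2k n k) with hνdef
  have hsplit : ∫⁻ t in Set.Ioi (0:ℝ), ν {x | t ≤ T x} * ENNReal.ofReal (γ t) =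
      (∫⁻ t in Set.Ioc 0 μr, ν {x | t ≤ T x} * ENNReal.ofReal (γ t)) +
        ∫⁻ t in Set.Ioi μr, ν {x | t ≤ T x} * ENNReal.ofReal (γ t) := by
    rw [← Set.Ioc_union_Ioi_eq_Ioi hμr0]
    exact lintegral_union measurableSet_Ioi (Set.Ioc_disjoint_Ioi le_rfl)
  -- volume of Q2k
  have hQ2vol : volume (Q2k n k) ≤ ENNReal.ofReal Bn := by
    have hsub : Q2k n k ⊆ closedBall (zv n k) n := by
      intro x hx
      rw [mem_closedBall, dist_comm, dist_eq_norm]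
      exact norm_zv_sub_le n hn k x hx
    calc volume (Q2k n k) ≤ volume (closedBall (zv n k) n) := measure_mono hsub
      _ = ENNReal.ofReal ((n:ℝ) ^ n) * Vb := by
          rw [MeasureTheory.Measure.addHaar_closedBall _ _ (by positivity),
            finrank_euclideanSpace_fin]
      _ = ENNReal.ofReal Bn := by
          rw [hBndef, ENNReal.ofReal_mul (by positivity), hVbω]
  -- J1
  have hJ1 : (∫⁻ t in Set.Ioc 0 μr, ν {x | t ≤ T x} * ENNReal.ofReal (γ t)) ≤
      ENNReal.ofReal Bn * ENNReal.ofReal (μr / ℓ) := by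
    have hb : ∀ t ∈ Set.Ioc (0:ℝ) μr, ν {x | t ≤ T x} * ENNReal.ofReal (γ t) ≤
        ENNReal.ofReal Bn * ENNReal.ofReal ℓ⁻¹ := by
      intro t ht
      apply mul_le_mul'
      · calc ν {x | t ≤ T x} ≤ ν Set.univ := measure_mono (Set.subset_univ _)
          _ = volume (Q2k n k) := by rw [hνdef, Measure.restrict_apply_univ]
          _ ≤ ENNReal.ofReal Bn := hQ2vol
      · apply ENNReal.ofReal_le_ofReal
        rw [hγdef]
        have h1 : 1 ≤ Real.log (Real.exp 1 + t) := one_le_log_add _ ht.1.le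
        apply inv_anti₀ (by linarith)
        linarith
    calc (∫⁻ t in Set.Ioc 0 μr, ν {x | t ≤ T x} * ENNReal.ofReal (γ t))
        ≤ ∫⁻ _t in Set.Ioc 0 μr, ENNReal.ofReal Bn * ENNReal.ofReal ℓ⁻¹ :=
          setLIntegral_mono' measurableSet_Ioc hb
      _ = ENNReal.ofReal Bn * ENNReal.ofReal ℓ⁻¹ * volume (Set.Ioc (0:ℝ) μr) := by
          rw [setLIntegral_const]
      _ = ENNReal.ofReal Bn * (ENNReal.ofReal ℓ⁻¹ * ENNReal.ofReal μr) := by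
          rw [Real.volume_Ioc, sub_zero, mul_assoc]
      _ = ENNReal.ofReal Bn * ENNReal.ofReal (μr / ℓ) := by
          rw [← ENNReal.ofReal_mul (by positivity), inv_mul_eq_div]
  -- J2 : pointwise domination on Ioi μr
  set I : ℝ → ℝ≥0∞ := fun t => ∫⁻ y, ({y : En n | β * t < |f' y|}.indicator
    (fun y => ENNReal.ofReal |f' y|)) y with hIdef
  have hJ2ptwise : ∀ t ∈ Set.Ioi μr, ν {x | t ≤ T x} * ENNReal.ofReal (γ t) ≤
      ENNReal.ofReal (4 ^ n * ω * 8) * (ENNReal.ofReal (t⁻¹ * γ t) * I t) := by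
    intro t ht
    have ht0 : 0 < t := lt_of_le_of_lt hμr0 ht
    set g1 : En n → ℝ := fun y => if β * t < |f' y| then f' y else 0 with hg1def
    have hg1m : Measurable g1 := by
      apply Measurable.ite _ hf'm measurable_const
      exact measurableSet_lt measurable_const hf'm.abs
    have hsub1 : {x : En n | t ≤ T x} ⊆ {x | ENNReal.ofReal t ≤ MQ n f' x} := by
      intro x hx
      exact ENNReal.ofReal_le_of_le_toReal hx
    have hsub2 : {x : En n | ENNReal.ofReal t ≤ MQ n f' x} ⊆
        {x | ENNReal.ofReal (t / 2) ≤ MQ n g1 x} :=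
      MQ_trunc n hn f' hf'm ht0 hβω hβ0
    have hweak := MQ_weak n hn g1 (s := t / 2) (by positivity)
    have hIg1 : (∫⁻ y, ENNReal.ofReal |g1 y|) = I t := by
      rw [hIdef]
      apply lintegral_congr
      intro y
      by_cases h : β * t < |f' y|
      · simp [hg1def, h, Set.indicator_of_mem, Set.mem_setOf_eq]
      · simp [hg1def, h, Set.indicator_of_notMem, Set.mem_setOf_eq]
    have hmeas1 : ν {x | t ≤ T x} ≤
        ENNReal.ofReal (4 ^ n) * Vb * (ENNReal.ofReal (t / 2 / 2))⁻¹ * I t := by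
      calc ν {x | t ≤ T x} ≤ volume {x | t ≤ T x} := Measure.restrict_le_self _
        _ ≤ volume {x | ENNReal.ofReal (t / 2) ≤ MQ n g1 x} :=
            measure_mono (le_trans hsub1 hsub2)
        _ ≤ ENNReal.ofReal (4 ^ n) * Vb * (ENNReal.ofReal (t / 2 / 2))⁻¹ *
              ∫⁻ y, ENNReal.ofReal |g1 y| := hweak
        _ = ENNReal.ofReal (4 ^ n) * Vb * (ENNReal.ofReal (t / 2 / 2))⁻¹ * I t := by
            rw [hIg1]
    have hγt0 : 0 ≤ γ t := hγnn t ht0.le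
    have halg : ENNReal.ofReal (4 ^ n) * Vb * (ENNReal.ofReal (t / 2 / 2))⁻¹ *
        ENNReal.ofReal (γ t) ≤
          ENNReal.ofReal (4 ^ n * ω * 8) * ENNReal.ofReal (t⁻¹ * γ t) := by
      have h1 : (ENNReal.ofReal (t / 2 / 2))⁻¹ = ENNReal.ofReal (4 * t⁻¹) := by
        rw [← ENNReal.ofReal_inv_of_pos (by positivity)]
        congr 1
        rw [show t / 2 / 2 = t / 4 by ring]
        rw [div_eq_mul_inv, mul_inv, mul_comm]
        norm_num
      rw [h1, ← hVbω]
      calc ENNReal.ofReal (4 ^ n) * ENNReal.ofReal ω * ENNReal.ofReal (4 * t⁻¹) *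
            ENNReal.ofReal (γ t)
          = ENNReal.ofReal (4 ^ n * ω * (4 * t⁻¹) * γ t) := by
            rw [← ENNReal.ofReal_mul (by positivity), ← ENNReal.ofReal_mul (by positivity),
              ← ENNReal.ofReal_mul (by positivity)]
        _ ≤ ENNReal.ofReal (4 ^ n * ω * 8 * (t⁻¹ * γ t)) := by
            apply ENNReal.ofReal_le_ofReal
            have h3 : (0:ℝ) ≤ 4 ^ n * ω := by positivity
            have h4 : (0:ℝ) ≤ t⁻¹ * γ t := by positivity
            nlinarith [mul_nonneg h3 h4]
        _ = ENNReal.ofReal (4 ^ n * ω * 8) * ENNReal.ofReal (t⁻¹ * γ t) :=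
            ENNReal.ofReal_mul (by positivity)
    calc ν {x | t ≤ T x} * ENNReal.ofReal (γ t)
        ≤ (ENNReal.ofReal (4 ^ n) * Vb * (ENNReal.ofReal (t / 2 / 2))⁻¹ * I t) *
            ENNReal.ofReal (γ t) := mul_le_mul_left hmeas1 _
      _ = (ENNReal.ofReal (4 ^ n) * Vb * (ENNReal.ofReal (t / 2 / 2))⁻¹ *
            ENNReal.ofReal (γ t)) * I t := by ring
      _ ≤ (ENNReal.ofReal (4 ^ n * ω * 8) * ENNReal.ofReal (t⁻¹ * γ t)) * I t :=
            mul_le_mul_left halg _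
      _ = ENNReal.ofReal (4 ^ n * ω * 8) * (ENNReal.ofReal (t⁻¹ * γ t) * I t) := by ring
  -- J2 : integral bound
  have hJ2 : (∫⁻ t in Set.Ioi μr, ν {x | t ≤ T x} * ENNReal.ofReal (γ t)) ≤
      ENNReal.ofReal (4 ^ n * ω * 8) *
        ∫⁻ t in Set.Ioi μr, ENNReal.ofReal (t⁻¹ * γ t) * I t := by
    rw [← lintegral_const_mul' _ _ ENNReal.ofReal_ne_top]
    exact setLIntegral_mono' measurableSet_Ioi hJ2ptwise
  -- Tonelli
  set Gp : ℝ × En n → ℝ≥0∞ := fun p =>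
    ({p : ℝ × En n | β * p.1 < |f' p.2|}).indicator
      (fun p => ENNReal.ofReal (p.1⁻¹ * γ p.1) * ENNReal.ofReal |f' p.2|) p with hGpdef
  have hGpmeas : Measurable Gp := by
    apply Measurable.indicator
    · apply Measurable.mul (f := fun p : ℝ × En n => ENNReal.ofReal (p.1⁻¹ * γ p.1))
        (g := fun p : ℝ × En n => ENNReal.ofReal |f' p.2|)
      · exact (measurable_fst.inv.mul (hγmeas.comp measurable_fst)).ennreal_ofReal
      · exact ((hf'm.comp measurable_snd).abs).ennreal_ofReal
    · exact measurableSet_lt (measurable_const.mul measurable_fst)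
        (hf'm.comp measurable_snd).abs
  have hGsec1 : ∀ t : ℝ, (∫⁻ y, Gp (t, y)) = ENNReal.ofReal (t⁻¹ * γ t) * I t := by
    intro t
    have hpt : ∀ y, Gp (t, y) = ENNReal.ofReal (t⁻¹ * γ t) *
        ({y : En n | β * t < |f' y|}.indicator (fun y => ENNReal.ofReal |f' y|) y) := by
      intro y
      by_cases h : β * t < |f' y|
      · simp only [hGpdef, Set.indicator_of_mem, h, Set.mem_setOf_eq]
      · simp only [hGpdef]
        rw [Set.indicator_of_notMem (by exact h), Set.indicator_of_notMem (by exact h),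
          mul_zero]
    rw [lintegral_congr hpt, lintegral_const_mul' _ _ ENNReal.ofReal_ne_top, hIdef]
  have hswap : (∫⁻ t in Set.Ioi μr, ENNReal.ofReal (t⁻¹ * γ t) * I t) =
      ∫⁻ y, ∫⁻ t in Set.Ioi μr, Gp (t, y) := by
    calc (∫⁻ t in Set.Ioi μr, ENNReal.ofReal (t⁻¹ * γ t) * I t)
        = ∫⁻ t in Set.Ioi μr, ∫⁻ y, Gp (t, y) := by
          apply lintegral_congr; intro t; rw [hGsec1]
      _ = ∫⁻ y, ∫⁻ t in Set.Ioi μr, Gp (t, y) :=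
          lintegral_lintegral_swap hGpmeas.aemeasurable
  -- inner integral bound
  have hlogμnn : 0 ≤ Real.log μr⁻¹ := Real.log_nonneg ((one_le_inv₀ hμrpos).2 hμ1)
  have hinner : ∀ y : En n, (∫⁻ t in Set.Ioi μr, Gp (t, y)) ≤
      ENNReal.ofReal (|f' y| * (Real.log μr⁻¹ / ℓ +
        Dc * (1 + lnp (Real.log (Real.exp 1 + |f' y|) / ℓ)))) := by
    intro y
    have hsec : ∀ t : ℝ, Gp (t, y) =
        ({t : ℝ | β * t < |f' y|}.indicator
          (fun t => ENNReal.ofReal |f' y| * ENNReal.ofReal (t⁻¹ * γ t)) t) := by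
      intro t
      by_cases h : β * t < |f' y|
      · simp only [hGpdef, Set.indicator_of_mem, h, Set.mem_setOf_eq]
        ring
      · simp only [hGpdef]
        rw [Set.indicator_of_notMem (by exact h), Set.indicator_of_notMem (by exact h)]
    have hSmeas : MeasurableSet {t : ℝ | β * t < |f' y|} :=
      measurableSet_lt (measurable_const.mul measurable_id) measurable_const
    calc (∫⁻ t in Set.Ioi μr, Gp (t, y))
        = ∫⁻ t in Set.Ioi μr, ({t : ℝ | β * t < |f' y|}.indicator
            (fun t => ENNReal.ofReal |f' y| * ENNReal.ofReal (t⁻¹ * γ t)) t) :=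
          lintegral_congr hsec
      _ = ∫⁻ t in ({t : ℝ | β * t < |f' y|} ∩ Set.Ioi μr),
            ENNReal.ofReal |f' y| * ENNReal.ofReal (t⁻¹ * γ t) := by
          rw [lintegral_indicator hSmeas, Measure.restrict_restrict hSmeas]
      _ = ∫⁻ t in Set.Ioo μr (|f' y| / β),
            ENNReal.ofReal |f' y| * ENNReal.ofReal (t⁻¹ * γ t) := by
          have hseteq : {t : ℝ | β * t < |f' y|} ∩ Set.Ioi μr =
              Set.Ioo μr (|f' y| / β) := by
            ext t
            simp only [Set.mem_inter_iff, Set.mem_setOf_eq, Set.mem_Ioi, Set.mem_Ioo]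
            constructor
            · rintro ⟨h1, h2⟩
              refine ⟨h2, ?_⟩
              rw [lt_div_iff₀ hβ0]
              linarith
            · rintro ⟨h1, h2⟩
              rw [lt_div_iff₀ hβ0] at h2
              exact ⟨by linarith, h1⟩
          rw [hseteq]
      _ = ENNReal.ofReal |f' y| * ∫⁻ t in Set.Ioo μr (|f' y| / β),
            ENNReal.ofReal (t⁻¹ * γ t) :=
          lintegral_const_mul' _ _ ENNReal.ofReal_ne_top
      _ ≤ ENNReal.ofReal |f' y| * ENNReal.ofReal (Real.log μr⁻¹ / ℓ +
            Dc * (1 + lnp (Real.log (Real.exp 1 + |f' y|) / ℓ))) := by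
          apply mul_le_mul_right
          have hcb := calc_bound hℓ1 hμrpos hμ1 hβ0 (abs_nonneg (f' y))
          simpa only [hγdef, hDcdef] using hcb
      _ = ENNReal.ofReal (|f' y| * (Real.log μr⁻¹ / ℓ +
            Dc * (1 + lnp (Real.log (Real.exp 1 + |f' y|) / ℓ)))) :=
          (ENNReal.ofReal_mul (abs_nonneg _)).symm
  -- split the integrand
  set X3 : ℝ≥0∞ := ∫⁻ x in Qk n k, ENNReal.ofReal (|fk x| *
      (1 + lnp (Real.log (Real.exp 1 + |fk x|) / ℓ))) with hX3def
  have hlintf' : (∫⁻ y, ENNReal.ofReal |f' y|) = ENNReal.ofReal μr := by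
    rw [hμr', ofReal_integral_eq_lintegral_ofReal hf'int.abs
      (Filter.Eventually.of_forall fun y => abs_nonneg _)]
  have hX3' : (∫⁻ y, ENNReal.ofReal (|f' y| *
      (1 + lnp (Real.log (Real.exp 1 + |f' y|) / ℓ)))) = X3 := by
    have e1 : (∫⁻ y, ENNReal.ofReal (|f' y| *
        (1 + lnp (Real.log (Real.exp 1 + |f' y|) / ℓ)))) =
        ∫⁻ y, ENNReal.ofReal (|fk y| *
        (1 + lnp (Real.log (Real.exp 1 + |fk y|) / ℓ))) := by
      apply lintegral_congr_ae
      filter_upwards [hff'] with y hy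
      rw [hy]
    rw [e1, hX3def, ← lintegral_indicator hQkmeas]
    apply lintegral_congr
    intro y
    by_cases hy : y ∈ Qk n k
    · rw [Set.indicator_of_mem hy]
    · rw [Set.indicator_of_notMem hy, hsupp y hy]
      simp
  have hsplitint : (∫⁻ y, ∫⁻ t in Set.Ioi μr, Gp (t, y)) ≤
      ENNReal.ofReal (μr / ℓ * lnp μr⁻¹) + ENNReal.ofReal Dc * X3 := by
    have hstep : (∫⁻ y, ∫⁻ t in Set.Ioi μr, Gp (t, y)) ≤
        ∫⁻ y, (ENNReal.ofReal (Real.log μr⁻¹ / ℓ) * ENNReal.ofReal |f' y| +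
          ENNReal.ofReal Dc * ENNReal.ofReal (|f' y| *
            (1 + lnp (Real.log (Real.exp 1 + |f' y|) / ℓ)))) := by
      apply lintegral_mono
      intro y
      refine le_trans (hinner y) ?_
      have hq1 : 0 ≤ 1 + lnp (Real.log (Real.exp 1 + |f' y|) / ℓ) := by
        linarith [lnp_nonneg (Real.log (Real.exp 1 + |f' y|) / ℓ)]
      have e2 : |f' y| * (Real.log μr⁻¹ / ℓ +
          Dc * (1 + lnp (Real.log (Real.exp 1 + |f' y|) / ℓ))) =
          Real.log μr⁻¹ / ℓ * |f' y| +
            Dc * (|f' y| * (1 + lnp (Real.log (Real.exp 1 + |f' y|) / ℓ))) := by ring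
      rw [e2, ENNReal.ofReal_add (by positivity) (by positivity),
        ENNReal.ofReal_mul (by positivity), ENNReal.ofReal_mul (by linarith)]
    refine le_trans hstep ?_
    rw [lintegral_add_left (((hf'm.abs).ennreal_ofReal).const_mul _),
      lintegral_const_mul' _ _ ENNReal.ofReal_ne_top,
      lintegral_const_mul' _ _ ENNReal.ofReal_ne_top, hlintf', hX3']
    apply add_le_add_left
    rw [← ENNReal.ofReal_mul (by positivity)]
    apply ENNReal.ofReal_le_ofReal
    have h5 : Real.log μr⁻¹ ≤ lnp μr⁻¹ := log_le_lnp _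
    have h6 : 0 ≤ μr / ℓ := by positivity
    calc Real.log μr⁻¹ / ℓ * μr = μr / ℓ * Real.log μr⁻¹ := by ring
      _ ≤ μr / ℓ * lnp μr⁻¹ := mul_le_mul_of_nonneg_left h5 h6
  -- assemble
  set E8 : ℝ := 4 ^ n * ω * 8 with hE8def
  have hE80 : 0 < E8 := by rw [hE8def]; positivity
  have hfinal : ∫⁻ x in Q2k n k, ENNReal.ofReal (Psi n x (Mglob n fk x)) ≤
      ENNReal.ofReal cψ * (ENNReal.ofReal Bn * ENNReal.ofReal (μr / ℓ) +
        ENNReal.ofReal E8 * (ENNReal.ofReal (μr / ℓ * lnp μr⁻¹) +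
          ENNReal.ofReal Dc * X3)) := by
    refine le_trans step1 ?_
    apply mul_le_mul_right
    rw [layercake, hsplit]
    apply add_le_add hJ1
    refine le_trans hJ2 ?_
    apply mul_le_mul_right
    rw [hswap]
    exact hsplitint
  refine le_trans hfinal ?_
  have hcψ0 : (0:ℝ) ≤ cψ := by linarith
  have hcoef1 : cψ * Bn ≤ C := by
    rw [hCdef]
    nlinarith [mul_nonneg hcψ0 (by nlinarith : (0:ℝ) ≤ E8 * (1 + Dc) + 1)]
  have hcoef2 : cψ * E8 ≤ C := by
    rw [hCdef]
    nlinarith [mul_nonneg hcψ0 (by nlinarith [mul_nonneg hE80.le (by linarith : (0:ℝ) ≤ Dc)] :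
      (0:ℝ) ≤ Bn + E8 * Dc + 1)]
  have hcoef3 : cψ * (E8 * Dc) ≤ C := by
    rw [hCdef]
    nlinarith [mul_nonneg hcψ0 (by nlinarith : (0:ℝ) ≤ Bn + E8 + 1)]
  have hc1 : ENNReal.ofReal cψ * ENNReal.ofReal Bn ≤ ENNReal.ofReal C := by
    rw [← ENNReal.ofReal_mul hcψ0]
    exact ENNReal.ofReal_le_ofReal hcoef1
  have hc2 : ENNReal.ofReal cψ * ENNReal.ofReal E8 ≤ ENNReal.ofReal C := by
    rw [← ENNReal.ofReal_mul hcψ0]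
    exact ENNReal.ofReal_le_ofReal hcoef2
  have hc3 : ENNReal.ofReal cψ * (ENNReal.ofReal E8 * ENNReal.ofReal Dc) ≤
      ENNReal.ofReal C := by
    rw [← ENNReal.ofReal_mul hE80.le, ← ENNReal.ofReal_mul hcψ0]
    exact ENNReal.ofReal_le_ofReal hcoef3
  calc ENNReal.ofReal cψ * (ENNReal.ofReal Bn * ENNReal.ofReal (μr / ℓ) +
        ENNReal.ofReal E8 * (ENNReal.ofReal (μr / ℓ * lnp μr⁻¹) +
          ENNReal.ofReal Dc * X3))
      = (ENNReal.ofReal cψ * ENNReal.ofReal Bn) * ENNReal.ofReal (μr / ℓ) +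
        ((ENNReal.ofReal cψ * ENNReal.ofReal E8) * ENNReal.ofReal (μr / ℓ * lnp μr⁻¹) +
          (ENNReal.ofReal cψ * (ENNReal.ofReal E8 * ENNReal.ofReal Dc)) * X3) := by
        ring
    _ ≤ ENNReal.ofReal C * ENNReal.ofReal (μr / ℓ) +
        (ENNReal.ofReal C * ENNReal.ofReal (μr / ℓ * lnp μr⁻¹) +
          ENNReal.ofReal C * X3) := by
        gcongr
    _ = ENNReal.ofReal C * (ENNReal.ofReal (μr / ℓ) +
          ENNReal.ofReal (μr / ℓ * lnp μr⁻¹) + X3) := by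
        ring
end
end

section
/- Let n ≥ 1 and let f be a nonnegative locally integrable function on ℝ^n. If ∫_{ℝ^n} Ψ(x, M^loc f(x)) dx < ∞ then ∫_{ℝ^n} f(x)/ln(e+|x|) dx < ∞. Moreover, there is a constant C = C(n) such that if ∫_{ℝ^n} Ψ(x, M^loc f(x)) dx = 1 then ∫_{ℝ^n} f(x)/ln(e+|x|) dx ≤ C. -/
open MeasureTheory Real Set Metric ENNReal

noncomputable section

namespace CubeAux

lemma one_le_loge {a : ℝ} (ha : 0 ≤ a) : 1 ≤ Real.log (Real.exp 1 + a) := by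
  calc (1:ℝ) = Real.log (Real.exp 1) := (Real.log_exp 1).symm
  _ ≤ _ := Real.log_le_log (Real.exp_pos 1) (by linarith)

/-- `log a ≤ log t + a / t`. -/
lemma log_le_log_add_div {a t : ℝ} (ha : 0 < a) (ht : 0 < t) :
    Real.log a ≤ Real.log t + a / t := by
  have h1 : Real.log (a / t) ≤ a / t - 1 := Real.log_le_sub_one_of_pos (by positivity)
  have h2 : Real.log (a / t) = Real.log a - Real.log t := Real.log_div ha.ne' ht.ne'
  linarith

/-- Monotonicity of `t ↦ t / (log (e + t) + L)` for `L ≥ 1`. -/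
lemma psi_mono {L t₁ t₂ : ℝ} (hL : 1 ≤ L) (h0 : 0 ≤ t₁) (h : t₁ ≤ t₂) :
    t₁ / (Real.log (Real.exp 1 + t₁) + L) ≤ t₂ / (Real.log (Real.exp 1 + t₂) + L) := by
  have h02 : (0:ℝ) ≤ t₂ := le_trans h0 h
  have l1 : 1 ≤ Real.log (Real.exp 1 + t₁) := one_le_loge h0
  have l2 : 1 ≤ Real.log (Real.exp 1 + t₂) := one_le_loge h02
  have e1 : (0:ℝ) < Real.exp 1 + t₁ := by have := Real.exp_pos 1; linarith
  have e2 : (0:ℝ) < Real.exp 1 + t₂ := by have := Real.exp_pos 1; linarith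
  rw [div_le_div_iff₀ (by linarith) (by linarith)]
  have hd : Real.log (Real.exp 1 + t₂) - Real.log (Real.exp 1 + t₁)
      ≤ (t₂ - t₁) / (Real.exp 1 + t₁) := by
    have h3 := Real.log_le_sub_one_of_pos
      (x := (Real.exp 1 + t₂) / (Real.exp 1 + t₁)) (by positivity)
    rw [Real.log_div e2.ne' e1.ne'] at h3
    have h4 : (Real.exp 1 + t₂) / (Real.exp 1 + t₁) - 1 = (t₂ - t₁) / (Real.exp 1 + t₁) := by
      field_simp
      ring
    linarith
  have h5 : t₁ * ((t₂ - t₁) / (Real.exp 1 + t₁)) ≤ t₂ - t₁ := by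
    rw [mul_div_assoc', div_le_iff₀ e1]
    nlinarith [Real.exp_pos 1, h]
  have h6 : t₁ * (Real.log (Real.exp 1 + t₂) - Real.log (Real.exp 1 + t₁))
      ≤ t₁ * ((t₂ - t₁) / (Real.exp 1 + t₁)) := mul_le_mul_of_nonneg_left hd h0
  have h7 : t₁ * Real.log (Real.exp 1 + t₁) ≤ t₂ * Real.log (Real.exp 1 + t₁) :=
    mul_le_mul_of_nonneg_right h (by linarith)
  have h8 : t₁ * L ≤ t₂ * L := mul_le_mul_of_nonneg_right h (by linarith)
  nlinarith [h6, h5, h7, h8]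

/-- Absorption: `μ ≤ c (log (e + μ) + 2 A)` implies `μ ≤ K(c) A`. -/
lemma absorb {c A μ : ℝ} (hc : 1 ≤ c) (hA : 1 ≤ A) (hμ : 0 ≤ μ)
    (h : μ ≤ c * (Real.log (Real.exp 1 + μ) + 2 * A)) :
    μ ≤ (2 * c * Real.log (2 * c) + Real.exp 1 + 4 * c) * A := by
  have h2c : (0:ℝ) < 2 * c := by linarith
  have hlog : Real.log (Real.exp 1 + μ) ≤ Real.log (2 * c) + (Real.exp 1 + μ) / (2 * c) := by
    have := Real.exp_pos 1
    exact log_le_log_add_div (by linarith) h2c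
  have hdiv : c * ((Real.exp 1 + μ) / (2 * c)) = (Real.exp 1 + μ) / 2 := by
    field_simp
  have hlc : (0:ℝ) ≤ Real.log (2 * c) := Real.log_nonneg (by linarith)
  have step : μ ≤ c * Real.log (2 * c) + (Real.exp 1 + μ) / 2 + 2 * c * A := by
    nlinarith [mul_le_mul_of_nonneg_left hlog (by linarith : (0:ℝ) ≤ c)]
  have he : (0:ℝ) < Real.exp 1 := Real.exp_pos 1
  nlinarith [mul_le_mul_of_nonneg_left hA
    (by positivity : (0:ℝ) ≤ 2 * c * Real.log (2 * c) + Real.exp 1 + 2 * c)]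

/-- If `μ ≤ K A` then `log (e + μ) + 2 A ≤ (log (e + K) + 4) A`. -/
lemma denom_bound {K A μ : ℝ} (hK : 1 ≤ K) (hA : 1 ≤ A) (hμ0 : 0 ≤ μ) (hμ : μ ≤ K * A) :
    Real.log (Real.exp 1 + μ) + 2 * A ≤ (Real.log (Real.exp 1 + K) + 4) * A := by
  have he : (0:ℝ) < Real.exp 1 := Real.exp_pos 1
  have h1 : Real.log (Real.exp 1 + μ) ≤ Real.log ((Real.exp 1 + K) * A) := by
    apply Real.log_le_log (by linarith)
    nlinarith
  have h2 : Real.log ((Real.exp 1 + K) * A) = Real.log (Real.exp 1 + K) + Real.log A := by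
    rw [Real.log_mul (by positivity) (by linarith)]
  have h3 : Real.log A ≤ A := by
    have := Real.log_le_sub_one_of_pos (x := A) (by linarith); linarith
  have h4 : (0:ℝ) ≤ Real.log (Real.exp 1 + K) := Real.log_nonneg (by linarith)
  nlinarith [mul_le_mul_of_nonneg_left hA h4]

lemma log_weight_pair {a b : ℝ} (ha : 0 ≤ a) (hb : 0 ≤ b) (h : a ≤ b + 1/2) :
    Real.log (Real.exp 1 + a) ≤ 2 * Real.log (Real.exp 1 + b) := by
  have he : 2 ≤ Real.exp 1 := by have := Real.add_one_le_exp 1; linarith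
  have h1 : Real.log (Real.exp 1 + a) ≤ Real.log (2 * (Real.exp 1 + b)) :=
    Real.log_le_log (by linarith) (by linarith)
  rw [Real.log_mul two_ne_zero (by positivity)] at h1
  have h2 : Real.log 2 ≤ 1 := by
    have := Real.log_le_sub_one_of_pos (x := 2) (by norm_num); linarith
  have h3 : 1 ≤ Real.log (Real.exp 1 + b) := one_le_loge hb
  linarith

/-! ### The lattice of small cubes -/

/-- side length of the small cubes -/
def sl (n : ℕ) : ℝ := (2 * (n : ℝ))⁻¹

lemma sl_pos {n : ℕ} (hn : 1 ≤ n) : 0 < sl n := by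
  have : (1:ℝ) ≤ (n:ℝ) := by exact_mod_cast hn
  rw [sl]; positivity

lemma sl_le_half {n : ℕ} (hn : 1 ≤ n) : sl n ≤ 1/2 := by
  have h1 : (1:ℝ) ≤ (n:ℝ) := by exact_mod_cast hn
  rw [sl]
  rw [inv_le_comm₀ (by linarith) (by norm_num)]
  linarith

def cube (n : ℕ) (k : Fin n → ℤ) : Set (En n) :=
  {x | ∀ i, (k i : ℝ) * sl n ≤ x i ∧ x i < ((k i : ℝ) + 1) * sl n}

def cpt (n : ℕ) (k : Fin n → ℤ) : En n := WithLp.toLp 2 (fun i => (k i : ℝ) * sl n)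

lemma cpt_mem {n : ℕ} (hn : 1 ≤ n) (k : Fin n → ℤ) : cpt n k ∈ cube n k := by
  intro i
  refine ⟨le_refl _, ?_⟩
  have := sl_pos hn
  show (k i : ℝ) * sl n < ((k i : ℝ) + 1) * sl n
  nlinarith

lemma cube_measurable (n : ℕ) (k : Fin n → ℤ) : MeasurableSet (cube n k) := by
  have : cube n k = ⋂ i, (fun x : En n => x i) ⁻¹'
      (Ico ((k i : ℝ) * sl n) (((k i : ℝ) + 1) * sl n)) := by
    ext x; simp [cube, Set.mem_iInter, Set.mem_Ico]
  rw [this]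
  exact MeasurableSet.iInter fun i =>
    ((measurable_pi_apply i).comp ((MeasurableEquiv.toLp 2 (Fin n → ℝ)).symm).measurable)
      measurableSet_Ico

lemma cube_volume {n : ℕ} (hn : 1 ≤ n) (k : Fin n → ℤ) :
    volume (cube n k) = ENNReal.ofReal (sl n ^ n) := by
  have heq : cube n k = ((MeasurableEquiv.toLp 2 (Fin n → ℝ)).symm) ⁻¹'
      (Set.pi univ fun i => Ico ((k i : ℝ) * sl n) (((k i : ℝ) + 1) * sl n)) := by
    ext x
    simp only [cube, mem_setOf_eq, mem_preimage, Set.mem_pi, Set.mem_univ, forall_true_left,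
      mem_Ico]
    rfl
  rw [heq, (EuclideanSpace.volume_preserving_symm_measurableEquiv_toLp (Fin n)).measure_preimage
        (MeasurableSet.univ_pi fun i => measurableSet_Ico).nullMeasurableSet,
      volume_pi_pi]
  have : ∀ i : Fin n, volume (Ico ((k i : ℝ) * sl n) (((k i : ℝ) + 1) * sl n))
      = ENNReal.ofReal (sl n) := by
    intro i; rw [Real.volume_Ico]; ring_nf
  rw [Finset.prod_congr rfl (fun i _ => this i), Finset.prod_const, Finset.card_univ,
    Fintype.card_fin, ← ENNReal.ofReal_pow (sl_pos hn).le]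

lemma cube_iUnion {n : ℕ} (hn : 1 ≤ n) : (⋃ k : Fin n → ℤ, cube n k) = univ := by
  ext x
  simp only [mem_iUnion, mem_univ, iff_true]
  refine ⟨fun i => ⌊x i / sl n⌋, fun i => ?_⟩
  have hs := sl_pos hn
  constructor
  · have := Int.floor_le (x i / sl n)
    calc (⌊x i / sl n⌋ : ℝ) * sl n ≤ (x i / sl n) * sl n := by nlinarith
    _ = x i := by field_simp
  · have := Int.lt_floor_add_one (x i / sl n)
    calc x i = (x i / sl n) * sl n := by field_simp
    _ < ((⌊x i / sl n⌋ : ℝ) + 1) * sl n := by nlinarith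

lemma cube_disjoint {n : ℕ} (hn : 1 ≤ n) :
    Pairwise (Function.onFun Disjoint (cube n)) := by
  intro k k' hkk'
  rw [Function.onFun, Set.disjoint_left]
  intro x hx hx'
  apply hkk'
  funext i
  have hs := sl_pos hn
  have h1 := (hx i).1; have h2 := (hx i).2
  have h1' := (hx' i).1; have h2' := (hx' i).2
  have e1 : k i = ⌊x i / sl n⌋ := by
    symm; apply Int.floor_eq_iff.mpr
    constructor
    · rw [le_div_iff₀ hs]; linarith
    · rw [div_lt_iff₀ hs]; push_cast; linarith
  have e2 : k' i = ⌊x i / sl n⌋ := by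
    symm; apply Int.floor_eq_iff.mpr
    constructor
    · rw [le_div_iff₀ hs]; linarith
    · rw [div_lt_iff₀ hs]; push_cast; linarith
  rw [e1, e2]

lemma cube_dist {n : ℕ} (hn : 1 ≤ n) {k : Fin n → ℤ} {x y : En n}
    (hx : x ∈ cube n k) (hy : y ∈ cube n k) : dist x y ≤ 1/2 := by
  have hs := sl_pos hn
  have hN : (1:ℝ) ≤ (n:ℝ) := by exact_mod_cast hn
  rw [EuclideanSpace.dist_eq]
  have hterm : ∀ i : Fin n, dist (x i) (y i) ^ 2 ≤ sl n ^ 2 := by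
    intro i
    have h1 := (hx i).1; have h2 := (hx i).2
    have h1' := (hy i).1; have h2' := (hy i).2
    rw [Real.dist_eq, sq_abs]
    apply sq_le_sq' <;> nlinarith
  have hsum : (∑ i, dist (x i) (y i) ^ 2) ≤ (1/2 : ℝ)^2 := by
    calc (∑ i, dist (x i) (y i) ^ 2) ≤ ∑ _i : Fin n, sl n ^ 2 :=
      Finset.sum_le_sum fun i _ => hterm i
    _ = (n : ℝ) * sl n ^ 2 := by rw [Finset.sum_const, Finset.card_univ, Fintype.card_fin,
          nsmul_eq_mul]
    _ ≤ (1/2:ℝ)^2 := by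
        rw [sl]
        have h4 : ((2 * (n:ℝ))⁻¹)^2 = (4 * (n:ℝ)^2)⁻¹ := by
          rw [← one_div, div_pow]; ring_nf
        rw [h4, mul_inv_le_iff₀ (by positivity)]
        nlinarith
  calc Real.sqrt (∑ i, dist (x i) (y i) ^ 2) ≤ Real.sqrt ((1/2:ℝ)^2) := Real.sqrt_le_sqrt hsum
  _ = 1/2 := Real.sqrt_sq (by norm_num)

/-! ### Almost-everywhere lower bound for the local maximal function -/

lemma intOn_abs_ball {n : ℕ} {f : En n → ℝ} (hf : LocallyIntegrable f) (x : En n) (R : ℝ) :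
    IntegrableOn (fun y => |f y|) (Metric.ball x R) volume :=
  ((hf.integrableOn_isCompact (isCompact_closedBall x R)).mono_set
    ball_subset_closedBall).abs

lemma ae_lower (n : ℕ) (f : En n → ℝ) (hpos : ∀ x, 0 ≤ f x)
    (hf : LocallyIntegrable f) :
    ∀ᵐ x : En n, (∫ y in Metric.ball x (3/4 : ℝ), |f y|) ≤ Mloc n f x := by
  filter_upwards [IsUnifLocDoublingMeasure.ae_tendsto_average (volume : Measure (En n)) hf 1]
    with x hx
  have htend : Filter.Tendsto (fun r : ℝ => ⨍ y in closedBall x r, f y)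
      (nhdsWithin 0 (Set.Ioi 0)) (nhds (f x)) :=
    hx (fun _ => x) id Filter.tendsto_id (by
      filter_upwards [self_mem_nhdsWithin] with r hr
      exact mem_closedBall_self (by simpa using le_of_lt hr))
  have hev : ∀ᶠ r in nhdsWithin 0 (Set.Ioi 0), (⨍ y in closedBall x r, f y) < f x + 1 :=
    htend.eventually_lt_const (by linarith)
  rw [eventually_nhdsWithin_iff, Metric.eventually_nhds_iff] at hev
  obtain ⟨ε, hε, hε'⟩ := hev
  set r₀ : ℝ := min (ε/2) (1/2) with hr₀def
  have hr₀ : 0 < r₀ := lt_min (by linarith) (by norm_num)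
  have hr₀1 : r₀ ≤ 1/2 := min_le_right _ _
  have havg : ∀ r : ℝ, 0 < r → r ≤ r₀ → (⨍ y in closedBall x r, f y) ≤ f x + 1 := by
    intro r hr hrr
    refine le_of_lt (hε' ?_ hr)
    rw [Real.dist_eq, sub_zero, abs_of_pos hr]
    have : r₀ ≤ ε/2 := min_le_left _ _
    linarith
  set c1 : ℝ := (volume (Metric.ball (0 : En n) 1)).toReal with hc1def
  set B : ℝ := max (c1 * (f x + 1)) ((r₀ ^ n)⁻¹ * ∫ y in Metric.ball x 1, |f y|) with hBdef
  have hBdd : BddAbove (Set.range fun r : Set.Ioo (0:ℝ) 1 =>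
      ((r : ℝ) ^ n)⁻¹ * ∫ y in Metric.ball x (r : ℝ), |f y|) := by
    refine ⟨B, ?_⟩
    rintro v ⟨⟨r, hr0, hr1⟩, rfl⟩
    dsimp
    rcases le_or_gt r r₀ with hcase | hcase
    · have hvol : volume (closedBall x r) = ENNReal.ofReal (r ^ n)
          * volume (Metric.ball (0 : En n) 1) := by
        rw [Measure.addHaar_closedBall volume x hr0.le, finrank_euclideanSpace_fin]
      have hvolR : (volume (closedBall x r)).toReal = r ^ n * c1 := by
        rw [hvol, ENNReal.toReal_mul, ENNReal.toReal_ofReal (by positivity)]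
      have hvol0 : (volume (closedBall x r)).toReal ≠ 0 := by
        rw [hvolR, hc1def]
        have h1 : (0:ℝ) < (volume (Metric.ball (0 : En n) 1)).toReal :=
          ENNReal.toReal_pos (measure_ball_pos volume _ one_pos).ne' measure_ball_lt_top.ne
        positivity
      have habs : (∫ y in closedBall x r, |f y|) = ∫ y in closedBall x r, f y := by
        apply setIntegral_congr_fun measurableSet_closedBall
        intro y _; exact abs_of_nonneg (hpos y)
      have h2 : (∫ y in closedBall x r, f y)
          = (volume (closedBall x r)).toReal * ⨍ y in closedBall x r, f y := by
        rw [setAverage_eq, smul_eq_mul, ← mul_assoc, measureReal_def,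
          mul_inv_cancel₀ hvol0, one_mul]
      have h1 : (∫ y in Metric.ball x r, |f y|) ≤ ∫ y in closedBall x r, |f y| :=
        setIntegral_mono_set
          ((hf.integrableOn_isCompact (isCompact_closedBall x r)).abs)
          (Filter.Eventually.of_forall fun y => abs_nonneg (f y))
          (HasSubset.Subset.eventuallyLE ball_subset_closedBall)
      have h3 : (∫ y in closedBall x r, f y) ≤ r ^ n * c1 * (f x + 1) := by
        rw [h2, hvolR]
        have := havg r hr0 hcase
        have hnn : (0:ℝ) ≤ r ^ n * c1 :=
          mul_nonneg (by positivity) ENNReal.toReal_nonneg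
        nlinarith
      have hrn : (0:ℝ) < r ^ n := by positivity
      calc (r ^ n)⁻¹ * ∫ y in Metric.ball x r, |f y|
          ≤ (r ^ n)⁻¹ * (r ^ n * c1 * (f x + 1)) := by
            apply mul_le_mul_of_nonneg_left _ (by positivity)
            rw [habs] at h1; linarith
        _ = c1 * (f x + 1) := by field_simp
        _ ≤ B := le_max_left _ _
    · have h1 : (r ^ n)⁻¹ ≤ (r₀ ^ n)⁻¹ := by
        apply inv_anti₀ (by positivity)
        exact pow_le_pow_left₀ hr₀.le hcase.le n
      have h2 : (∫ y in Metric.ball x r, |f y|) ≤ ∫ y in Metric.ball x 1, |f y| :=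
        setIntegral_mono_set (intOn_abs_ball hf x 1)
          (Filter.Eventually.of_forall fun y => abs_nonneg (f y))
          (HasSubset.Subset.eventuallyLE (Metric.ball_subset_ball hr1.le))
      have h3 : (0:ℝ) ≤ ∫ y in Metric.ball x r, |f y| :=
        setIntegral_nonneg measurableSet_ball fun y _ => abs_nonneg (f y)
      calc (r ^ n)⁻¹ * ∫ y in Metric.ball x r, |f y|
          ≤ (r₀ ^ n)⁻¹ * ∫ y in Metric.ball x 1, |f y| :=
            mul_le_mul h1 h2 h3 (by positivity)
        _ ≤ B := le_max_right _ _
  have hmem : ((3:ℝ)/4) ∈ Set.Ioo (0:ℝ) 1 := by norm_num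
  have step : (((3:ℝ)/4) ^ n)⁻¹ * (∫ y in Metric.ball x (3/4 : ℝ), |f y|) ≤ Mloc n f x := by
    rw [Mloc]
    exact le_ciSup hBdd (⟨3/4, hmem⟩ : Set.Ioo (0:ℝ) 1)
  have hone : (1:ℝ) ≤ (((3:ℝ)/4) ^ n)⁻¹ := by
    rw [le_inv_comm₀ one_pos (by positivity)]
    simpa using pow_le_one₀ (by norm_num : (0:ℝ) ≤ 3/4) (by norm_num)
  have h3 : (0:ℝ) ≤ ∫ y in Metric.ball x (3/4:ℝ), |f y| :=
    setIntegral_nonneg measurableSet_ball fun y _ => abs_nonneg (f y)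
  nlinarith [step]

/-! ### Constants -/

def slp (n : ℕ) : ℝ := sl n ^ n
def ccc (n : ℕ) (s : ℝ) : ℝ := s * (slp n)⁻¹
def Kcc (n : ℕ) (s : ℝ) : ℝ :=
  2 * ccc n s * Real.log (2 * ccc n s) + Real.exp 1 + 4 * ccc n s
def Mcc (n : ℕ) (s : ℝ) : ℝ := Real.log (Real.exp 1 + Kcc n s) + 4
def CCC (n : ℕ) (s : ℝ) : ℝ := 2 * Mcc n s * (slp n)⁻¹ * s

lemma slp_pos {n : ℕ} (hn : 1 ≤ n) : 0 < slp n := pow_pos (sl_pos hn) n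

lemma slp_le_one {n : ℕ} (hn : 1 ≤ n) : slp n ≤ 1 :=
  pow_le_one₀ (sl_pos hn).le ((sl_le_half hn).trans (by norm_num))

lemma ccc_one {n : ℕ} (hn : 1 ≤ n) {s : ℝ} (hs : 1 ≤ s) : 1 ≤ ccc n s := by
  have hd0 := slp_pos hn
  have hd1 := slp_le_one hn
  have hi : (1:ℝ) ≤ (slp n)⁻¹ := by
    rw [le_inv_comm₀ one_pos hd0]; simpa using hd1
  calc (1:ℝ) = 1 * 1 := (one_mul 1).symm
  _ ≤ s * (slp n)⁻¹ := mul_le_mul hs hi (by norm_num) (by linarith)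
  _ = ccc n s := rfl

lemma Kcc_one {n : ℕ} (hn : 1 ≤ n) {s : ℝ} (hs : 1 ≤ s) : 1 ≤ Kcc n s := by
  have hc1 := ccc_one hn hs
  rw [Kcc]
  have hl : 0 ≤ Real.log (2 * ccc n s) := Real.log_nonneg (by linarith)
  have he := Real.add_one_le_exp 1
  nlinarith

lemma Mcc_four {n : ℕ} (hn : 1 ≤ n) {s : ℝ} (hs : 1 ≤ s) : 4 ≤ Mcc n s := by
  rw [Mcc]
  have hK1 := Kcc_one hn hs
  have he := Real.add_one_le_exp 1
  have : 0 ≤ Real.log (Real.exp 1 + Kcc n s) := Real.log_nonneg (by linarith)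
  linarith

end CubeAux

namespace CubeAux

/-! ### The per-cube estimate -/

lemma cube_est (n : ℕ) (hn : 1 ≤ n) {s : ℝ} (hs : 1 ≤ s) (f : En n → ℝ)
    (hpos : ∀ x, 0 ≤ f x) (hf : LocallyIntegrable f)
    (hS : ∫⁻ x, ENNReal.ofReal (Psi n x (Mloc n f x)) ≤ ENNReal.ofReal s)
    (k : Fin n → ℤ) :
    ∫⁻ x in cube n k, ENNReal.ofReal (f x / Real.log (Real.exp 1 + ‖x‖)) ≤
      ENNReal.ofReal (2 * Mcc n s * (slp n)⁻¹) *
        ∫⁻ x in cube n k, ENNReal.ofReal (Psi n x (Mloc n f x)) := by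
  have hd0 : 0 < slp n := slp_pos hn
  set A := Real.log (Real.exp 1 + ‖cpt n k‖) with hAdef
  have hA : 1 ≤ A := one_le_loge (norm_nonneg _)
  set μk := ∫ x in cube n k, f x with hμdef
  have hsub : cube n k ⊆ closedBall (cpt n k) (1/2) := fun y hy =>
    mem_closedBall.mpr (cube_dist hn hy (cpt_mem hn k))
  have hInt : IntegrableOn f (cube n k) volume :=
    (hf.integrableOn_isCompact (isCompact_closedBall _ _)).mono_set hsub
  have hμ0 : 0 ≤ μk := setIntegral_nonneg (cube_measurable n k) fun x _ => hpos x
  set D := Real.log (Real.exp 1 + μk) + 2 * A with hDdef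
  have hD3 : 3 ≤ D := by have := one_le_loge hμ0; rw [hDdef]; linarith
  have hD0 : 0 < D := by linarith
  set ck := μk / D with hckdef
  have hck0 : 0 ≤ ck := div_nonneg hμ0 hD0.le
  -- comparability of the weight on the cube
  have hnd : ∀ x ∈ cube n k, |‖x‖ - ‖cpt n k‖| ≤ 1/2 := by
    intro x hx
    have h1 := abs_norm_sub_norm_le x (cpt n k)
    have h2 : ‖x - cpt n k‖ = dist x (cpt n k) := (dist_eq_norm _ _).symm
    exact h1.trans (h2 ▸ cube_dist hn hx (cpt_mem hn k))
  have hwub : ∀ x ∈ cube n k, Real.log (Real.exp 1 + ‖x‖) ≤ 2 * A := by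
    intro x hx
    apply log_weight_pair (norm_nonneg x) (norm_nonneg _)
    have := (abs_le.mp (hnd x hx)).2
    linarith
  have hwlb : ∀ x ∈ cube n k, A ≤ 2 * Real.log (Real.exp 1 + ‖x‖) := by
    intro x hx
    apply log_weight_pair (norm_nonneg _) (norm_nonneg x)
    have := (abs_le.mp (hnd x hx)).1
    linarith
  -- Step 1: lower bound for the Ψ-integral on the cube
  have hae : ∀ᵐ x ∂(volume.restrict (cube n k)), ck ≤ Psi n x (Mloc n f x) := by
    filter_upwards [ae_restrict_of_ae (ae_lower n f hpos hf),
      ae_restrict_mem (cube_measurable n k)] with x hx hxc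
    have hL1 : 1 ≤ Real.log (Real.exp 1 + ‖x‖) := one_le_loge (norm_nonneg x)
    have hMl : μk ≤ Mloc n f x := by
      have e1 : μk = ∫ y in cube n k, |f y| := by
        rw [hμdef]
        apply setIntegral_congr_fun (cube_measurable n k)
        intro y _; exact (abs_of_nonneg (hpos y)).symm
      have hsubball : cube n k ⊆ Metric.ball x (3/4) := by
        intro y hy
        have : dist y x ≤ 1/2 := cube_dist hn hy hxc
        exact mem_ball.mpr (lt_of_le_of_lt this (by norm_num))
      have e2 : (∫ y in cube n k, |f y|) ≤ ∫ y in Metric.ball x (3/4), |f y| :=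
        setIntegral_mono_set (intOn_abs_ball hf x (3/4))
          (Filter.Eventually.of_forall fun y => abs_nonneg (f y))
          (HasSubset.Subset.eventuallyLE hsubball)
      rw [e1]; exact e2.trans hx
    have h2 : μk / (Real.log (Real.exp 1 + μk) + Real.log (Real.exp 1 + ‖x‖))
        ≤ Psi n x (Mloc n f x) := by
      rw [Psi]; exact psi_mono hL1 hμ0 hMl
    refine le_trans ?_ h2
    rw [hckdef, hDdef]
    have hl1 := one_le_loge hμ0
    have hden : 0 < Real.log (Real.exp 1 + μk) + Real.log (Real.exp 1 + ‖x‖) := by linarith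
    rw [div_le_div_iff₀ (by linarith) hden]
    have := hwub x hxc
    nlinarith
  have hlow : ENNReal.ofReal ck * ENNReal.ofReal (slp n)
      ≤ ∫⁻ x in cube n k, ENNReal.ofReal (Psi n x (Mloc n f x)) := by
    have h1 : ENNReal.ofReal ck * ENNReal.ofReal (slp n)
        = ∫⁻ _x in cube n k, ENNReal.ofReal ck := by
      rw [setLIntegral_const, cube_volume hn k, slp]
    rw [h1]
    exact lintegral_mono_ae (hae.mono fun x hx => ENNReal.ofReal_le_ofReal hx)
  -- Step 2: consequence of the global hypothesis
  have hcs : ck * slp n ≤ s := by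
    have h2 : ENNReal.ofReal (ck * slp n) ≤ ENNReal.ofReal s := by
      rw [ENNReal.ofReal_mul hck0]
      exact hlow.trans ((setLIntegral_le_lintegral _ _).trans hS)
    exact (ENNReal.ofReal_le_ofReal_iff (by linarith)).mp h2
  -- Step 3: arithmetic
  have hμD : μk ≤ ccc n s * D := by
    have h1 : ck ≤ s * (slp n)⁻¹ := by
      rw [← div_eq_mul_inv, le_div_iff₀ hd0]; exact hcs
    calc μk = ck * D := by rw [hckdef, div_mul_cancel₀ _ hD0.ne']
    _ ≤ (s * (slp n)⁻¹) * D := mul_le_mul_of_nonneg_right h1 hD0.le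
    _ = ccc n s * D := by rw [ccc]
  have hc1 : 1 ≤ ccc n s := ccc_one hn hs
  have habs : μk ≤ Kcc n s * A := by
    rw [Kcc]
    exact absorb hc1 hA hμ0 (by rw [hDdef] at hμD; exact hμD)
  have hDM : D ≤ Mcc n s * A := by
    rw [hDdef, Mcc]
    exact denom_bound (Kcc_one hn hs) hA hμ0 habs
  have hM0 : 0 < Mcc n s := by have := Mcc_four hn hs; linarith
  -- Step 4: upper bound for the weighted integral on the cube
  have hup : ∫⁻ x in cube n k, ENNReal.ofReal (f x / Real.log (Real.exp 1 + ‖x‖))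
      ≤ ENNReal.ofReal (2 * μk / A) := by
    have hpt : ∀ x ∈ cube n k,
        f x / Real.log (Real.exp 1 + ‖x‖) ≤ 2 * f x / A := by
      intro x hx
      have hL1 : 1 ≤ Real.log (Real.exp 1 + ‖x‖) := one_le_loge (norm_nonneg x)
      rw [div_le_div_iff₀ (by linarith) (by linarith : (0:ℝ) < A)]
      have := hwlb x hx
      nlinarith [hpos x]
    calc ∫⁻ x in cube n k, ENNReal.ofReal (f x / Real.log (Real.exp 1 + ‖x‖))
        ≤ ∫⁻ x in cube n k, ENNReal.ofReal (2 * f x / A) := by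
          apply lintegral_mono_ae
          filter_upwards [ae_restrict_mem (cube_measurable n k)] with x hx
          exact ENNReal.ofReal_le_ofReal (hpt x hx)
      _ = ENNReal.ofReal (∫ x in cube n k, 2 * f x / A) := by
          rw [← ofReal_integral_eq_lintegral_ofReal ((hInt.const_mul 2).div_const A)
            (Filter.Eventually.of_forall fun x =>
              div_nonneg (mul_nonneg (by norm_num) (hpos x)) (by linarith : (0:ℝ) ≤ A))]
      _ = ENNReal.ofReal (2 * μk / A) := by
          rw [integral_div, MeasureTheory.integral_const_mul]
  -- Step 5: combine
  have hkey : 2 * μk / A ≤ 2 * Mcc n s * (slp n)⁻¹ * (ck * slp n) := by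
    have e1 : 2 * Mcc n s * (slp n)⁻¹ * (ck * slp n) = (2 * Mcc n s * μk) / D := by
      rw [hckdef]; field_simp
    rw [e1, div_le_div_iff₀ (by linarith : (0:ℝ) < A) hD0]
    nlinarith [mul_le_mul_of_nonneg_left hDM hμ0]
  calc ∫⁻ x in cube n k, ENNReal.ofReal (f x / Real.log (Real.exp 1 + ‖x‖))
      ≤ ENNReal.ofReal (2 * μk / A) := hup
    _ ≤ ENNReal.ofReal (2 * Mcc n s * (slp n)⁻¹ * (ck * slp n)) :=
        ENNReal.ofReal_le_ofReal hkey
    _ = ENNReal.ofReal (2 * Mcc n s * (slp n)⁻¹) * ENNReal.ofReal (ck * slp n) := by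
        rw [← ENNReal.ofReal_mul (by positivity)]
    _ ≤ ENNReal.ofReal (2 * Mcc n s * (slp n)⁻¹) *
          ∫⁻ x in cube n k, ENNReal.ofReal (Psi n x (Mloc n f x)) := by
        apply mul_le_mul_right
        rw [ENNReal.ofReal_mul hck0]
        exact hlow

/-! ### Global estimate -/

lemma main_est (n : ℕ) (hn : 1 ≤ n) {s : ℝ} (hs : 1 ≤ s) (f : En n → ℝ)
    (hpos : ∀ x, 0 ≤ f x) (hf : LocallyIntegrable f)
    (hS : ∫⁻ x, ENNReal.ofReal (Psi n x (Mloc n f x)) ≤ ENNReal.ofReal s) :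
    ∫⁻ x, ENNReal.ofReal (f x / Real.log (Real.exp 1 + ‖x‖))
      ≤ ENNReal.ofReal (CCC n s) := by
  have hpart : ∀ g : En n → ℝ≥0∞,
      ∫⁻ x, g x = ∑' k : Fin n → ℤ, ∫⁻ x in cube n k, g x := by
    intro g
    conv_lhs => rw [← setLIntegral_univ, ← cube_iUnion hn]
    exact lintegral_iUnion (cube_measurable n) (cube_disjoint hn) g
  have hM0 : 0 < Mcc n s := by have := Mcc_four hn hs; linarith
  have hd0 : 0 < slp n := slp_pos hn
  calc ∫⁻ x, ENNReal.ofReal (f x / Real.log (Real.exp 1 + ‖x‖))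
      = ∑' k : Fin n → ℤ,
          ∫⁻ x in cube n k, ENNReal.ofReal (f x / Real.log (Real.exp 1 + ‖x‖)) := hpart _
    _ ≤ ∑' k : Fin n → ℤ, ENNReal.ofReal (2 * Mcc n s * (slp n)⁻¹) *
          ∫⁻ x in cube n k, ENNReal.ofReal (Psi n x (Mloc n f x)) :=
        ENNReal.tsum_le_tsum fun k => cube_est n hn hs f hpos hf hS k
    _ = ENNReal.ofReal (2 * Mcc n s * (slp n)⁻¹) *
          ∑' k : Fin n → ℤ, ∫⁻ x in cube n k, ENNReal.ofReal (Psi n x (Mloc n f x)) :=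
        ENNReal.tsum_mul_left
    _ = ENNReal.ofReal (2 * Mcc n s * (slp n)⁻¹) *
          ∫⁻ x, ENNReal.ofReal (Psi n x (Mloc n f x)) := by rw [← hpart]
    _ ≤ ENNReal.ofReal (2 * Mcc n s * (slp n)⁻¹) * ENNReal.ofReal s :=
        mul_le_mul_right hS _
    _ = ENNReal.ofReal (CCC n s) := by
        rw [← ENNReal.ofReal_mul (by positivity), CCC]

end CubeAux

/-- **Lemma (weighted `L^1` bound from the `Ψ`-integral of `M^loc f`).**
For nonnegative locally integrable `f`: if `∫ Ψ(x, M^loc f) dx < ∞`, then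
`∫ f(x)/ln(e+|x|) dx < ∞`; moreover there is `C = C(n)` such that if
`∫ Ψ(x, M^loc f) dx = 1` then `∫ f(x)/ln(e+|x|) dx ≤ C`. -/
theorem weighted_L1_from_Psi (n : ℕ) (hn : 1 ≤ n) :
    ∃ C : ℝ, 0 < C ∧ ∀ f : En n → ℝ, (∀ x, 0 ≤ f x) →
      LocallyIntegrable f →
      ((∫⁻ x, ENNReal.ofReal (Psi n x (Mloc n f x)) < ⊤ →
          ∫⁻ x, ENNReal.ofReal (f x / Real.log (Real.exp 1 + ‖x‖)) < ⊤) ∧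
       (∫⁻ x, ENNReal.ofReal (Psi n x (Mloc n f x)) = 1 →
          ∫⁻ x, ENNReal.ofReal (f x / Real.log (Real.exp 1 + ‖x‖)) ≤
            ENNReal.ofReal C)) := by
  refine ⟨CubeAux.CCC n 1, ?_, ?_⟩
  · have hM := CubeAux.Mcc_four hn (le_refl (1:ℝ))
    have hd0 := CubeAux.slp_pos hn
    rw [CubeAux.CCC]
    positivity
  · intro f hpos hf
    constructor
    · intro hfin
      set S := ∫⁻ x, ENNReal.ofReal (Psi n x (Mloc n f x)) with hSdef
      have hS : S ≤ ENNReal.ofReal (max 1 S.toReal) := by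
        conv_lhs => rw [← ENNReal.ofReal_toReal hfin.ne]
        exact ENNReal.ofReal_le_ofReal (le_max_right _ _)
      exact lt_of_le_of_lt
        (CubeAux.main_est n hn (le_max_left _ _) f hpos hf hS) ENNReal.ofReal_lt_top
    · intro h1
      refine CubeAux.main_est n hn (le_refl (1:ℝ)) f hpos hf ?_
      rw [h1, ENNReal.ofReal_one]
end
end
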